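/- arXiv:2502.01957 — 8 statements merged into one kernel-verified Lean document; each statement's English description precedes it below -/
import Mathlib

section
/- The points P₁ = (m+16n², 6n(m+16n²)) and P₂ = (36n², 12n(m−2n²)) lie in E(ℚ) and are ℤ-linearly independent; that is, the subgroup of E(ℚ) they generate is free abelian of rank 2. -/
/-! Auxiliary algebraic lemmas for the independence proof. -/

/-- Collinear-product identity, secant case: if `(x₁,y₁)` and `(x₂,y₂)` lie on
`y² = x³+a₂x²+a₄x`, the line through them has slope `L`, and `t` is a root of the cubic, then
the product of `xᵢ - t` over the three collinear points is a square. -/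
lemma zyw_cube_secant {F : Type*} [Field F] (a2 a4 x₁ y₁ x₂ y₂ L t : F)
    (e₁ : y₁ ^ 2 = x₁ ^ 3 + a2 * x₁ ^ 2 + a4 * x₁)
    (e₂ : y₂ ^ 2 = x₂ ^ 3 + a2 * x₂ ^ 2 + a4 * x₂)
    (hx : x₁ ≠ x₂) (hL : L * (x₁ - x₂) = y₁ - y₂)
    (ht : t ^ 3 + a2 * t ^ 2 + a4 * t = 0) :
    (x₁ - t) * (x₂ - t) * ((L ^ 2 - a2 - x₁ - x₂) - t) = (L * (t - x₁) + y₁) ^ 2 := by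
  have hy₂ : y₂ = y₁ - L * (x₁ - x₂) := by linear_combination hL
  subst hy₂
  apply mul_left_cancel₀ (sub_ne_zero.mpr hx)
  linear_combination (x₂ - t) * e₁ + (t - x₁) * e₂ - (x₁ - x₂) * ht

/-- Collinear-product identity, tangent case. -/
lemma zyw_cube_tangent {F : Type*} [Field F] (a2 a4 x₁ y₁ L t : F)
    (e₁ : y₁ ^ 2 = x₁ ^ 3 + a2 * x₁ ^ 2 + a4 * x₁)
    (hL : L * (2 * y₁) = 3 * x₁ ^ 2 + 2 * a2 * x₁ + a4)
    (ht : t ^ 3 + a2 * t ^ 2 + a4 * t = 0) :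
    (x₁ - t) * (x₁ - t) * ((L ^ 2 - a2 - x₁ - x₁) - t) = (L * (t - x₁) + y₁) ^ 2 := by
  linear_combination (-1 : F) * e₁ + (x₁ - t) * hL - ht

/-- sign in `ZMod 2` of a real number. -/
noncomputable def zywSgn (u : ℝ) : ZMod 2 := if u < 0 then 1 else 0

lemma zywSgn_mul {u v : ℝ} (hu : u ≠ 0) (hv : v ≠ 0) :
    zywSgn (u * v) = zywSgn u + zywSgn v := by
  unfold zywSgn
  rcases hu.lt_or_gt with h | h <;> rcases hv.lt_or_gt with h' | h'
  · rw [if_pos h, if_pos h', if_neg (not_lt.mpr (mul_pos_of_neg_of_neg h h').le)]; decide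
  · rw [if_pos h, if_neg (not_lt.mpr h'.le), if_pos (mul_neg_of_neg_of_pos h h')]; decide
  · rw [if_neg (not_lt.mpr h.le), if_pos h', if_pos (mul_neg_of_pos_of_neg h h')]; decide
  · rw [if_neg (not_lt.mpr h.le), if_neg (not_lt.mpr h'.le),
      if_neg (not_lt.mpr (mul_pos h h').le)]; decide

lemma zywSgn_of_pos {u : ℝ} (h : 0 < u) : zywSgn u = 0 := if_neg (not_lt.mpr h.le)

/-- From `a + b + c = 0` in `ZMod 2`, get `a = b + c`. -/
lemma zmod2_solve {a b c : ZMod 2} (h : a + b + c = 0) : a = b + c := by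
  have h2 : (2 : ZMod 2) = 0 := rfl
  linear_combination h + (-b - c) * h2

lemma zywSgn_solve {u v w : ℝ} (hv : v ≠ 0) (hw : w ≠ 0) (h : 0 < u * (v * w)) :
    zywSgn u = zywSgn v + zywSgn w := by
  have hu : u ≠ 0 := by
    intro h0; rw [h0, zero_mul] at h; exact lt_irrefl _ h
  apply zmod2_solve
  have h0 := zywSgn_of_pos h
  rw [zywSgn_mul hu (mul_ne_zero hv hw), zywSgn_mul hv hw] at h0
  linear_combination h0

/-- parity of the `p`-adic valuation of a rational. -/
noncomputable def zywVal (p : ℕ) (q : ℚ) : ZMod 2 := ((padicValRat p q : ℤ) : ZMod 2)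

lemma zywVal_solve (p : ℕ) [Fact p.Prime] {q r u s : ℚ} (hq : q ≠ 0) (hr : r ≠ 0)
    (hu : u ≠ 0) (hs : s ≠ 0) (h : q * (r * u) = s ^ 2) :
    zywVal p q = zywVal p r + zywVal p u := by
  apply zmod2_solve
  have h1 : padicValRat p (q * (r * u)) =
      padicValRat p q + (padicValRat p r + padicValRat p u) := by
    rw [padicValRat.mul hq (mul_ne_zero hr hu), padicValRat.mul hr hu]
  have h2 : padicValRat p (s ^ 2) = 2 * padicValRat p s := by
    rw [padicValRat.pow s]; push_cast; ring
  rw [h, h2] at h1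
  unfold zywVal
  have h3 := congrArg (fun z : ℤ => (z : ZMod 2)) h1
  push_cast at h3
  have h2' : (2 : ZMod 2) = 0 := rfl
  linear_combination -h3 + ((padicValRat p s : ℤ) : ZMod 2) * h2'

/-- The elliptic curve `y² = x³ − 5(m+16n²)x² + 4(m+16n²)(m+25n²)x` over `ℚ`. -/
def zywinaCurve (m n : ℕ) : WeierstrassCurve ℚ where
  a₁ := 0
  a₂ := -(5 * ((m : ℚ) + 16 * n ^ 2))
  a₃ := 0
  a₄ := 4 * ((m : ℚ) + 16 * n ^ 2) * ((m : ℚ) + 25 * n ^ 2)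
  a₆ := 0

open WeierstrassCurve WeierstrassCurve.Affine WeierstrassCurve.Affine.Point

namespace Zyw

variable (m n : ℕ)

abbrev Wc : WeierstrassCurve.Affine ℚ := (zywinaCurve m n).toAffine

lemma a1_eq : (Wc m n).a₁ = 0 := rfl
lemma a2_eq : (Wc m n).a₂ = -(5 * ((m : ℚ) + 16 * n ^ 2)) := rfl
lemma a3_eq : (Wc m n).a₃ = 0 := rfl
lemma a4_eq : (Wc m n).a₄ = 4 * ((m : ℚ) + 16 * n ^ 2) * ((m : ℚ) + 25 * n ^ 2) := rfl
lemma a6_eq : (Wc m n).a₆ = 0 := rfl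

lemma negY_eq (x y : ℚ) : (Wc m n).negY x y = -y := by
  simp [WeierstrassCurve.Affine.negY, a1_eq, a3_eq]

lemma equation_simp {x y : ℚ} :
    (Wc m n).Equation x y ↔ y ^ 2 = x ^ 3 + (Wc m n).a₂ * x ^ 2 + (Wc m n).a₄ * x := by
  rw [equation_iff, a1_eq, a3_eq, a6_eq]
  constructor <;> intro h <;> linear_combination h

variable {m n}

/-- slope characterization: secant or tangent polynomial relation. -/
lemma slope_spec {x₁ y₁ x₂ y₂ : ℚ} (h₁ : (Wc m n).Equation x₁ y₁)
    (h₂ : (Wc m n).Equation x₂ y₂) (hxy : x₁ = x₂ → y₁ ≠ (Wc m n).negY x₂ y₂) :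
    (x₁ ≠ x₂ ∧ (Wc m n).slope x₁ x₂ y₁ y₂ * (x₁ - x₂) = y₁ - y₂) ∨
    (x₁ = x₂ ∧ y₁ = y₂ ∧ y₁ ≠ 0 ∧
      (Wc m n).slope x₁ x₂ y₁ y₂ * (2 * y₁)
        = 3 * x₁ ^ 2 + 2 * (Wc m n).a₂ * x₁ + (Wc m n).a₄) := by
  by_cases hx : x₁ = x₂
  · right
    have hy := hxy hx
    have hy12 : y₁ = y₂ := Y_eq_of_Y_ne h₁ h₂ hx hy
    have hy0 : y₁ ≠ 0 := by
      intro h0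
      exact hy (by rw [negY_eq, ← hy12, h0, _root_.neg_zero])
    refine ⟨hx, hy12, hy0, ?_⟩
    rw [slope_of_Y_ne hx hy, a1_eq, negY_eq]
    field_simp [hy0]
    ring
  · left
    refine ⟨hx, ?_⟩
    rw [slope_of_X_ne hx]
    exact div_mul_cancel₀ _ (sub_ne_zero.mpr hx)

/-- collinear product identity over ℚ. -/
lemma collinear_Q {x₁ y₁ x₂ y₂ : ℚ} (h₁ : (Wc m n).Equation x₁ y₁)
    (h₂ : (Wc m n).Equation x₂ y₂) (hxy : x₁ = x₂ → y₁ ≠ (Wc m n).negY x₂ y₂)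
    (t : ℚ) (ht : t ^ 3 + (Wc m n).a₂ * t ^ 2 + (Wc m n).a₄ * t = 0) :
    (x₁ - t) * (x₂ - t) * ((Wc m n).addX x₁ x₂ ((Wc m n).slope x₁ x₂ y₁ y₂) - t)
      = ((Wc m n).slope x₁ x₂ y₁ y₂ * (t - x₁) + y₁) ^ 2 := by
  set L := (Wc m n).slope x₁ x₂ y₁ y₂ with hLdef
  have hX : (Wc m n).addX x₁ x₂ L = L ^ 2 - (Wc m n).a₂ - x₁ - x₂ := by
    rw [WeierstrassCurve.Affine.addX, a1_eq]; ring
  rw [hX]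
  have e₁ := (equation_simp m n).mp h₁
  have e₂ := (equation_simp m n).mp h₂
  rcases slope_spec h₁ h₂ hxy with ⟨hx, hL⟩ | ⟨hx, hy12, hy0, hL⟩
  · exact zyw_cube_secant _ _ _ _ _ _ _ _ e₁ e₂ hx hL ht
  · subst hx
    have h' := zyw_cube_tangent ((Wc m n).a₂) ((Wc m n).a₄) x₁ y₁ L t e₁ hL ht
    linear_combination h'

/-- collinear product identity over ℝ. -/
lemma collinear_R {x₁ y₁ x₂ y₂ : ℚ} (h₁ : (Wc m n).Equation x₁ y₁)
    (h₂ : (Wc m n).Equation x₂ y₂) (hxy : x₁ = x₂ → y₁ ≠ (Wc m n).negY x₂ y₂)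
    (t : ℝ) (ht : t ^ 3 + ((Wc m n).a₂ : ℝ) * t ^ 2 + ((Wc m n).a₄ : ℝ) * t = 0) :
    ((x₁ : ℝ) - t) * ((x₂ : ℝ) - t)
        * (((Wc m n).addX x₁ x₂ ((Wc m n).slope x₁ x₂ y₁ y₂) : ℝ) - t)
      = (((Wc m n).slope x₁ x₂ y₁ y₂ : ℝ) * (t - (x₁ : ℝ)) + (y₁ : ℝ)) ^ 2 := by
  set L := (Wc m n).slope x₁ x₂ y₁ y₂ with hLdef
  have hX : ((Wc m n).addX x₁ x₂ L : ℝ) = (L : ℝ) ^ 2 - ((Wc m n).a₂ : ℝ) - x₁ - x₂ := by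
    rw [WeierstrassCurve.Affine.addX, a1_eq]; push_cast; ring
  rw [hX]
  have e₁ := (equation_simp m n).mp h₁
  have e₂ := (equation_simp m n).mp h₂
  have e₁' : (y₁ : ℝ) ^ 2 = (x₁ : ℝ) ^ 3 + ((Wc m n).a₂ : ℝ) * (x₁ : ℝ) ^ 2
      + ((Wc m n).a₄ : ℝ) * (x₁ : ℝ) := by exact_mod_cast congrArg (Rat.cast : ℚ → ℝ) e₁
  have e₂' : (y₂ : ℝ) ^ 2 = (x₂ : ℝ) ^ 3 + ((Wc m n).a₂ : ℝ) * (x₂ : ℝ) ^ 2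
      + ((Wc m n).a₄ : ℝ) * (x₂ : ℝ) := by exact_mod_cast congrArg (Rat.cast : ℚ → ℝ) e₂
  rcases slope_spec h₁ h₂ hxy with ⟨hx, hL⟩ | ⟨hx, hy12, hy0, hL⟩
  · have hx' : (x₁ : ℝ) ≠ (x₂ : ℝ) := by exact_mod_cast hx
    have hL' : (L : ℝ) * ((x₁ : ℝ) - (x₂ : ℝ)) = (y₁ : ℝ) - (y₂ : ℝ) := by
      exact_mod_cast congrArg (Rat.cast : ℚ → ℝ) hL
    exact zyw_cube_secant _ _ _ _ _ _ _ _ e₁' e₂' hx' hL' ht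
  · have hL' : (L : ℝ) * (2 * (y₁ : ℝ)) = 3 * (x₁ : ℝ) ^ 2
        + 2 * ((Wc m n).a₂ : ℝ) * (x₁ : ℝ) + ((Wc m n).a₄ : ℝ) := by
      exact_mod_cast congrArg (Rat.cast : ℚ → ℝ) hL
    have hxx : (x₁ : ℝ) = (x₂ : ℝ) := by exact_mod_cast hx
    rw [← hxx]
    exact zyw_cube_tangent _ _ _ _ _ _ e₁' hL' ht

variable (m n)

/-- modified x-coordinate. -/
noncomputable def wq : (Wc m n).Point → ℚ := fun P =>
  match P with
  | .zero => 1
  | @WeierstrassCurve.Affine.Point.some _ _ _ x _ _ => if x = 0 then (Wc m n).a₄ else x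

lemma wq_zero : wq m n 0 = 1 := rfl

lemma wq_some {x y : ℚ} (h : (Wc m n).Nonsingular x y) :
    wq m n (Point.some _ _ h) = if x = 0 then (Wc m n).a₄ else x := rfl

lemma wq_zero' : wq m n Point.zero = 1 := rfl

/-- the x-coordinate of the sum of two points. -/
noncomputable def X3 (x₁ x₂ y₁ y₂ : ℚ) : ℚ :=
  (Wc m n).addX x₁ x₂ ((Wc m n).slope x₁ x₂ y₁ y₂)

variable {m n}

lemma x_eq_zero_y {y : ℚ} (h : (Wc m n).Equation 0 y) : y = 0 := by
  have h' := (equation_simp m n).mp h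
  have : y ^ 2 = 0 := by linear_combination h'
  exact pow_eq_zero_iff (n := 2) (by norm_num) |>.mp this

lemma wq_ne (ha4 : (Wc m n).a₄ ≠ 0) (P : (Wc m n).Point) : wq m n P ≠ 0 := by
  rcases P with _ | @⟨x, y, h⟩
  · rw [← zero_def, wq_zero]; norm_num
  · rw [wq_some]
    split_ifs with hx
    · exact ha4
    · exact hx

/-- The key multiplicativity property of `wq`. -/
lemma wq_mul (ha4 : (Wc m n).a₄ ≠ 0) (P Q : (Wc m n).Point) :
    ∃ s : ℚ, s ≠ 0 ∧ wq m n (P + Q) * (wq m n P * wq m n Q) = s ^ 2 := by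
  rcases P with _ | @⟨x₁, y₁, h₁⟩
  · refine ⟨wq m n Q, wq_ne ha4 Q, ?_⟩
    rw [← zero_def, zero_add, wq_zero]; ring
  rcases Q with _ | @⟨x₂, y₂, h₂⟩
  · refine ⟨wq m n (Point.some _ _ h₁), wq_ne ha4 _, ?_⟩
    rw [← zero_def, add_zero, wq_zero]; ring
  by_cases hopp : x₁ = x₂ ∧ y₁ = (Wc m n).negY x₂ y₂
  · -- opposite points: sum is zero
    rw [add_of_Y_eq hopp.1 hopp.2, wq_zero]
    obtain ⟨rfl, -⟩ := hopp
    refine ⟨wq m n (Point.some _ _ h₁), wq_ne ha4 _, ?_⟩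
    rw [wq_some, wq_some]
    ring
  · have hxy : x₁ = x₂ → y₁ ≠ (Wc m n).negY x₂ y₂ := fun hx hy => hopp ⟨hx, hy⟩
    have hwadd : wq m n (Point.some _ _ h₁ + Point.some _ _ h₂)
        = if X3 m n x₁ x₂ y₁ y₂ = 0 then (Wc m n).a₄ else X3 m n x₁ x₂ y₁ y₂ := by
      rw [add_some (fun h => hxy h.1 h.2)]; exact wq_some m n _
    have hXv : X3 m n x₁ x₂ y₁ y₂
        = ((Wc m n).slope x₁ x₂ y₁ y₂) ^ 2 - (Wc m n).a₂ - x₁ - x₂ := by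
      show (Wc m n).addX x₁ x₂ ((Wc m n).slope x₁ x₂ y₁ y₂) = _
      rw [WeierstrassCurve.Affine.addX, a1_eq]; ring
    have e₁ := (equation_simp m n).mp h₁.1
    have e₂ := (equation_simp m n).mp h₂.1
    by_cases hx₁ : x₁ = 0
    · -- P is the 2-torsion point (0,0)
      have hy₁ : y₁ = 0 := x_eq_zero_y (hx₁ ▸ h₁.1)
      have hx : x₁ ≠ x₂ := by
        intro h
        have hy₂ : y₂ = 0 := x_eq_zero_y ((h.symm.trans hx₁) ▸ h₂.1)
        exact hxy h (by rw [negY_eq, hy₂, hy₁, _root_.neg_zero])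
      have hx₂ : x₂ ≠ 0 := fun h => hx (hx₁.trans h.symm)
      have hLv : (Wc m n).slope x₁ x₂ y₁ y₂ = y₂ / x₂ := by
        rw [slope_of_X_ne hx, hx₁, hy₁, zero_sub, zero_sub, neg_div_neg_eq]
      have hprod : x₂ * X3 m n x₁ x₂ y₁ y₂ = (Wc m n).a₄ := by
        rw [hXv, hLv, hx₁]
        field_simp
        linear_combination e₂
      have hx₃ : X3 m n x₁ x₂ y₁ y₂ ≠ 0 := by
        intro h
        rw [h, mul_zero] at hprod
        exact ha4 hprod.symm
      refine ⟨(Wc m n).a₄, ha4, ?_⟩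
      rw [hwadd, wq_some, wq_some, if_neg hx₃, if_pos hx₁, if_neg hx₂]
      linear_combination ((Wc m n).a₄) * hprod
    · by_cases hx₂ : x₂ = 0
      · -- Q is the 2-torsion point (0,0)
        have hy₂ : y₂ = 0 := x_eq_zero_y (hx₂ ▸ h₂.1)
        have hx : x₁ ≠ x₂ := fun h => hx₁ (h.trans hx₂)
        have hLv : (Wc m n).slope x₁ x₂ y₁ y₂ = y₁ / x₁ := by
          rw [slope_of_X_ne hx, hx₂, hy₂, sub_zero, sub_zero]
        have hprod : x₁ * X3 m n x₁ x₂ y₁ y₂ = (Wc m n).a₄ := by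
          rw [hXv, hLv, hx₂]
          field_simp
          linear_combination e₁
        have hx₃ : X3 m n x₁ x₂ y₁ y₂ ≠ 0 := by
          intro h
          rw [h, mul_zero] at hprod
          exact ha4 hprod.symm
        refine ⟨(Wc m n).a₄, ha4, ?_⟩
        rw [hwadd, wq_some, wq_some, if_neg hx₃, if_neg hx₁, if_pos hx₂]
        linear_combination ((Wc m n).a₄) * hprod
      · -- generic case
        have ht0 : (0:ℚ) ^ 3 + (Wc m n).a₂ * (0:ℚ) ^ 2 + (Wc m n).a₄ * 0 = 0 := by ring
        have hkey : (x₁ - 0) * (x₂ - 0) * (X3 m n x₁ x₂ y₁ y₂ - 0)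
            = ((Wc m n).slope x₁ x₂ y₁ y₂ * (0 - x₁) + y₁) ^ 2 :=
          collinear_Q h₁.1 h₂.1 hxy 0 ht0
        by_cases hx₃ : X3 m n x₁ x₂ y₁ y₂ = 0
        · -- the sum is (0,0)
          have hnu : (Wc m n).slope x₁ x₂ y₁ y₂ * (0 - x₁) + y₁ = 0 := by
            have h0 : ((Wc m n).slope x₁ x₂ y₁ y₂ * (0 - x₁) + y₁) ^ 2 = 0 := by
              rw [← hkey, hx₃]; ring
            exact pow_eq_zero_iff (n := 2) (by norm_num) |>.mp h0
          have hXz : ((Wc m n).slope x₁ x₂ y₁ y₂) ^ 2 - (Wc m n).a₂ - x₁ - x₂ = 0 := by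
            rw [← hXv]; exact hx₃
          have hy1L : y₁ = (Wc m n).slope x₁ x₂ y₁ y₂ * x₁ := by linear_combination hnu
          have hprod : x₁ * x₂ = (Wc m n).a₄ := by
            apply mul_left_cancel₀ hx₁
            linear_combination e₁ - (y₁ + (Wc m n).slope x₁ x₂ y₁ y₂ * x₁) * hy1L
              - x₁ ^ 2 * hXz
          refine ⟨(Wc m n).a₄, ha4, ?_⟩
          rw [hwadd, wq_some, wq_some, if_pos hx₃, if_neg hx₁, if_neg hx₂]
          linear_combination ((Wc m n).a₄) * hprod
        · refine ⟨(Wc m n).slope x₁ x₂ y₁ y₂ * (0 - x₁) + y₁, ?_, ?_⟩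
          · intro h0
            rw [h0] at hkey
            have hz : x₁ * x₂ * X3 m n x₁ x₂ y₁ y₂ = 0 := by linear_combination hkey
            rcases mul_eq_zero.mp hz with h | h
            · rcases mul_eq_zero.mp h with h | h
              · exact hx₁ h
              · exact hx₂ h
            · exact hx₃ h
          · rw [hwadd, wq_some, wq_some, if_neg hx₃, if_neg hx₁, if_neg hx₂]
            linear_combination hkey

variable (m n)

/-- `√(m(m+16n²))`. -/
noncomputable def zywS : ℝ := Real.sqrt ((m : ℝ) * ((m : ℝ) + 16 * n ^ 2))

/-- the largest root of the cubic. -/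
noncomputable def zywE : ℝ := (5 * ((m : ℝ) + 16 * n ^ 2) + 3 * zywS m n) / 2

/-- real invariant: distance of the x-coordinate from the largest root. -/
noncomputable def dr : (Wc m n).Point → ℝ := fun P =>
  match P with
  | .zero => 1
  | @WeierstrassCurve.Affine.Point.some _ _ _ x _ _ => (x : ℝ) - zywE m n

lemma dr_zero : dr m n 0 = 1 := rfl

lemma dr_some {x y : ℚ} (h : (Wc m n).Nonsingular x y) :
    dr m n (Point.some _ _ h) = (x : ℝ) - zywE m n := rfl

lemma dr_zero' : dr m n Point.zero = 1 := rfl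

lemma zywS_sq : (zywS m n) ^ 2 = (m : ℝ) * ((m : ℝ) + 16 * n ^ 2) :=
  Real.sq_sqrt (by positivity)

lemma a2_cast : ((( Wc m n).a₂ : ℚ) : ℝ) = -(5 * ((m : ℝ) + 16 * n ^ 2)) := by
  rw [a2_eq]; push_cast; ring

lemma a4_cast : ((( Wc m n).a₄ : ℚ) : ℝ)
    = 4 * ((m : ℝ) + 16 * n ^ 2) * ((m : ℝ) + 25 * n ^ 2) := by
  rw [a4_eq]; push_cast; ring

lemma zywE_root : (zywE m n) ^ 3 + ((Wc m n).a₂ : ℝ) * (zywE m n) ^ 2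
    + ((Wc m n).a₄ : ℝ) * (zywE m n) = 0 := by
  rw [a2_cast, a4_cast]
  have hs := zywS_sq m n
  unfold zywE
  linear_combination ((5 * ((m : ℝ) + 16 * n ^ 2) + 3 * zywS m n) / 2 * (9 / 4)) * hs

variable {m n}

lemma rat_ne_zywE (hirr : Irrational (zywS m n)) (q : ℚ) : (q : ℝ) ≠ zywE m n := by
  intro h
  apply hirr
  refine ⟨(2 * q - 5 * ((m : ℚ) + 16 * n ^ 2)) / 3, ?_⟩
  unfold zywE at h
  push_cast
  linarith

lemma dr_ne (hirr : Irrational (zywS m n)) (P : (Wc m n).Point) : dr m n P ≠ 0 := by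
  rcases P with _ | @⟨x, y, h⟩
  · rw [← zero_def, dr_zero]; norm_num
  · rw [dr_some]
    exact sub_ne_zero.mpr (rat_ne_zywE hirr x)

/-- The key positivity property of `dr`. -/
lemma dr_mul (hirr : Irrational (zywS m n)) (P Q : (Wc m n).Point) :
    0 < dr m n (P + Q) * (dr m n P * dr m n Q) := by
  rcases P with _ | @⟨x₁, y₁, h₁⟩
  · rw [← zero_def, zero_add, dr_zero, one_mul]
    exact mul_self_pos.mpr (dr_ne hirr Q)
  rcases Q with _ | @⟨x₂, y₂, h₂⟩
  · rw [← zero_def, add_zero, dr_zero, mul_one]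
    exact mul_self_pos.mpr (dr_ne hirr (Point.some _ _ h₁))
  by_cases hopp : x₁ = x₂ ∧ y₁ = (Wc m n).negY x₂ y₂
  · rw [add_of_Y_eq hopp.1 hopp.2, dr_zero, one_mul]
    obtain ⟨rfl, -⟩ := hopp
    rw [dr_some, dr_some]
    exact mul_self_pos.mpr (sub_ne_zero.mpr (rat_ne_zywE hirr x₁))
  · have hxy : x₁ = x₂ → y₁ ≠ (Wc m n).negY x₂ y₂ := fun hx hy => hopp ⟨hx, hy⟩
    have hdadd : dr m n (Point.some _ _ h₁ + Point.some _ _ h₂)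
        = ((X3 m n x₁ x₂ y₁ y₂ : ℚ) : ℝ) - zywE m n := by
      rw [add_some (fun h => hxy h.1 h.2)]; exact dr_some m n _
    have hkey : ((x₁ : ℝ) - zywE m n) * ((x₂ : ℝ) - zywE m n)
          * (((X3 m n x₁ x₂ y₁ y₂ : ℚ) : ℝ) - zywE m n)
        = (((Wc m n).slope x₁ x₂ y₁ y₂ : ℝ) * (zywE m n - (x₁ : ℝ)) + (y₁ : ℝ)) ^ 2 :=
      collinear_R h₁.1 h₂.1 hxy (zywE m n) (zywE_root m n)
    rw [hdadd, dr_some, dr_some]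
    have h1 := sub_ne_zero.mpr (rat_ne_zywE hirr x₁)
    have h2 := sub_ne_zero.mpr (rat_ne_zywE hirr x₂)
    have h3 := sub_ne_zero.mpr (rat_ne_zywE hirr (X3 m n x₁ x₂ y₁ y₂))
    have hne : ((x₁:ℝ) - zywE m n) * ((x₂:ℝ) - zywE m n)
        * (((X3 m n x₁ x₂ y₁ y₂ : ℚ) : ℝ) - zywE m n) ≠ 0 :=
      mul_ne_zero (mul_ne_zero h1 h2) h3
    have hpos : 0 < ((x₁:ℝ) - zywE m n) * ((x₂:ℝ) - zywE m n)
        * (((X3 m n x₁ x₂ y₁ y₂ : ℚ) : ℝ) - zywE m n) := by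
      rw [hkey]
      exact lt_of_le_of_ne (sq_nonneg _) (Ne.symm (hkey ▸ hne))
    nlinarith [hpos]

end Zyw

/-- The points `P₁ = (m+16n², 6n(m+16n²))` and `P₂ = (36n², 12n(m−2n²))` are rational points of
`E` generating a free abelian group of rank `2`. -/
theorem points_P1_P2_independent (m n : ℕ) (hm : 0 < m) (hn : 0 < n)
    (hm1 : Nat.Prime m) (hm2 : Nat.Prime (m + 16 * n ^ 2)) (hm3 : Nat.Prime (m + 25 * n ^ 2))
    (hc1 : m % 24 = 11) (hc2 : (m + 16 * n ^ 2) % 24 = 11) (hc3 : (m + 25 * n ^ 2) % 24 = 11) :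
    ∃ (h1 : (zywinaCurve m n).toAffine.Nonsingular
        ((m : ℚ) + 16 * n ^ 2) (6 * n * ((m : ℚ) + 16 * n ^ 2)))
      (h2 : (zywinaCurve m n).toAffine.Nonsingular
        (36 * (n : ℚ) ^ 2) (12 * n * ((m : ℚ) - 2 * n ^ 2))),
      ∀ a b : ℤ, a • WeierstrassCurve.Affine.Point.some _ _ h1
          + b • WeierstrassCurve.Affine.Point.some _ _ h2 = 0 → a = 0 ∧ b = 0 := by
  classical
  open Zyw in
  -- ℕ-level arithmetic facts
  have hm11 : 11 ≤ m := by omega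
  have hn2 : 1 ≤ n ^ 2 := Nat.one_le_pow _ _ hn
  have hA27 : 27 ≤ m + 16 * n ^ 2 := by nlinarith
  have hB36 : 36 ≤ m + 25 * n ^ 2 := by nlinarith
  have hAltB : m + 16 * n ^ 2 < m + 25 * n ^ 2 := by nlinarith
  have hmltA : m < m + 16 * n ^ 2 := by nlinarith
  -- ℚ-level positivity
  have hmQ : (0 : ℚ) < (m : ℚ) := by exact_mod_cast hm
  have hnQ : (0 : ℚ) < (n : ℚ) := by exact_mod_cast hn
  have hAQ : (0 : ℚ) < (m : ℚ) + 16 * n ^ 2 := by nlinarith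
  have hBQ : (0 : ℚ) < (m : ℚ) + 25 * n ^ 2 := by nlinarith
  have ha4 : (Wc m n).a₄ ≠ 0 := by
    rw [a4_eq]
    exact (mul_pos (mul_pos (by norm_num : (0:ℚ) < 4) hAQ) hBQ).ne'
  -- m * (m + 16n²) is not a square
  have hmA_nonsq : ¬ IsSquare (m * (m + 16 * n ^ 2)) := by
    rintro ⟨k, hk⟩
    have hmk : m ∣ k := by
      have h' : m ∣ k * k := hk ▸ dvd_mul_right m (m + 16 * n ^ 2)
      exact ((Nat.Prime.dvd_mul hm1).mp h').elim id id
    obtain ⟨t, rfl⟩ := hmk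
    have h2 : m * (m + 16 * n ^ 2) = m * (m * (t * t)) := by rw [hk]; ring
    have h3 : m + 16 * n ^ 2 = m * (t * t) := Nat.eq_of_mul_eq_mul_left hm h2
    have h4 : m ∣ m + 16 * n ^ 2 := ⟨t * t, h3⟩
    rcases (hm2.eq_one_or_self_of_dvd m h4) with h5 | h5
    · exact hm1.one_lt.ne' h5
    · omega
  have hirr : Irrational (zywS m n) := by
    unfold zywS
    rw [show (m : ℝ) * ((m : ℝ) + 16 * n ^ 2) = ((m * (m + 16 * n ^ 2) : ℕ) : ℝ) by
      push_cast; ring]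
    exact irrational_sqrt_natCast_iff.mpr hmA_nonsq
  -- discriminant
  have hΔv : (Wc m n).Δ
      = 2304 * (m : ℚ) * ((m : ℚ) + 16 * n ^ 2) ^ 3 * ((m : ℚ) + 25 * n ^ 2) ^ 2 := by
    simp only [WeierstrassCurve.Δ, WeierstrassCurve.b₂, WeierstrassCurve.b₄,
      WeierstrassCurve.b₆, WeierstrassCurve.b₈, zywinaCurve, WeierstrassCurve.toAffine, Wc]
    ring
  have hΔ : (Wc m n).Δ ≠ 0 := by
    rw [hΔv]
    exact (mul_pos (mul_pos (mul_pos (by norm_num : (0:ℚ) < 2304) hmQ)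
      (pow_pos hAQ 3)) (pow_pos hBQ 2)).ne'
  -- the three points
  have h1 : (Wc m n).Nonsingular ((m : ℚ) + 16 * n ^ 2) (6 * n * ((m : ℚ) + 16 * n ^ 2)) := by
    refine (equation_iff_nonsingular_of_Δ_ne_zero hΔ).mp ?_
    rw [equation_simp, a2_eq, a4_eq]; ring
  have h2 : (Wc m n).Nonsingular (36 * (n : ℚ) ^ 2) (12 * n * ((m : ℚ) - 2 * n ^ 2)) := by
    refine (equation_iff_nonsingular_of_Δ_ne_zero hΔ).mp ?_
    rw [equation_simp, a2_eq, a4_eq]; ring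
  have hT : (Wc m n).Nonsingular 0 0 := by
    refine (equation_iff_nonsingular_of_Δ_ne_zero hΔ).mp ?_
    rw [equation_simp]; ring
  refine ⟨h1, h2, ?_⟩
  -- the homomorphisms
  haveI : Fact (Nat.Prime (m + 16 * n ^ 2)) := ⟨hm2⟩
  haveI : Fact (Nat.Prime (m + 25 * n ^ 2)) := ⟨hm3⟩
  let φA : (Wc m n).Point →+ ZMod 2 := AddMonoidHom.mk'
    (fun P => zywVal (m + 16 * n ^ 2) (wq m n P)) (fun P Q => by
      obtain ⟨s, hs, hmul⟩ := wq_mul ha4 P Q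
      exact zywVal_solve _ (wq_ne ha4 _) (wq_ne ha4 _) (wq_ne ha4 _) hs hmul)
  let φB : (Wc m n).Point →+ ZMod 2 := AddMonoidHom.mk'
    (fun P => zywVal (m + 25 * n ^ 2) (wq m n P)) (fun P Q => by
      obtain ⟨s, hs, hmul⟩ := wq_mul ha4 P Q
      exact zywVal_solve _ (wq_ne ha4 _) (wq_ne ha4 _) (wq_ne ha4 _) hs hmul)
  let φD : (Wc m n).Point →+ ZMod 2 := AddMonoidHom.mk'
    (fun P => zywSgn (dr m n P)) (fun P Q =>
      zywSgn_solve (dr_ne hirr _) (dr_ne hirr _) (dr_mul hirr P Q))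
  have hφA : ∀ P, φA P = zywVal (m + 16 * n ^ 2) (wq m n P) := fun _ => rfl
  have hφB : ∀ P, φB P = zywVal (m + 25 * n ^ 2) (wq m n P) := fun _ => rfl
  have hφD : ∀ P, φD P = zywSgn (dr m n P) := fun _ => rfl
  -- values of wq and dr on the points
  have hwq1 : wq m n (Point.some _ _ h1) = ((m + 16 * n ^ 2 : ℕ) : ℚ) := by
    rw [wq_some, if_neg hAQ.ne']; push_cast; ring
  have hwq2 : wq m n (Point.some _ _ h2) = ((6 * n : ℕ) : ℚ) ^ 2 := by
    rw [wq_some, if_neg (by nlinarith : (36 * (n:ℚ) ^ 2) ≠ 0)]; push_cast; ring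
  have hwqT : wq m n (Point.some _ _ hT) = ((4 * (m + 16 * n ^ 2) * (m + 25 * n ^ 2) : ℕ) : ℚ) := by
    rw [wq_some, if_pos rfl, a4_eq]; push_cast; ring
  -- valuation values
  have vA1 : φA (Point.some _ _ h1) = 1 := by
    rw [hφA (Point.some _ _ h1), hwq1]
    unfold zywVal
    rw [padicValRat.of_nat, padicValNat.self hm2.one_lt]
    decide
  have vA2 : φA (Point.some _ _ h2) = 0 := by
    rw [hφA (Point.some _ _ h2), hwq2]
    unfold zywVal
    rw [padicValRat.pow ((6 * n : ℕ) : ℚ)]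
    push_cast
    rw [show (2 : ZMod 2) = 0 by decide]
    ring
  have vB1 : φB (Point.some _ _ h1) = 0 := by
    rw [hφB (Point.some _ _ h1), hwq1]
    unfold zywVal
    rw [padicValRat.of_nat, padicValNat.eq_zero_of_not_dvd (fun hdvd =>
      absurd (Nat.le_of_dvd (by omega) hdvd) (by omega))]
    decide
  have vB2 : φB (Point.some _ _ h2) = 0 := by
    rw [hφB (Point.some _ _ h2), hwq2]
    unfold zywVal
    rw [padicValRat.pow ((6 * n : ℕ) : ℚ)]
    push_cast
    rw [show (2 : ZMod 2) = 0 by decide]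
    ring
  have vBT : φB (Point.some _ _ hT) = 1 := by
    rw [hφB (Point.some _ _ hT), hwqT]
    unfold zywVal
    rw [show 4 * (m + 16 * n ^ 2) * (m + 25 * n ^ 2)
        = (4 * (m + 16 * n ^ 2)) * (m + 25 * n ^ 2) by ring]
    rw [padicValRat.of_nat, padicValNat.mul (by omega) (by omega)]
    rw [padicValNat.eq_zero_of_not_dvd (fun hdvd => by
      rcases (Nat.Prime.dvd_mul hm3).mp hdvd with h | h
      · exact absurd (Nat.le_of_dvd (by norm_num) h) (by omega)
      · exact absurd (Nat.le_of_dvd (by omega) h) (by omega))]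
    rw [padicValNat.self hm3.one_lt]
    decide
  -- sign values
  have hsnn : 0 ≤ zywS m n := Real.sqrt_nonneg _
  have hmR : (0 : ℝ) < (m : ℝ) := by exact_mod_cast hm
  have hnR : (0 : ℝ) < (n : ℝ) := by exact_mod_cast hn
  have vD1 : φD (Point.some _ _ h1) = 1 := by
    rw [hφD (Point.some _ _ h1), dr_some]
    have hlt : ((((m : ℚ) + 16 * n ^ 2) : ℚ) : ℝ) - zywE m n < 0 := by
      unfold zywE
      push_cast
      linarith [hmR, hsnn, sq_nonneg ((n : ℝ))]
    exact if_pos hlt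
  have vD2 : φD (Point.some _ _ h2) = 1 := by
    rw [hφD (Point.some _ _ h2), dr_some]
    have hlt : (((36 * (n : ℚ) ^ 2) : ℚ) : ℝ) - zywE m n < 0 := by
      unfold zywE
      push_cast
      linarith [hmR, hsnn, sq_nonneg ((n : ℝ))]
    exact if_pos hlt
  have vDT : φD (Point.some _ _ hT) = 1 := by
    rw [hφD (Point.some _ _ hT), dr_some]
    have hlt : (((0 : ℚ) : ℚ) : ℝ) - zywE m n < 0 := by
      unfold zywE
      push_cast
      linarith [hmR, hsnn, sq_nonneg ((n : ℝ))]
    exact if_pos hlt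
  -- two-torsion points are 0 and (0,0)
  have htors : ∀ Q : (Wc m n).Point, Q + Q = 0 → Q = 0 ∨ Q = Point.some _ _ hT := by
    intro Q hQ
    rcases Q with _ | @⟨x, y, h⟩
    · exact Or.inl zero_def.symm
    have hy : y = (Wc m n).negY x y := by
      by_contra hy
      rw [add_some (fun h => hy h.2)] at hQ
      exact some_ne_zero _ hQ
    rw [negY_eq] at hy
    have hy0 : y = 0 := by linarith
    subst hy0
    have e := (equation_simp m n).mp h.1
    by_cases hx : x = 0
    · subst hx
      exact Or.inr rfl
    · exfalso
      have hq2 : x ^ 2 + (Wc m n).a₂ * x + (Wc m n).a₄ = 0 := by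
        apply mul_left_cancel₀ hx
        linear_combination -e
      rw [a2_eq, a4_eq] at hq2
      have hq2R := congrArg (fun q : ℚ => (q : ℝ)) hq2
      push_cast at hq2R
      have hs := zywS_sq m n
      have h9 : (3 * zywS m n - (2 * (x:ℝ) - 5 * ((m:ℝ) + 16 * n ^ 2)))
          * (3 * zywS m n + (2 * (x:ℝ) - 5 * ((m:ℝ) + 16 * n ^ 2))) = 0 := by
        linear_combination 9 * hs - 4 * hq2R
      rcases mul_eq_zero.mp h9 with h' | h'
      · exact hirr ⟨(2 * x - 5 * ((m:ℚ) + 16 * n ^ 2)) / 3, by push_cast; linarith⟩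
      · exact hirr ⟨-(2 * x - 5 * ((m:ℚ) + 16 * n ^ 2)) / 3, by push_cast; linarith⟩
  -- the halving step
  have hstep : ∀ a b : ℤ, a • Point.some _ _ h1 + b • Point.some _ _ h2 = 0 →
      ∃ a' b' : ℤ, a = 2 * a' ∧ b = 2 * b' ∧ a' • Point.some _ _ h1 + b' • Point.some _ _ h2 = 0 := by
    intro a b hab
    have hA0 : (a : ZMod 2) = 0 := by
      have h := congrArg (fun z => φA z) hab
      simp only [map_add, map_zsmul, _root_.map_zero, vA1, vA2, smul_zero, add_zero,
        zsmul_eq_mul, mul_one] at h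
      exact h
    have hD0 : (a : ZMod 2) + (b : ZMod 2) = 0 := by
      have h := congrArg (fun z => φD z) hab
      simp only [map_add, map_zsmul, _root_.map_zero, vD1, vD2,
        zsmul_eq_mul, mul_one] at h
      exact h
    have hB0 : (b : ZMod 2) = 0 := by rw [hA0, zero_add] at hD0; exact hD0
    have hdvd_a : (2 : ℤ) ∣ a := by
      have := (ZMod.intCast_zmod_eq_zero_iff_dvd a 2).mp hA0
      exact_mod_cast this
    have hdvd_b : (2 : ℤ) ∣ b := by
      have := (ZMod.intCast_zmod_eq_zero_iff_dvd b 2).mp hB0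
      exact_mod_cast this
    obtain ⟨a', rfl⟩ := hdvd_a
    obtain ⟨b', rfl⟩ := hdvd_b
    refine ⟨a', b', rfl, rfl, ?_⟩
    have hQ2 : (2 : ℤ) • (a' • Point.some _ _ h1 + b' • Point.some _ _ h2) = 0 := by
      rw [zsmul_add, ← mul_zsmul, ← mul_zsmul]
      exact hab
    rw [two_zsmul] at hQ2
    rcases htors _ hQ2 with h | hT'
    · exact h
    · exfalso
      have hb := congrArg (fun z => φB z) hT'
      simp only [map_add, map_zsmul, vB1, vB2, smul_zero, add_zero, vBT] at hb
      exact absurd hb (by decide)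
  -- infinite descent
  have hpow : ∀ k : ℕ, ∀ a b : ℤ,
      a • Point.some _ _ h1 + b • Point.some _ _ h2 = 0 → 2 ^ k ∣ a ∧ 2 ^ k ∣ b := by
    intro k
    induction k with
    | zero => intro a b _; simp
    | succ k ih =>
      intro a b hab
      obtain ⟨a', b', rfl, rfl, h'⟩ := hstep a b hab
      obtain ⟨d1, d2⟩ := ih a' b' h'
      constructor
      · rw [pow_succ']; exact mul_dvd_mul_left 2 d1
      · rw [pow_succ']; exact mul_dvd_mul_left 2 d2
  intro a b hab
  constructor
  · by_contra ha
    have hd := (hpow a.natAbs a b hab).1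
    have hle := Int.le_of_dvd (abs_pos.mpr ha) ((dvd_abs _ _).mpr hd)
    have hlt : |a| < 2 ^ a.natAbs := by
      rw [Int.abs_eq_natAbs]
      exact_mod_cast Nat.lt_two_pow_self (n := a.natAbs)
    linarith
  · by_contra hb
    have hd := (hpow b.natAbs a b hab).2
    have hle := Int.le_of_dvd (abs_pos.mpr hb) ((dvd_abs _ _).mpr hd)
    have hlt : |b| < 2 ^ b.natAbs := by
      rw [Int.abs_eq_natAbs]
      exact_mod_cast Nat.lt_two_pow_self (n := b.natAbs)
    linarith
end

section
/- Let a and b be integers, and set a' = −2a and b' = a² − 4b. Let d be a squarefree integer such that for every prime p, either d is a square in ℚ_p or there exist x, y ∈ ℚ_p satisfying y² = d·x⁴ + a'·x² + b'/d. Then d divides b'. -/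
lemma padic_odd_norm_contra {p : ℕ} [Fact p.Prime] (y : ℚ_[p]) (k : ℤ) (hk : Odd k)
    (h : ‖y‖ ^ 2 = (p : ℝ) ^ k) : False := by
  have hp1 : (1 : ℝ) < p := by exact_mod_cast (Fact.out : p.Prime).one_lt
  have hp0 : (0 : ℝ) < p := lt_trans one_pos hp1
  have hy0 : y ≠ 0 := by
    rintro rfl
    rw [norm_zero, zero_pow (by norm_num : (2:ℕ) ≠ 0)] at h
    exact (zpow_pos hp0 k).ne' h.symm
  rw [Padic.norm_eq_zpow_neg_valuation hy0] at h
  rw [← zpow_natCast ((p:ℝ) ^ (-y.valuation)) 2, ← zpow_mul] at h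
  have := (zpow_right_inj₀ hp0 (ne_of_gt hp1)).1 h
  obtain ⟨j, hj⟩ := hk
  omega

/-- If `d` is a squarefree integer such that the curve
`C_d : y² = d·x⁴ + a'·x² + b'/d` (with `a' = −2a`, `b' = a² − 4b`) has `ℚ_p`-points for all
primes `p` (where a point at infinity exists iff `d` is a square in `ℚ_p`), then `d ∣ b'`. -/
theorem squarefree_d_dvd_b' (a b a' b' d : ℤ) (ha' : a' = -2 * a) (hb' : b' = a ^ 2 - 4 * b)
    (hd : Squarefree d)
    (hloc : ∀ (p : ℕ) [Fact p.Prime], IsSquare (d : ℚ_[p]) ∨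
      ∃ x y : ℚ_[p], y ^ 2 = (d : ℚ_[p]) * x ^ 4 + (a' : ℚ_[p]) * x ^ 2 + (b' : ℚ_[p]) / d) :
    d ∣ b' := by
  have hd0 : d ≠ 0 := hd.ne_zero
  -- key: every prime dividing d divides b'
  have key : ∀ p : ℕ, p.Prime → (p : ℤ) ∣ d → (p : ℤ) ∣ b' := by
    intro p hp hpd
    by_contra hpb
    haveI : Fact p.Prime := ⟨hp⟩
    have hp1 : (1 : ℝ) < p := by exact_mod_cast hp.one_lt
    have hp0 : (0 : ℝ) < p := lt_trans one_pos hp1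
    have hb0 : b' ≠ 0 := fun h => hpb (h ▸ dvd_zero _)
    have hp2d : ¬ ((p : ℤ) ^ 2 ∣ d) := by
      intro h
      exact (Nat.prime_iff_prime_int.mp hp).not_unit (hd p (by rwa [← sq]))
    -- valuation of d is 1
    have vd : (d : ℚ_[p]).valuation = 1 := by
      rw [Padic.valuation_intCast]
      have h1 : 1 ≤ padicValInt p d :=
        ((padicValInt_dvd_iff 1 d).1 (by simpa using hpd)).resolve_left hd0
      have h2 : ¬ (2 ≤ padicValInt p d) := fun h =>
        hp2d ((padicValInt_dvd_iff 2 d).2 (Or.inr h))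
      have : padicValInt p d = 1 := by omega
      exact_mod_cast this
    have vb : (b' : ℚ_[p]).valuation = 0 := by
      rw [Padic.valuation_intCast]
      have h1 : ¬ (1 ≤ padicValInt p b') := fun h =>
        hpb (by simpa using (padicValInt_dvd_iff 1 b').2 (Or.inr h))
      have : padicValInt p b' = 0 := by omega
      exact_mod_cast this
    have hdq : (d : ℚ_[p]) ≠ 0 := Int.cast_ne_zero.2 hd0
    have hbq : (b' : ℚ_[p]) ≠ 0 := Int.cast_ne_zero.2 hb0
    have hnd : ‖(d : ℚ_[p])‖ = (p : ℝ) ^ (-1 : ℤ) := by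
      rw [Padic.norm_eq_zpow_neg_valuation hdq, vd]
    have hnb : ‖(b' : ℚ_[p])‖ = 1 := by
      rw [Padic.norm_eq_zpow_neg_valuation hbq, vb]; simp
    have hnbd : ‖(b' : ℚ_[p]) / d‖ = (p : ℝ) ^ (1 : ℤ) := by
      rw [norm_div, hnb, hnd, zpow_neg_one, one_div, inv_inv, zpow_one]
    rcases hloc p with ⟨c, hc⟩ | ⟨x, y, heq⟩
    · -- square case
      have hc0 : c ≠ 0 := by rintro rfl; simp at hc; exact hd0 hc
      have : (p : ℝ) ^ (-1 : ℤ) = (p : ℝ) ^ (-(c.valuation * 2)) := by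
        rw [← hnd, hc, norm_mul, Padic.norm_eq_zpow_neg_valuation hc0, ← zpow_add₀ (ne_of_gt hp0)]
        ring_nf
      have := (zpow_right_inj₀ hp0 (ne_of_gt hp1)).1 this
      omega
    · -- affine point case
      have hodd : ∃ k : ℤ, Odd k ∧
          ‖(d : ℚ_[p]) * x ^ 4 + (a' : ℚ_[p]) * x ^ 2 + (b' : ℚ_[p]) / d‖ = (p : ℝ) ^ k := by
        rcases le_or_gt ‖x‖ 1 with hx | hx
        · refine ⟨1, odd_one, ?_⟩
          have h1 : ‖(d : ℚ_[p]) * x ^ 4 + (a' : ℚ_[p]) * x ^ 2‖ ≤ 1 := by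
            refine le_trans (Padic.nonarchimedean _ _) (max_le ?_ ?_) <;>
            · rw [norm_mul, norm_pow]
              exact mul_le_one₀ (Padic.norm_int_le_one _) (pow_nonneg (norm_nonneg _) _)
                (pow_le_one₀ (norm_nonneg _) hx)
          have hlt : (1 : ℝ) < (p : ℝ) ^ (1 : ℤ) := by simpa using hp1
          have hne : ‖(d : ℚ_[p]) * x ^ 4 + (a' : ℚ_[p]) * x ^ 2‖ ≠ ‖(b' : ℚ_[p]) / d‖ := by
            rw [hnbd]; exact ne_of_lt (lt_of_le_of_lt h1 hlt)
          rw [Padic.add_eq_max_of_ne hne, hnbd, max_eq_right (le_of_lt (lt_of_le_of_lt h1 hlt))]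
        · have hx0 : x ≠ 0 := by rintro rfl; simp at hx; linarith
          set m : ℤ := -x.valuation with hm
          have hxn : ‖x‖ = (p : ℝ) ^ m := Padic.norm_eq_zpow_neg_valuation hx0
          have hm1 : 1 ≤ m := by
            by_contra hmn
            push_neg at hmn
            have : (p : ℝ) ^ m ≤ (p : ℝ) ^ (0 : ℤ) :=
              zpow_le_zpow_right₀ (le_of_lt hp1) (by omega)
            rw [zpow_zero] at this
            rw [hxn] at hx; linarith
          have hpow : ∀ n : ℕ, ‖x‖ ^ n = (p : ℝ) ^ (m * n) := by
            intro n
            rw [hxn, ← zpow_natCast ((p:ℝ) ^ m) n, ← zpow_mul]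
          have hA : ‖(d : ℚ_[p]) * x ^ 4‖ = (p : ℝ) ^ (4 * m - 1) := by
            rw [norm_mul, norm_pow, hnd, hpow 4, ← zpow_add₀ (ne_of_gt hp0)]
            ring_nf
          have hB : ‖(a' : ℚ_[p]) * x ^ 2‖ ≤ (p : ℝ) ^ (2 * m) := by
            rw [norm_mul, norm_pow, hpow 2]
            calc ‖(a' : ℚ_[p])‖ * (p:ℝ) ^ (m * 2) ≤ 1 * (p:ℝ) ^ (m * 2) := by
                  exact mul_le_mul_of_nonneg_right (Padic.norm_int_le_one _)
                    (le_of_lt (zpow_pos hp0 _))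
              _ = (p : ℝ) ^ (2 * m) := by rw [one_mul]; ring_nf
          have hBC : ‖(a' : ℚ_[p]) * x ^ 2 + (b' : ℚ_[p]) / d‖ < (p : ℝ) ^ (4 * m - 1) := by
            refine lt_of_le_of_lt (Padic.nonarchimedean _ _) (max_lt ?_ ?_)
            · exact lt_of_le_of_lt hB (zpow_lt_zpow_right₀ hp1 (by omega))
            · rw [hnbd]; exact zpow_lt_zpow_right₀ hp1 (by omega)
          refine ⟨4 * m - 1, ⟨2 * m - 1, by ring⟩, ?_⟩
          rw [add_assoc]
          have hne : ‖(d : ℚ_[p]) * x ^ 4‖ ≠ ‖(a' : ℚ_[p]) * x ^ 2 + (b' : ℚ_[p]) / d‖ :=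
            (ne_of_lt (hA ▸ hBC)).symm
          rw [Padic.add_eq_max_of_ne hne, hA, max_eq_left (le_of_lt (hA ▸ hBC))]
      obtain ⟨k, hk, hnorm⟩ := hodd
      exact padic_odd_norm_contra y k hk (by rw [← norm_pow, heq, hnorm])
  -- conclude divisibility from squarefreeness
  rw [← Int.natAbs_dvd, Int.natCast_dvd]
  have hdn : Squarefree d.natAbs := Int.squarefree_natAbs.2 hd
  rw [Nat.dvd_iff_prime_pow_dvd_dvd]
  intro q k hq hqk
  match k with
  | 0 => simpa using one_dvd _
  | 1 =>
    simpa using (Int.natCast_dvd.1 (key q hq (Int.natCast_dvd_natCast.2 (by simpa using hqk) |>.trans (Int.natAbs_dvd.2 dvd_rfl) |> fun h => h)) : q ∣ b'.natAbs)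
  | (n+2) =>
    exact absurd ((pow_dvd_pow q (by omega : 2 ≤ n+2)).trans hqk)
      (fun h => hq.prime.not_unit (hdn q (by rwa [← sq])))
end

section
/- Let d be a squarefree integer such that for every prime p, either d is a square in ℚ_p or there exist x, y ∈ ℚ_p satisfying y² = d·x⁴ + 10(m+16n²)·x² + 9m(m+16n²)/d. Then d ∈ {1, −m, −(m+16n²), m(m+16n²)}. -/
namespace SelmerAux

variable {p : ℕ} [Fact p.Prime]

lemma one_lt_p : (1:ℝ) < p := by exact_mod_cast (Fact.out : p.Prime).one_lt

lemma val_eq_of_norm_eq {x y : ℚ_[p]} (hx : x ≠ 0) (hy : y ≠ 0) (h : ‖x‖ = ‖y‖) :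
    x.valuation = y.valuation := by
  rw [Padic.norm_eq_zpow_neg_valuation hx, Padic.norm_eq_zpow_neg_valuation hy] at h
  have hp0 : (0:ℝ) < (p:ℝ) := lt_trans one_pos one_lt_p
  have h2 := zpow_right_injective₀ hp0 (ne_of_gt one_lt_p) h
  exact neg_injective h2

lemma val_lt_iff {x y : ℚ_[p]} (hx : x ≠ 0) (hy : y ≠ 0) :
    x.valuation < y.valuation ↔ ‖y‖ < ‖x‖ := by
  rw [Padic.norm_eq_zpow_neg_valuation hx, Padic.norm_eq_zpow_neg_valuation hy,
    zpow_lt_zpow_iff_right₀ one_lt_p]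
  omega

lemma norm_eq_one_iff_val {x : ℚ_[p]} (hx : x ≠ 0) : ‖x‖ = 1 ↔ x.valuation = 0 := by
  constructor
  · intro h
    have h2 : ‖x‖ = (p:ℝ) ^ (0:ℤ) := by simpa using h
    rw [Padic.norm_eq_zpow_neg_valuation hx] at h2
    have hp0 : (0:ℝ) < (p:ℝ) := lt_trans one_pos one_lt_p
    have := zpow_right_injective₀ hp0 (ne_of_gt one_lt_p) h2
    omega
  · intro h
    rw [Padic.norm_eq_zpow_neg_valuation hx, h]
    simp

lemma norm_le_one_iff_val {x : ℚ_[p]} (hx : x ≠ 0) : ‖x‖ ≤ 1 ↔ 0 ≤ x.valuation := by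
  rw [Padic.norm_eq_zpow_neg_valuation hx]
  have : (1:ℝ) = (p:ℝ) ^ (0:ℤ) := by simp
  rw [this, zpow_le_zpow_iff_right₀ one_lt_p]
  omega

lemma norm_lt_one_iff_val {x : ℚ_[p]} (hx : x ≠ 0) : ‖x‖ < 1 ↔ 0 < x.valuation := by
  rw [Padic.norm_eq_zpow_neg_valuation hx]
  have : (1:ℝ) = (p:ℝ) ^ (0:ℤ) := by simp
  rw [this, zpow_lt_zpow_iff_right₀ one_lt_p]
  omega

lemma val_neg (x : ℚ_[p]) : (-x).valuation = x.valuation := by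
  by_cases hx : x = 0
  · simp [hx]
  · exact val_eq_of_norm_eq (neg_ne_zero.mpr hx) hx (norm_neg x)

lemma val_sq {y : ℚ_[p]} (hy : y ≠ 0) : (y^2).valuation = 2 * y.valuation := by
  rw [sq, Padic.valuation_mul hy hy]; ring

lemma val_pow4 {y : ℚ_[p]} (hy : y ≠ 0) : (y^4).valuation = 4 * y.valuation := by
  have : y^4 = (y^2)^2 := by ring
  rw [this, val_sq (pow_ne_zero 2 hy), val_sq hy]; ring

lemma val_inv {y : ℚ_[p]} (hy : y ≠ 0) : (y⁻¹).valuation = -y.valuation := by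
  have h1 : y * y⁻¹ = 1 := mul_inv_cancel₀ hy
  have h2 := Padic.valuation_mul hy (inv_ne_zero hy)
  rw [h1] at h2
  simp at h2
  exact Padic.valuation_inv y

lemma val_div {x y : ℚ_[p]} (hx : x ≠ 0) (hy : y ≠ 0) :
    (x / y).valuation = x.valuation - y.valuation := by
  rw [div_eq_mul_inv, Padic.valuation_mul hx (inv_ne_zero hy), val_inv hy]
  ring

/-- if the first summand has strictly smaller valuation than the (nonzero) second,
the sum is nonzero with the same valuation. -/
lemma val_add_left {x y : ℚ_[p]} (hx : x ≠ 0)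
    (h : ∀ _ : y ≠ 0, x.valuation < y.valuation) :
    x + y ≠ 0 ∧ (x + y).valuation = x.valuation := by
  by_cases hy : y = 0
  · simp [hy, hx]
  · have hlt : ‖y‖ < ‖x‖ := (val_lt_iff hx hy).mp (h hy)
    have hne : ‖x‖ ≠ ‖y‖ := (ne_of_gt hlt)
    have hmax : ‖x + y‖ = max ‖x‖ ‖y‖ := Padic.add_eq_max_of_ne hne
    have hnorm : ‖x + y‖ = ‖x‖ := by rw [hmax]; exact max_eq_left hlt.le
    have hxy : x + y ≠ 0 := by
      intro h0
      rw [h0, norm_zero] at hnorm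
      exact hx (norm_eq_zero.mp hnorm.symm)
    exact ⟨hxy, val_eq_of_norm_eq hxy hx hnorm⟩

/-- three-term version: first term strictly minimal. -/
lemma val_add3 {x y z : ℚ_[p]} (hx : x ≠ 0)
    (hy : ∀ _ : y ≠ 0, x.valuation < y.valuation)
    (hz : ∀ _ : z ≠ 0, x.valuation < z.valuation) :
    x + y + z ≠ 0 ∧ (x + y + z).valuation = x.valuation := by
  have h1 : x + y + z = x + (y + z) := by ring
  rw [h1]
  refine val_add_left hx ?_
  intro hyz
  by_cases hy0 : y = 0
  · rw [hy0, zero_add] at hyz ⊢; exact hz hyz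
  · by_cases hz0 : z = 0
    · rw [hz0, add_zero] at hyz ⊢; exact hy hy0
    · calc x.valuation < min y.valuation z.valuation :=
            lt_min (hy hy0) (hz hz0)
        _ ≤ (y + z).valuation := Padic.le_valuation_add hyz

lemma val_intCast_eq (s : ℕ) {k : ℤ} (h1 : (p:ℤ)^s ∣ k) (h2 : ¬(p:ℤ)^(s+1) ∣ k) :
    ((k : ℚ_[p])).valuation = s := by
  have hk : k ≠ 0 := by rintro rfl; exact h2 (dvd_zero _)
  have hval : padicValInt p k = s := by
    have ha := (padicValInt_dvd_iff s k).mp h1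
    have hb : ¬(k = 0 ∨ s + 1 ≤ padicValInt p k) := fun h => h2 ((padicValInt_dvd_iff (s+1) k).mpr h)
    push_neg at hb
    omega
  rw [Padic.valuation_intCast, hval]

lemma val_intCast_zero {k : ℤ} (h : ¬(p:ℤ) ∣ k) : ((k : ℚ_[p])).valuation = 0 := by
  have := val_intCast_eq (p := p) 0 (one_dvd _) (by simpa using h)
  simpa using this

lemma even_val_of_isSquare {x : ℚ_[p]} (hx : x ≠ 0) (h : IsSquare x) :
    Even x.valuation := by
  obtain ⟨y, rfl⟩ := h
  have hy : y ≠ 0 := by intro h0; rw [h0] at hx; simp at hx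
  rw [Padic.valuation_mul hy hy]
  exact Even.add_self _


lemma toZMod_eq_zero_iff (z : ℤ_[p]) : PadicInt.toZMod z = 0 ↔ ‖z‖ < 1 := by
  rw [← RingHom.mem_ker, PadicInt.ker_toZMod, IsLocalRing.mem_maximalIdeal,
    PadicInt.mem_nonunits]

lemma redSquare {k : ℤ} (hk : ¬(p:ℤ) ∣ k) (h : IsSquare ((k : ℚ_[p]))) :
    IsSquare ((k : ZMod p)) := by
  obtain ⟨s, hs⟩ := h
  have hk0 : (k:ℚ_[p]) ≠ 0 := Int.cast_ne_zero.mpr (by rintro rfl; exact hk (dvd_zero _))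
  have hs0 : s ≠ 0 := by intro h0; rw [h0, mul_zero] at hs; exact hk0 hs
  have hvk : ((k:ℚ_[p])).valuation = 0 := val_intCast_zero hk
  have hvs : s.valuation = 0 := by
    have h2 := Padic.valuation_mul hs0 hs0
    rw [← hs, hvk] at h2; omega
  have hns : ‖s‖ ≤ 1 := le_of_eq ((norm_eq_one_iff_val hs0).mpr hvs)
  set S : ℤ_[p] := ⟨s, hns⟩ with hSdef
  have hSS : S * S = (k : ℤ_[p]) := by
    apply Subtype.ext
    simp only [PadicInt.coe_mul, PadicInt.coe_intCast, hSdef]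
    exact hs.symm
  have h3 := congrArg PadicInt.toZMod hSS
  rw [map_mul, map_intCast] at h3
  exact ⟨PadicInt.toZMod S, h3.symm⟩

lemma keyL {u : ℤ} (hu : ¬(p:ℤ) ∣ u) (hns : ¬ IsSquare ((u : ZMod p)))
    (z y : ℚ_[p]) (h0 : ¬(z = 0 ∧ y = 0)) :
    z^2 - (u:ℚ_[p])*y^2 ≠ 0 ∧ Even ((z^2 - (u:ℚ_[p])*y^2).valuation) := by
  have hu0 : u ≠ 0 := by rintro rfl; exact hu (dvd_zero _)
  have huq : (u:ℚ_[p]) ≠ 0 := Int.cast_ne_zero.mpr hu0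
  have hvu : ((u:ℚ_[p])).valuation = 0 := val_intCast_zero hu
  by_cases hy : y = 0
  · have hz : z ≠ 0 := fun h => h0 ⟨h, hy⟩
    have he : z^2 - (u:ℚ_[p])*y^2 = z^2 := by rw [hy]; ring
    rw [he]
    exact ⟨pow_ne_zero 2 hz, by rw [val_sq hz]; exact ⟨z.valuation, by ring⟩⟩
  · by_cases hz : z = 0
    · have he : z^2 - (u:ℚ_[p])*y^2 = -((u:ℚ_[p])*y^2) := by rw [hz]; ring
      have hne : (u:ℚ_[p])*y^2 ≠ 0 := mul_ne_zero huq (pow_ne_zero 2 hy)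
      rw [he]
      refine ⟨neg_ne_zero.mpr hne, ?_⟩
      rw [val_neg, Padic.valuation_mul huq (pow_ne_zero 2 hy), hvu, val_sq hy]
      exact ⟨y.valuation, by ring⟩
    · have hz2 : z^2 ≠ 0 := pow_ne_zero 2 hz
      have huy : (u:ℚ_[p])*y^2 ≠ 0 := mul_ne_zero huq (pow_ne_zero 2 hy)
      have hvz2 : (z^2).valuation = 2 * z.valuation := val_sq hz
      have hvuy : ((u:ℚ_[p])*y^2).valuation = 2 * y.valuation := by
        rw [Padic.valuation_mul huq (pow_ne_zero 2 hy), hvu, val_sq hy]; ring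
      rcases lt_trichotomy ((z^2).valuation) (((u:ℚ_[p])*y^2).valuation) with h | h | h
      · have he : z^2 - (u:ℚ_[p])*y^2 = z^2 + -((u:ℚ_[p])*y^2) := by ring
        rw [he]
        obtain ⟨hne, hval⟩ := val_add_left (y := -((u:ℚ_[p])*y^2)) hz2
          (fun _ => by rw [val_neg]; exact h)
        exact ⟨hne, by rw [hval, hvz2]; exact ⟨z.valuation, by ring⟩⟩
      · -- equal valuations: unit square argument
        have hvzy : z.valuation = y.valuation := by
          rw [hvz2, hvuy] at h; omega
        have hr0 : z * y⁻¹ ≠ 0 := mul_ne_zero hz (inv_ne_zero hy)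
        have hvr : (z * y⁻¹).valuation = 0 := by
          rw [Padic.valuation_mul hz (inv_ne_zero hy), val_inv hy]; omega
        have hnr : ‖z * y⁻¹‖ ≤ 1 := le_of_eq ((norm_eq_one_iff_val hr0).mpr hvr)
        set R : ℤ_[p] := ⟨z * y⁻¹, hnr⟩ with hR
        have hWle : ‖R^2 - (u : ℤ_[p])‖ ≤ 1 := PadicInt.norm_le_one _
        have hWnorm : ‖R^2 - (u : ℤ_[p])‖ = 1 := by
          rcases lt_or_eq_of_le hWle with hlt | heq
          · exfalso
            have h4 : PadicInt.toZMod (R^2 - (u : ℤ_[p])) = 0 :=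
              (toZMod_eq_zero_iff _).mpr hlt
            rw [map_sub, map_pow, map_intCast, sub_eq_zero] at h4
            exact hns ⟨PadicInt.toZMod R, by rw [← h4]; ring⟩
          · exact heq
        have hWQ : ((R^2 - (u : ℤ_[p]) : ℤ_[p]) : ℚ_[p]) = (z*y⁻¹)^2 - (u:ℚ_[p]) := by
          simp [hR, PadicInt.coe_sub, PadicInt.coe_pow, PadicInt.coe_intCast]
          exact PadicInt.coe_pow _ _
        have hwQnorm : ‖(z*y⁻¹)^2 - (u:ℚ_[p])‖ = 1 := by
          rw [← hWQ]; exact hWnorm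
        have hw0 : (z*y⁻¹)^2 - (u:ℚ_[p]) ≠ 0 := by
          intro hc; rw [hc, norm_zero] at hwQnorm; norm_num at hwQnorm
        have hvw : ((z*y⁻¹)^2 - (u:ℚ_[p])).valuation = 0 :=
          (norm_eq_one_iff_val hw0).mp hwQnorm
        have hid : z^2 - (u:ℚ_[p])*y^2 = y^2 * ((z*y⁻¹)^2 - (u:ℚ_[p])) := by
          field_simp
        rw [hid]
        refine ⟨mul_ne_zero (pow_ne_zero 2 hy) hw0, ?_⟩
        rw [Padic.valuation_mul (pow_ne_zero 2 hy) hw0, hvw, val_sq hy]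
        exact ⟨y.valuation, by ring⟩
      · have he : z^2 - (u:ℚ_[p])*y^2 = -((u:ℚ_[p])*y^2) + z^2 := by ring
        rw [he]
        obtain ⟨hne, hval⟩ := val_add_left (y := z^2) (neg_ne_zero.mpr huy)
          (fun _ => by rw [val_neg]; exact h)
        refine ⟨hne, ?_⟩
        rw [hval, val_neg, hvuy]
        exact ⟨y.valuation, by ring⟩

lemma stepval {q : ℕ} [Fact q.Prime] {dd x y B T : ℚ_[q]} {e f : ℤ}
    (hdnz : dd ≠ 0) (hdv : dd.valuation = 1)
    (hB : B ≠ 0) (hBv : B.valuation = e)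
    (hT : T ≠ 0) (hTv : T.valuation = f)
    (he : e = 0 ∨ e = 1) (hf : f = -1 ∨ f = 1) (hef : ¬(e = 1 ∧ f = 1))
    (heq : y^2 = dd*x^4 + B*x^2 + T)
    (hmid : ¬(f = 1 ∧ x ≠ 0 ∧ x.valuation = 0)) : False := by
  by_cases hx : x = 0
  · have heq2 : y^2 = T := by rw [heq, hx]; ring
    have hy : y ≠ 0 := by
      intro h0; rw [h0] at heq2; exact hT (by simpa using heq2.symm)
    have hparity := val_sq hy
    rw [heq2, hTv] at hparity
    omega
  · have hx4 : x^4 ≠ 0 := pow_ne_zero 4 hx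
    have hx2 : x^2 ≠ 0 := pow_ne_zero 2 hx
    have h1 : (dd*x^4).valuation = 1 + 4*x.valuation := by
      rw [Padic.valuation_mul hdnz hx4, hdv, val_pow4 hx]
    have h2 : (B*x^2).valuation = e + 2*x.valuation := by
      rw [Padic.valuation_mul hB hx2, hBv, val_sq hx]
    have hd1 : dd*x^4 ≠ 0 := mul_ne_zero hdnz hx4
    have hb1 : B*x^2 ≠ 0 := mul_ne_zero hB hx2
    set a := x.valuation with ha
    rcases le_or_gt 0 a with hnn | hneg
    · have hfa : f < 1 + 4*a ∧ f < e + 2*a := by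
        rcases hf with rfl | rfl
        · omega
        · have hae : a ≠ 0 := fun h0 => hmid ⟨rfl, hx, h0⟩
          omega
      have heq3 : y^2 = T + dd*x^4 + B*x^2 := by rw [heq]; ring
      obtain ⟨hne, hv⟩ := val_add3 (y := dd*x^4) (z := B*x^2) hT
        (fun _ => by rw [hTv, h1]; exact hfa.1)
        (fun _ => by rw [hTv, h2]; exact hfa.2)
      have hy : y ≠ 0 := by
        intro h0; rw [h0] at heq3; exact hne (by simpa using heq3.symm)
      have hparity := val_sq hy
      rw [heq3, hv, hTv] at hparity
      omega
    · obtain ⟨hne, hv⟩ := val_add3 (y := B*x^2) (z := T) hd1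
        (fun _ => by rw [h1, h2]; omega)
        (fun _ => by rw [h1, hTv]; omega)
      have hy : y ≠ 0 := by
        intro h0; rw [h0] at heq; exact hne (by simpa using heq.symm)
      have hparity := val_sq hy
      rw [heq, hv, h1] at hparity
      omega

lemma zmod3_no_sol : ∀ a b : ZMod 3, b ≠ 0 → a^2 = 2*b^2 → False := by decide

lemma sq_of_mul {F : Type*} [Field F] {a b : F} (h : IsSquare (a*b)) (hb : IsSquare b)
    (hb0 : b ≠ 0) : IsSquare a := by
  obtain ⟨s, hs⟩ := hb
  have hbinv : IsSquare b⁻¹ := ⟨s⁻¹, by rw [hs, mul_inv]⟩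
  have h2 : IsSquare ((a*b)*b⁻¹) := h.mul hbinv
  have h3 : (a*b)*b⁻¹ = a := by field_simp
  rwa [h3] at h2

lemma step3red {q : ℕ} [Fact q.Prime] {dInt BInt : ℤ} {x y T : ℚ_[q]}
    (hdd : (q:ℤ) ∣ dInt)
    (hx : x ≠ 0) (hxv : x.valuation = 0)
    (hy : y ≠ 0) (hyv : y.valuation = 0)
    (hT : T ≠ 0) (hTv : 0 < T.valuation)
    (heq : y^2 = (dInt:ℚ_[q])*x^4 + (BInt:ℚ_[q])*x^2 + T) :
    ∃ a b : ZMod q, b ≠ 0 ∧ a^2 = (BInt : ZMod q) * b^2 := by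
  have hxn : ‖x‖ = 1 := (norm_eq_one_iff_val hx).mpr hxv
  have hyn : ‖y‖ = 1 := (norm_eq_one_iff_val hy).mpr hyv
  have hTn : ‖T‖ < 1 := (norm_lt_one_iff_val hT).mpr hTv
  set X : ℤ_[q] := ⟨x, le_of_eq hxn⟩ with hX
  set Y : ℤ_[q] := ⟨y, le_of_eq hyn⟩ with hY
  set Tz : ℤ_[q] := ⟨T, le_of_lt hTn⟩ with hTz
  have hEq : Y^2 = (dInt : ℤ_[q])*X^4 + (BInt : ℤ_[q])*X^2 + Tz := by
    apply Subtype.ext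
    simp only [PadicInt.coe_add, PadicInt.coe_mul, PadicInt.coe_pow,
      PadicInt.coe_intCast, hX, hY, hTz]
    exact heq
  have h4 := congrArg PadicInt.toZMod hEq
  rw [map_pow, map_add, map_add, map_mul, map_mul, map_pow, map_pow,
    map_intCast, map_intCast] at h4
  have hDz : ((dInt : ZMod q)) = 0 := (ZMod.intCast_zmod_eq_zero_iff_dvd dInt q).mpr hdd
  have hTz0 : PadicInt.toZMod Tz = 0 := (toZMod_eq_zero_iff _).mpr (by
    show ‖Tz‖ < 1
    rw [PadicInt.norm_def]
    exact hTn)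
  rw [hDz, hTz0, zero_mul, zero_add, add_zero] at h4
  refine ⟨PadicInt.toZMod Y, PadicInt.toZMod X, ?_, h4⟩
  intro h0
  have : ‖X‖ < 1 := (toZMod_eq_zero_iff X).mp h0
  rw [PadicInt.norm_def] at this
  change ‖x‖ < 1 at this
  rw [hxn] at this
  norm_num at this

end SelmerAux


open SelmerAux

set_option maxHeartbeats 2000000

/-- Lemma 3.1: if `d` is a squarefree integer such that the curve
`C_d : y² = d·x⁴ + 10(m+16n²)·x² + 9m(m+16n²)/d` has `ℚ_p`-points for all primes `p`
(where a point at infinity exists iff `d` is a square in `ℚ_p`), then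
`d ∈ {1, −m, −(m+16n²), m(m+16n²)}`. -/
theorem selmer_phi_bound (m n : ℕ) (hm : 0 < m) (hn : 0 < n)
    (hm1 : Nat.Prime m) (hm2 : Nat.Prime (m + 16 * n ^ 2)) (hm3 : Nat.Prime (m + 25 * n ^ 2))
    (hc1 : m % 24 = 11) (hc2 : (m + 16 * n ^ 2) % 24 = 11) (hc3 : (m + 25 * n ^ 2) % 24 = 11)
    (d : ℤ) (hd : Squarefree d)
    (hloc : ∀ (p : ℕ) [Fact p.Prime], IsSquare (d : ℚ_[p]) ∨
      ∃ x y : ℚ_[p], y ^ 2 = (d : ℚ_[p]) * x ^ 4 + 10 * ((m : ℚ_[p]) + 16 * n ^ 2) * x ^ 2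
        + 9 * m * ((m : ℚ_[p]) + 16 * n ^ 2) / d) :
    d ∈ ({1, -(m : ℤ), -((m : ℤ) + 16 * n ^ 2), (m : ℤ) * ((m : ℤ) + 16 * n ^ 2)} : Set ℤ) := by
  have hn2 : 0 < n^2 := pow_pos hn 2
  have hnn2 : n ≤ n^2 := Nat.le_self_pow two_ne_zero n
  have hm11 : 11 ≤ m := by omega
  have hA27 : 27 ≤ m + 16*n^2 := by omega
  have hmA : m < m + 16*n^2 := by omega
  have hAC : m + 16*n^2 < m + 25*n^2 := by omega
  have hmo : m % 2 = 1 := by omega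
  have hm3' : m % 3 = 2 := by omega
  have hm4 : m % 4 = 3 := by omega
  have hAo : (m + 16*n^2) % 2 = 1 := by omega
  have hA3 : (m + 16*n^2) % 3 = 2 := by omega
  have hA4 : (m + 16*n^2) % 4 = 3 := by omega
  have hd0 : d ≠ 0 := hd.ne_zero
  -- prime divisibility facts (ℕ)
  have hmndvd : ¬ m ∣ n := by
    intro h
    have h1 : m ∣ 16*n^2 := Dvd.dvd.mul_left (h.mul_right n |>.trans (dvd_of_eq (sq n).symm)) 16
    have h2 : m ∣ m + 16*n^2 := Dvd.dvd.add (dvd_refl m) h1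
    have := (Nat.prime_dvd_prime_iff_eq hm1 hm2).mp h2
    omega
  have hmdvdA : ¬ m ∣ (m + 16*n^2) := by
    intro h
    have := (Nat.prime_dvd_prime_iff_eq hm1 hm2).mp h
    omega
  have hAndvd : ¬ (m + 16*n^2) ∣ n := by
    intro h
    have := Nat.le_of_dvd hn h
    omega
  have hAdvdm : ¬ (m + 16*n^2) ∣ m := fun h => by
    have := Nat.le_of_dvd hm h; omega
  have hAdvdC : ¬ (m + 16*n^2) ∣ (m + 25*n^2) := by
    intro h
    have := (Nat.prime_dvd_prime_iff_eq hm2 hm3).mp h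
    omega
  have hAdvd16 : ¬ (m + 16*n^2) ∣ 16 := fun h => by
    have := Nat.le_of_dvd (by norm_num) h; omega
  have hAdvd3 : ¬ (m + 16*n^2) ∣ 3 := fun h => by
    have := Nat.le_of_dvd (by norm_num) h; omega
  haveI hfm : Fact (Nat.Prime m) := ⟨hm1⟩
  haveI hfA : Fact (Nat.Prime (m + 16*n^2)) := ⟨hm2⟩
  -- ZMod facts
  have N1 : ¬ IsSquare (-1 : ZMod (m + 16*n^2)) := by
    rw [ZMod.exists_sq_eq_neg_one_iff]
    simp [hA4]
  have hAm : ((m + 16*n^2 : ℕ) : ZMod m) = ((4*n : ℕ) : ZMod m)^2 := by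
    rw [Nat.cast_add, ZMod.natCast_self, zero_add]
    push_cast
    ring
  have hAm0 : ((m + 16*n^2 : ℕ) : ZMod m) ≠ 0 := by
    rw [Ne, ZMod.natCast_eq_zero_iff]
    exact hmdvdA
  have hL1 : legendreSym m ((m + 16*n^2 : ℕ) : ℤ) = 1 := by
    rw [legendreSym.eq_one_iff m (by rwa [Int.cast_natCast])]
    rw [Int.cast_natCast, hAm]
    exact ⟨((4*n : ℕ) : ZMod m), (sq _)⟩
  have hL2 : legendreSym (m + 16*n^2) ((m : ℕ) : ℤ) = -1 := by
    rw [legendreSym.quadratic_reciprocity_three_mod_four hm4 hA4, hL1]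
  have N2 : ¬ IsSquare (((m : ℕ) : ZMod (m + 16*n^2))) := by
    have := (legendreSym.eq_neg_one_iff (m + 16*n^2) (a := ((m:ℕ):ℤ))).mp hL2
    rwa [Int.cast_natCast] at this
  have hCsq : IsSquare (((m + 25*n^2 : ℕ)) : ZMod (m + 16*n^2)) := by
    refine ⟨((3*n : ℕ) : ZMod (m + 16*n^2)), ?_⟩
    have hCA : (m + 25*n^2 : ℕ) = (m + 16*n^2) + 9*n^2 := by ring
    rw [hCA, Nat.cast_add, ZMod.natCast_self, zero_add]
    push_cast
    ring
  have hC0 : ((m + 25*n^2 : ℕ) : ZMod (m + 16*n^2)) ≠ 0 := by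
    rw [Ne, ZMod.natCast_eq_zero_iff]
    exact hAdvdC
  have h16 : ((16 : ℕ) : ZMod (m + 16*n^2)) ≠ 0 := by
    rw [Ne, ZMod.natCast_eq_zero_iff]
    exact hAdvd16
  have h16Csq : IsSquare (((16 : ℕ) : ZMod (m + 16*n^2)) * ((m + 25*n^2 : ℕ) : ZMod (m + 16*n^2))) := by
    refine IsSquare.mul ⟨4, by norm_cast⟩ hCsq
  have h16C0 : ((16 : ℕ) : ZMod (m + 16*n^2)) * ((m + 25*n^2 : ℕ) : ZMod (m + 16*n^2)) ≠ 0 :=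
    mul_ne_zero h16 hC0
  have N3 : ¬ IsSquare ((-(16*(m + 25*n^2 : ℕ) : ℤ) : ℤ) : ZMod (m + 16*n^2)) := by
    intro hsq
    have hcast : ((-(16*(m + 25*n^2 : ℕ) : ℤ) : ℤ) : ZMod (m + 16*n^2))
        = (-1) * (((16 : ℕ) : ZMod (m + 16*n^2)) * ((m + 25*n^2 : ℕ) : ZMod (m + 16*n^2))) := by
      push_cast
      ring
    rw [hcast] at hsq
    exact N1 (sq_of_mul hsq h16Csq h16C0)
  have N4 : ¬ IsSquare (((16*(m + 25*n^2 : ℕ)*m : ℤ) : ZMod (m + 16*n^2))) := by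
    intro hsq
    have hcast : (((16*(m + 25*n^2 : ℕ)*m : ℤ) : ZMod (m + 16*n^2)))
        = (((m : ℕ) : ZMod (m + 16*n^2))) * (((16 : ℕ) : ZMod (m + 16*n^2)) * ((m + 25*n^2 : ℕ) : ZMod (m + 16*n^2))) := by
      push_cast
      ring
    rw [hcast] at hsq
    exact N2 (sq_of_mul hsq h16Csq h16C0)
  -- abbreviations for the numerators
  have hbb0 : ((10*(m + 16*n^2) : ℕ) : ℤ) ≠ 0 := by positivity
  have htt0 : ((9*(m*(m + 16*n^2)) : ℕ) : ℤ) ≠ 0 := by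
    have : 0 < 9*(m*(m + 16*n^2)) := by positivity
    exact_mod_cast this.ne'
  ---------------------------------------------------------------------------
  -- Step I: every prime divisor of d is m or m + 16 n²
  ---------------------------------------------------------------------------
  have key1 : ∀ q : ℕ, q.Prime → (q:ℤ) ∣ d → q = m ∨ q = m + 16*n^2 := by
    intro q hq hqd
    haveI : Fact q.Prime := ⟨hq⟩
    by_contra hcon
    push_neg at hcon
    obtain ⟨hqm, hqA⟩ := hcon
    have hq2 : ¬ (q:ℤ)^2 ∣ d := by
      intro h
      have hu := hd (q:ℤ) (by rwa [← sq])
      rw [Int.isUnit_iff] at hu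
      have := hq.two_le
      omega
    have hvd : ((d : ℚ_[q])).valuation = 1 :=
      val_intCast_eq 1 (by simpa using hqd) (by simpa using hq2)
    have hdq0 : (d : ℚ_[q]) ≠ 0 := Int.cast_ne_zero.mpr hd0
    have hnots : ¬ IsSquare ((d : ℚ_[q])) := by
      intro hs
      have hev := even_val_of_isSquare hdq0 hs
      rw [hvd, Int.even_iff] at hev
      norm_num at hev
    obtain ⟨x, y, hxy⟩ := (hloc q).resolve_left hnots
    have heq : y^2 = (d : ℚ_[q])*x^4 + (((10*(m + 16*n^2) : ℕ) : ℤ) : ℚ_[q])*x^2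
        + (((9*(m*(m + 16*n^2)) : ℕ) : ℤ) : ℚ_[q])/(d : ℚ_[q]) := by
      rw [hxy]; push_cast; ring
    have hBq0 : (((10*(m + 16*n^2) : ℕ) : ℤ) : ℚ_[q]) ≠ 0 := Int.cast_ne_zero.mpr hbb0
    have hTq0 : (((9*(m*(m + 16*n^2)) : ℕ) : ℤ) : ℚ_[q]) ≠ 0 := Int.cast_ne_zero.mpr htt0
    have hTd0 : (((9*(m*(m + 16*n^2)) : ℕ) : ℤ) : ℚ_[q])/(d : ℚ_[q]) ≠ 0 :=
      div_ne_zero hTq0 hdq0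
    by_cases hq3 : q = 3
    · subst hq3
      -- valuations : B has val 0, numerator has val 2, T has val 1
      have hBdvd : ¬ (3:ℤ) ∣ ((10*(m + 16*n^2) : ℕ) : ℤ) := by
        intro h
        have h' : (3:ℕ) ∣ 10*(m + 16*n^2) := by exact_mod_cast h
        rcases (Nat.Prime.dvd_mul (by norm_num)).mp h' with h1 | h1
        · norm_num at h1
        · omega
      have hBv : ((((10*(m + 16*n^2) : ℕ) : ℤ) : ℚ_[3])).valuation = 0 :=
        val_intCast_zero hBdvd
      have htv2 : ((((9*(m*(m + 16*n^2)) : ℕ) : ℤ) : ℚ_[3])).valuation = 2 := by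
        refine val_intCast_eq 2 ?_ ?_
        · have h9 : (3^2:ℕ) ∣ 9*(m*(m + 16*n^2)) := by
            exact Dvd.dvd.mul_right (by norm_num) _
          exact_mod_cast h9
        · intro h
          have h27 : (9*3 : ℕ) ∣ 9*(m*(m + 16*n^2)) := by
            have h' : (3^3:ℕ) ∣ 9*(m*(m + 16*n^2)) := by exact_mod_cast h
            rwa [show (9*3:ℕ) = 3^3 by norm_num]
          have h3 : (3:ℕ) ∣ m*(m + 16*n^2) := by
            rwa [mul_dvd_mul_iff_left (by norm_num : (9:ℕ) ≠ 0)] at h27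
          rcases (Nat.Prime.dvd_mul (by norm_num)).mp h3 with h1 | h1
          · omega
          · omega
      have hTv : ((((9*(m*(m + 16*n^2)) : ℕ) : ℤ) : ℚ_[3])/(d : ℚ_[3])).valuation = 1 := by
        rw [val_div hTq0 hdq0, htv2, hvd]
        norm_num
      by_cases hmidc : x ≠ 0 ∧ x.valuation = 0
      · -- reduction mod 3
        obtain ⟨hx0, hxv⟩ := hmidc
        have hx2 : x^2 ≠ 0 := pow_ne_zero 2 hx0
        have hx4 : x^4 ≠ 0 := pow_ne_zero 4 hx0
        have hvBx : ((((10*(m + 16*n^2) : ℕ) : ℤ) : ℚ_[3])*x^2).valuation = 0 := by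
          rw [Padic.valuation_mul hBq0 hx2, hBv, val_sq hx0, hxv]
          ring
        have hBx0 : (((10*(m + 16*n^2) : ℕ) : ℤ) : ℚ_[3])*x^2 ≠ 0 := mul_ne_zero hBq0 hx2
        have heq3 : y^2 = (((10*(m + 16*n^2) : ℕ) : ℤ) : ℚ_[3])*x^2
            + ((d : ℚ_[3])*x^4 + (((9*(m*(m + 16*n^2)) : ℕ) : ℤ) : ℚ_[3])/(d : ℚ_[3])) := by
          rw [heq]; ring
        have hrest : ∀ _ : ((d : ℚ_[3])*x^4 + (((9*(m*(m + 16*n^2)) : ℕ) : ℤ) : ℚ_[3])/(d : ℚ_[3])) ≠ 0,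
            ((((10*(m + 16*n^2) : ℕ) : ℤ) : ℚ_[3])*x^2).valuation
            < ((d : ℚ_[3])*x^4 + (((9*(m*(m + 16*n^2)) : ℕ) : ℤ) : ℚ_[3])/(d : ℚ_[3])).valuation := by
          intro hne
          have h1 : ((d : ℚ_[3])*x^4).valuation = 1 := by
            rw [Padic.valuation_mul hdq0 hx4, hvd, val_pow4 hx0, hxv]
            ring
          have hmin := Padic.le_valuation_add hne
          rw [h1, hTv] at hmin
          rw [hvBx]
          omega
        obtain ⟨hy2ne, hy2v⟩ := val_add_left hBx0 hrest
        rw [← heq3] at hy2ne hy2v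
        have hy0 : y ≠ 0 := by
          intro h0
          rw [h0] at hy2ne
          exact hy2ne (by ring)
        have hyv : y.valuation = 0 := by
          have := val_sq hy0
          rw [hy2v, hvBx] at this
          omega
        obtain ⟨a, b, hb, hab⟩ := step3red (q := 3) (by exact_mod_cast hqd) hx0 hxv hy0 hyv
          hTd0 (by rw [hTv]; norm_num) heq
        have hbz : ((((10*(m + 16*n^2) : ℕ) : ℤ)) : ZMod 3) = 2 := by
          rw [Int.cast_natCast, ← ZMod.natCast_mod]
          rw [Nat.mul_mod, hA3]
          norm_num
        rw [hbz] at hab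
        exact zmod3_no_sol a b hb hab
      · exact stepval (e := 0) (f := 1) hdq0 hvd hBq0 hBv hTd0 hTv (Or.inl rfl)
          (Or.inr rfl) (by norm_num) heq (fun hh => hmidc ⟨hh.2.1, hh.2.2⟩)
    · -- q ≠ 3 : here T always has valuation -1
      have hTnum : ¬ (q:ℤ) ∣ ((9*(m*(m + 16*n^2)) : ℕ) : ℤ) := by
        rw [Int.natCast_dvd_natCast]
        intro h
        rcases (Nat.Prime.dvd_mul hq).mp h with h1 | h1
        · have h3 : q ∣ 3 := hq.dvd_of_dvd_pow (n := 2) (by norm_num at h1 ⊢; exact h1)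
          have := (Nat.prime_dvd_prime_iff_eq hq (by norm_num)).mp h3
          exact hq3 this
        · rcases (Nat.Prime.dvd_mul hq).mp h1 with h2 | h2
          · exact hqm ((Nat.prime_dvd_prime_iff_eq hq hm1).mp h2)
          · exact hqA ((Nat.prime_dvd_prime_iff_eq hq hm2).mp h2)
      have hTv : ((((9*(m*(m + 16*n^2)) : ℕ) : ℤ) : ℚ_[q])/(d : ℚ_[q])).valuation = -1 := by
        rw [val_div hTq0 hdq0, val_intCast_zero hTnum, hvd]
        norm_num
      by_cases hq25 : q = 2 ∨ q = 5
      · -- B has valuation 1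
        have hOdd5A : (5*(m + 16*n^2)) % 2 = 1 := by
          rcases (Nat.odd_mul (m := 5) (n := m + 16*n^2)).mpr ⟨Nat.odd_iff.mpr (by norm_num), Nat.odd_iff.mpr hAo⟩ with ⟨k, hk⟩
          omega
        have hBv : ((((10*(m + 16*n^2) : ℕ) : ℤ) : ℚ_[q])).valuation = 1 := by
          refine val_intCast_eq 1 ?_ ?_
          · rw [pow_one]
            rcases hq25 with rfl | rfl
            · have : (2:ℕ) ∣ 10*(m + 16*n^2) := ⟨5*(m + 16*n^2), by ring⟩
              exact_mod_cast this
            · have : (5:ℕ) ∣ 10*(m + 16*n^2) := ⟨2*(m + 16*n^2), by ring⟩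
              exact_mod_cast this
          · rcases hq25 with rfl | rfl
            · intro h
              have h4 : (2^2:ℕ) ∣ 10*(m + 16*n^2) := by exact_mod_cast h
              have h4' : (4:ℕ) ∣ 2*(5*(m + 16*n^2)) := by
                convert h4 using 1 <;> ring
              omega
            · intro h
              have h5 : (5^2:ℕ) ∣ 10*(m + 16*n^2) := by exact_mod_cast h
              have h5'' : (5*5:ℕ) ∣ 5*(2*(m + 16*n^2)) := by
                convert h5 using 1 <;> ring
              have h5' : (5:ℕ) ∣ 2*(m + 16*n^2) := by
                rwa [mul_dvd_mul_iff_left (by norm_num : (5:ℕ) ≠ 0)] at h5''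
              rcases (Nat.Prime.dvd_mul (by norm_num)).mp h5' with h1 | h1
              · norm_num at h1
              · have := (Nat.prime_dvd_prime_iff_eq (by norm_num) hm2).mp h1
                omega
        exact stepval (e := 1) (f := -1) hdq0 hvd hBq0 hBv hTd0 hTv (Or.inr rfl)
          (Or.inl rfl) (by norm_num) heq (by rintro ⟨h, -⟩; norm_num at h)
      · push_neg at hq25
        have hBdvd : ¬ (q:ℤ) ∣ ((10*(m + 16*n^2) : ℕ) : ℤ) := by
          rw [Int.natCast_dvd_natCast]
          intro h
          rcases (Nat.Prime.dvd_mul hq).mp h with h1 | h1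
          · have h10 : q ∣ 2*5 := by norm_num at h1 ⊢; exact h1
            rcases (Nat.Prime.dvd_mul hq).mp h10 with h2 | h2
            · exact hq25.1 ((Nat.prime_dvd_prime_iff_eq hq (by norm_num)).mp h2)
            · exact hq25.2 ((Nat.prime_dvd_prime_iff_eq hq (by norm_num)).mp h2)
          · exact hqA ((Nat.prime_dvd_prime_iff_eq hq hm2).mp h1)
        exact stepval (e := 0) (f := -1) hdq0 hvd hBq0 (val_intCast_zero hBdvd) hTd0 hTv
          (Or.inl rfl) (Or.inl rfl) (by norm_num) heq (by rintro ⟨h, -⟩; norm_num at h)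
  ---------------------------------------------------------------------------
  -- Step II: |d| ∈ {1, m, A, mA}
  ---------------------------------------------------------------------------
  have hksf : Squarefree d.natAbs := Int.squarefree_natAbs.mpr hd
  have hk0 : d.natAbs ≠ 0 := Int.natAbs_ne_zero.mpr hd0
  have keyk : ∀ q : ℕ, q.Prime → q ∣ d.natAbs → q = m ∨ q = m + 16*n^2 := by
    intro q hq hqk
    refine key1 q hq ?_
    have h1 : (q:ℤ) ∣ (d.natAbs : ℤ) := Int.natCast_dvd_natCast.mpr hqk
    exact h1.trans (Int.natAbs_dvd.mpr dvd_rfl)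
  have hmm : ¬ (m*m ∣ d.natAbs) := by
    intro h
    have := hksf m h
    rw [Nat.isUnit_iff] at this
    omega
  have hAA : ¬ ((m + 16*n^2)*(m + 16*n^2) ∣ d.natAbs) := by
    intro h
    have := hksf (m + 16*n^2) h
    rw [Nat.isUnit_iff] at this
    omega
  have key2 : d.natAbs = 1 ∨ d.natAbs = m ∨ d.natAbs = m + 16*n^2
      ∨ d.natAbs = m*(m + 16*n^2) := by
    by_cases hmk : m ∣ d.natAbs
    · by_cases hAk : (m + 16*n^2) ∣ d.natAbs
      · right; right; right
        have hco : Nat.Coprime m (m + 16*n^2) :=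
          (Nat.coprime_primes hm1 hm2).mpr (by omega)
        obtain ⟨r, hr⟩ := hco.mul_dvd_of_dvd_of_dvd hmk hAk
        have hr1 : r = 1 := by
          rw [Nat.eq_one_iff_not_exists_prime_dvd]
          intro q hq hqr
          have hqk : q ∣ d.natAbs := hr ▸ (Dvd.dvd.mul_left hqr _)
          rcases keyk q hq hqk with hq' | hq'
          · subst hq'
            exact hmm (by rw [hr]; exact mul_dvd_mul (dvd_mul_right q _) hqr)
          · subst hq'
            refine hAA ?_
            rw [hr]
            obtain ⟨s, hs⟩ := hqr
            exact ⟨m*s, by rw [hs]; ring⟩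
        rw [hr, hr1, mul_one]
      · right; left
        obtain ⟨r, hr⟩ := hmk
        have hr1 : r = 1 := by
          rw [Nat.eq_one_iff_not_exists_prime_dvd]
          intro q hq hqr
          have hqk : q ∣ d.natAbs := hr ▸ (Dvd.dvd.mul_left hqr m)
          rcases keyk q hq hqk with hq' | hq'
          · subst hq'
            refine hmm ?_
            rw [hr]
            exact mul_dvd_mul_left q hqr
          · subst hq'
            exact hAk (hr ▸ (Dvd.dvd.mul_left hqr m))
        rw [hr, hr1, mul_one]
    · by_cases hAk : (m + 16*n^2) ∣ d.natAbs
      · right; right; left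
        obtain ⟨r, hr⟩ := hAk
        have hr1 : r = 1 := by
          rw [Nat.eq_one_iff_not_exists_prime_dvd]
          intro q hq hqr
          have hqk : q ∣ d.natAbs := hr ▸ (Dvd.dvd.mul_left hqr _)
          rcases keyk q hq hqk with hq' | hq'
          · subst hq'
            exact hmk (hr ▸ (Dvd.dvd.mul_left hqr _))
          · subst hq'
            exact hAA (hr ▸ mul_dvd_mul_left _ hqr)
        rw [hr, hr1, mul_one]
      · left
        rw [Nat.eq_one_iff_not_exists_prime_dvd]
        intro q hq hqk
        rcases keyk q hq hqk with hq' | hq'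
        · subst hq'; exact hmk hqk
        · subst hq'; exact hAk hqk
  ---------------------------------------------------------------------------
  -- Step III: eliminations at p = m + 16 n²
  ---------------------------------------------------------------------------

  -- shared valuation facts at p = m + 16 n²
  have hAne0 : ((m + 16*n^2 : ℕ) : ℤ) ≠ 0 := by positivity
  have hA2dvd : ∀ k : ℕ, ¬ (m + 16*n^2) ∣ k → ¬ ((m + 16*n^2 : ℕ):ℤ)^2 ∣ (((m + 16*n^2)*k : ℕ) : ℤ) := by
    intro k hk h
    have h1 : ((m + 16*n^2)^2 : ℕ) ∣ (m + 16*n^2)*k := by exact_mod_cast h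
    have h2 : (m + 16*n^2)*(m + 16*n^2) ∣ (m + 16*n^2)*k := by
      rwa [show ((m + 16*n^2)^2 : ℕ) = (m + 16*n^2)*(m + 16*n^2) by ring] at h1
    exact hk ((mul_dvd_mul_iff_left (by omega : (m + 16*n^2 : ℕ) ≠ 0)).mp h2)
  have hAdvd16C : ¬ (m + 16*n^2) ∣ 16*(m + 25*n^2) := by
    intro h
    rcases (Nat.Prime.dvd_mul hm2).mp h with h1 | h1
    · exact hAdvd16 h1
    · exact hAdvdC h1
  have hv16AC : ((((16*(m + 16*n^2)*(m + 25*n^2) : ℕ) : ℤ)) : ℚ_[m + 16*n^2]).valuation = 1 := by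
    refine val_intCast_eq 1 ?_ ?_
    · rw [pow_one]
      have : (m + 16*n^2 : ℕ) ∣ 16*(m + 16*n^2)*(m + 25*n^2) := ⟨16*(m + 25*n^2), by ring⟩
      exact_mod_cast this
    · have : (16*(m + 16*n^2)*(m + 25*n^2) : ℕ) = (m + 16*n^2)*(16*(m + 25*n^2)) := by ring
      rw [this]
      exact hA2dvd _ hAdvd16C
  have hvA1 : ((((m + 16*n^2 : ℕ) : ℤ)) : ℚ_[m + 16*n^2]).valuation = 1 := by
    refine val_intCast_eq 1 (by rw [pow_one]) ?_
    intro h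
    have h2 : ((m + 16*n^2)^2 : ℕ) ∣ (m + 16*n^2) := by exact_mod_cast h
    have h3 := Nat.le_of_dvd (by omega) h2
    nlinarith
  have hvmA : ((((m*(m + 16*n^2) : ℕ) : ℤ)) : ℚ_[m + 16*n^2]).valuation = 1 := by
    refine val_intCast_eq 1 ?_ ?_
    · rw [pow_one]
      have : (m + 16*n^2 : ℕ) ∣ m*(m + 16*n^2) := ⟨m, by ring⟩
      exact_mod_cast this
    · have : (m*(m + 16*n^2) : ℕ) = (m + 16*n^2)*m := by ring
      rw [this]
      exact hA2dvd _ hAdvdm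
  have h16AC0 : ((16*(m + 16*n^2)*(m + 25*n^2) : ℕ) : ℤ) ≠ 0 := by positivity
  have hE1 : d ≠ -1 := by
    intro hd1
    subst hd1
    rcases hloc (m + 16*n^2) with hs | ⟨x, y, hxy⟩
    · have hdvd : ¬ ((m + 16*n^2 : ℕ) : ℤ) ∣ (-1 : ℤ) := by
        intro hh
        rw [dvd_neg] at hh
        have := Int.isUnit_iff.mp (isUnit_of_dvd_one hh)
        omega
      have hsq := redSquare hdvd hs
      rw [Int.cast_neg, Int.cast_one] at hsq
      exact N1 hsq
    · have hid : y^2 - ((-1 : ℤ) : ℚ_[m + 16*n^2])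
            * (x^2 - ((5*(m + 16*n^2) : ℕ) : ℚ_[m + 16*n^2]))^2
          = ((((16*(m + 16*n^2)*(m + 25*n^2) : ℕ) : ℤ)) : ℚ_[m + 16*n^2]) := by
        rw [hxy]
        push_cast
        ring
      have h0 : ¬(y = 0 ∧ (x^2 - ((5*(m + 16*n^2) : ℕ) : ℚ_[m + 16*n^2])) = 0) := by
        rintro ⟨h1, h2⟩
        rw [h1, h2] at hid
        have hz : ((((16*(m + 16*n^2)*(m + 25*n^2) : ℕ) : ℤ)) : ℚ_[m + 16*n^2]) = 0 := by
          rw [← hid]; ring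
        rw [Int.cast_eq_zero] at hz
        exact h16AC0 hz
      have hN1' : ¬ IsSquare (((-1 : ℤ)) : ZMod (m + 16*n^2)) := by
        rw [Int.cast_neg, Int.cast_one]; exact N1
      have hdvd : ¬ ((m + 16*n^2 : ℕ) : ℤ) ∣ (-1 : ℤ) := by
        intro hh
        rw [dvd_neg] at hh
        have := Int.isUnit_iff.mp (isUnit_of_dvd_one hh)
        omega
      obtain ⟨-, hev⟩ := keyL hdvd hN1' y (x^2 - ((5*(m + 16*n^2) : ℕ) : ℚ_[m + 16*n^2])) h0
      rw [hid, hv16AC, Int.even_iff] at hev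
      norm_num at hev
  have hE2 : d ≠ (m : ℤ) := by
    intro hd1
    subst hd1
    have hdvdm' : ¬ ((m + 16*n^2 : ℕ) : ℤ) ∣ ((m : ℕ) : ℤ) := by
      rw [Int.natCast_dvd_natCast]; exact hAdvdm
    have hN2' : ¬ IsSquare ((((m : ℕ) : ℤ)) : ZMod (m + 16*n^2)) := by
      rw [Int.cast_natCast]; exact N2
    rcases hloc (m + 16*n^2) with hs | ⟨x, y, hxy⟩
    · exact hN2' (redSquare hdvdm' hs)
    · have hmq0 : ((m : ℕ) : ℚ_[m + 16*n^2]) ≠ 0 := Nat.cast_ne_zero.mpr (by omega)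
      have hid : (((m : ℕ) : ℚ_[m + 16*n^2])*x^2 + ((5*(m + 16*n^2) : ℕ) : ℚ_[m + 16*n^2]))^2
            - (((m : ℕ) : ℤ) : ℚ_[m + 16*n^2])*y^2
          = ((((16*(m + 16*n^2)*(m + 25*n^2) : ℕ) : ℤ)) : ℚ_[m + 16*n^2]) := by
        rw [hxy]
        push_cast
        field_simp
        ring
      have h0 : ¬((((m : ℕ) : ℚ_[m + 16*n^2])*x^2 + ((5*(m + 16*n^2) : ℕ) : ℚ_[m + 16*n^2])) = 0 ∧ y = 0) := by
        rintro ⟨h1, h2⟩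
        rw [h1, h2] at hid
        have hz : ((((16*(m + 16*n^2)*(m + 25*n^2) : ℕ) : ℤ)) : ℚ_[m + 16*n^2]) = 0 := by
          rw [← hid]; ring
        rw [Int.cast_eq_zero] at hz
        exact h16AC0 hz
      obtain ⟨-, hev⟩ := keyL hdvdm' hN2'
        (((m : ℕ) : ℚ_[m + 16*n^2])*x^2 + ((5*(m + 16*n^2) : ℕ) : ℚ_[m + 16*n^2])) y h0
      rw [hid, hv16AC, Int.even_iff] at hev
      norm_num at hev
  have hE3 : d ≠ ((m + 16*n^2 : ℕ) : ℤ) := by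
    intro hd1
    subst hd1
    rcases hloc (m + 16*n^2) with hs | ⟨x, y, hxy⟩
    · have hcast0 : ((((m + 16*n^2 : ℕ) : ℤ)) : ℚ_[m + 16*n^2]) ≠ 0 :=
        Int.cast_ne_zero.mpr hAne0
      have hev := even_val_of_isSquare hcast0 hs
      rw [hvA1, Int.even_iff] at hev
      norm_num at hev
    · have hAq0 : ((m + 16*n^2 : ℕ) : ℚ_[m + 16*n^2]) ≠ 0 := Nat.cast_ne_zero.mpr (by omega)
      have hAq0' : (m : ℚ_[m + 16*n^2]) + 16*(n : ℚ_[m + 16*n^2])^2 ≠ 0 := by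
        push_cast at hAq0
        exact hAq0
      have hid : y^2 - ((-(16*(m + 25*n^2 : ℕ)) : ℤ) : ℚ_[m + 16*n^2])*(1 : ℚ_[m + 16*n^2])^2
          = ((((m + 16*n^2 : ℕ) : ℤ)) : ℚ_[m + 16*n^2])*(x^2 + 5)^2 := by
        rw [hxy]
        push_cast
        field_simp [hAq0']
        ring
      have hdvd3 : ¬ ((m + 16*n^2 : ℕ) : ℤ) ∣ (-(16*(m + 25*n^2 : ℕ)) : ℤ) := by
        intro hh
        rw [dvd_neg] at hh
        have : (m + 16*n^2 : ℕ) ∣ 16*(m + 25*n^2) := by exact_mod_cast hh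
        exact hAdvd16C this
      have h0 : ¬(y = 0 ∧ (1 : ℚ_[m + 16*n^2]) = 0) := by
        rintro ⟨-, h2⟩
        exact one_ne_zero h2
      obtain ⟨hne, hev⟩ := keyL hdvd3 N3 y (1 : ℚ_[m + 16*n^2]) h0
      rw [hid] at hne hev
      by_cases hw : x^2 + (5 : ℚ_[m + 16*n^2]) = 0
      · rw [hw] at hne
        exact hne (by ring)
      · rw [Padic.valuation_mul (Int.cast_ne_zero.mpr hAne0) (pow_ne_zero 2 hw),
          hvA1, val_sq hw, Int.even_iff] at hev
        omega
  have hE4 : d ≠ -((m*(m + 16*n^2) : ℕ) : ℤ) := by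
    intro hd1
    subst hd1
    have hmA0 : ((m*(m + 16*n^2) : ℕ) : ℤ) ≠ 0 := by positivity
    rcases hloc (m + 16*n^2) with hs | ⟨x, y, hxy⟩
    · have hcast0 : ((-((m*(m + 16*n^2) : ℕ) : ℤ) : ℤ) : ℚ_[m + 16*n^2]) ≠ 0 := by
        rw [Int.cast_ne_zero]
        exact neg_ne_zero.mpr hmA0
      have hev := even_val_of_isSquare hcast0 hs
      rw [Int.cast_neg, val_neg, hvmA, Int.even_iff] at hev
      norm_num at hev
    · have hdq0' : ((-((m*(m + 16*n^2) : ℕ) : ℤ) : ℤ) : ℚ_[m + 16*n^2]) ≠ 0 := by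
        rw [Int.cast_ne_zero]
        exact neg_ne_zero.mpr hmA0
      have hid : (((m : ℕ) : ℚ_[m + 16*n^2])*y)^2
            - ((16*(m + 25*n^2 : ℕ)*m : ℤ) : ℚ_[m + 16*n^2])*(1 : ℚ_[m + 16*n^2])^2
          = -(((((m*(m + 16*n^2) : ℕ) : ℤ)) : ℚ_[m + 16*n^2])
            * (((m : ℕ) : ℚ_[m + 16*n^2])*x^2 - 5)^2) := by
        have hmq0' : (m : ℚ_[m + 16*n^2]) ≠ 0 := Nat.cast_ne_zero.mpr (by omega)
        have hAq0' : (m : ℚ_[m + 16*n^2]) + 16*(n : ℚ_[m + 16*n^2])^2 ≠ 0 := by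
          have hAq0 : ((m + 16*n^2 : ℕ) : ℚ_[m + 16*n^2]) ≠ 0 := Nat.cast_ne_zero.mpr (by omega)
          push_cast at hAq0
          exact hAq0
        rw [mul_pow, hxy]
        push_cast
        field_simp [hmq0', hAq0']
        ring
      have hdvd4 : ¬ ((m + 16*n^2 : ℕ) : ℤ) ∣ (16*(m + 25*n^2 : ℕ)*m : ℤ) := by
        intro hh
        have h1 : (m + 16*n^2 : ℕ) ∣ 16*(m + 25*n^2)*m := by exact_mod_cast hh
        rcases (Nat.Prime.dvd_mul hm2).mp h1 with h2 | h2
        · exact hAdvd16C h2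
        · exact hAdvdm h2
      have h0 : ¬(((m : ℕ) : ℚ_[m + 16*n^2])*y = 0 ∧ (1 : ℚ_[m + 16*n^2]) = 0) := by
        rintro ⟨-, h2⟩
        exact one_ne_zero h2
      obtain ⟨hne, hev⟩ := keyL hdvd4 N4 (((m : ℕ) : ℚ_[m + 16*n^2])*y) (1 : ℚ_[m + 16*n^2]) h0
      rw [hid] at hne hev
      by_cases hw : ((m : ℕ) : ℚ_[m + 16*n^2])*x^2 - 5 = 0
      · rw [hw] at hne
        exact hne (by ring)
      · rw [val_neg, Padic.valuation_mul (Int.cast_ne_zero.mpr hmA0) (pow_ne_zero 2 hw),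
          hvmA, val_sq hw, Int.even_iff] at hev
        omega
  ---------------------------------------------------------------------------
  -- conclusion
  ---------------------------------------------------------------------------
  simp only [Set.mem_insert_iff, Set.mem_singleton_iff]
  rcases Int.natAbs_eq d with hsgn | hsgn <;>
    rcases key2 with hk | hk | hk | hk <;> rw [hk] at hsgn
  · left; exact_mod_cast hsgn
  · exact absurd (by exact_mod_cast hsgn) hE2
  · exact absurd (by exact_mod_cast hsgn) hE3
  · right; right; right; exact_mod_cast hsgn
  · exact absurd (by exact_mod_cast hsgn) hE1
  · right; left; exact_mod_cast hsgn
  · right; right; left; exact_mod_cast hsgn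
  · exact absurd (by exact_mod_cast hsgn) hE4
end

section
/- Let d be a squarefree integer such that: (i) for every prime p, either d is a square in ℚ_p or there exist x, y ∈ ℚ_p satisfying y² = d·x⁴ − 5(m+16n²)·x² + 4(m+16n²)(m+25n²)/d; and (ii) either d > 0 or there exist real numbers x, y satisfying y² = d·x⁴ − 5(m+16n²)·x² + 4(m+16n²)(m+25n²)/d. Then d ∈ {1, m+16n², m+25n², (m+16n²)(m+25n²)}. -/
private lemma padic_dom {p : ℕ} [Fact p.Prime] {a b c : ℚ_[p]} (hb : ‖b‖ < ‖a‖) (hc : ‖c‖ < ‖a‖) :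
    ‖a + b + c‖ = ‖a‖ := by
  have h1 : ‖b + c‖ < ‖a‖ := lt_of_le_of_lt (Padic.nonarchimedean _ _) (max_lt hb hc)
  rw [add_assoc, Padic.add_eq_max_of_ne h1.ne', max_eq_left h1.le]

private lemma padic_sq_ne {p : ℕ} [hp : Fact p.Prime] (y : ℚ_[p]) (j : ℤ)
    (h : ‖y ^ 2‖ = (p:ℝ) ^ (2*j+1)) : False := by
  have hp1 : (1:ℝ) < p := by exact_mod_cast hp.out.one_lt
  have hy : y ≠ 0 := by
    rintro rfl
    rw [zero_pow two_ne_zero, norm_zero] at h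
    have : (0:ℝ) < (p:ℝ) ^ (2*j+1) := by positivity
    linarith
  rw [norm_pow, Padic.norm_eq_zpow_neg_valuation hy, ← zpow_natCast ((p:ℝ) ^ (-y.valuation)), ← zpow_mul] at h
  have := zpow_right_injective₀ (by linarith : (0:ℝ) < p) (by linarith) h
  omega

private lemma int_unit_norm {p : ℕ} [hp : Fact p.Prime] {e : ℤ} (h : ¬ (p:ℤ) ∣ e) :
    ‖(e : ℚ_[p])‖ = 1 :=
  le_antisymm (Padic.norm_int_le_one e)
    (not_lt.1 fun hlt => h ((Padic.norm_intCast_lt_one_iff (k := e)).1 hlt))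

private lemma zmod8_sq : ∀ a : ZMod (2^3), (∃ b, a * b = 1) → a^2 = 1 := by decide

private lemma zmod8_key : ∀ a u w : ZMod (2^3), a^2 = 1 → u^2 = 1 → w^2 = 1 →
    a * w^2 ≠ 2*a^2*u^4 - 5*3*(a*u^2) + 2*3*3 := by decide


private lemma odd_case {p : ℕ} [hp : Fact p.Prime] (S C e : ℤ)
    (hC : ¬ (p:ℤ) ∣ C) (he : ¬ (p:ℤ) ∣ e) (x y : ℚ_[p])
    (heq : y ^ 2 = (((p:ℤ)*e : ℤ) : ℚ_[p]) * x ^ 4 - (S : ℚ_[p]) * x ^ 2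
      + (C : ℚ_[p]) / (((p:ℤ)*e : ℤ) : ℚ_[p])) : False := by
  have hp1 : (1:ℝ) < p := by exact_mod_cast hp.out.one_lt
  have hp0 : (0:ℝ) < p := by linarith
  have hdqn : ‖(((p:ℤ)*e : ℤ) : ℚ_[p])‖ = (p:ℝ)⁻¹ := by
    push_cast
    rw [norm_mul, Padic.norm_p, int_unit_norm he, mul_one]
  set dq : ℚ_[p] := (((p:ℤ)*e : ℤ) : ℚ_[p]) with hdq
  have hCn : ‖(C:ℚ_[p])‖ = 1 := int_unit_norm hC
  have hSn : ‖(S:ℚ_[p])‖ ≤ 1 := Padic.norm_int_le_one S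
  have hx4 : ‖dq * x^4‖ = (p:ℝ)⁻¹ * ‖x‖^4 := by rw [norm_mul, norm_pow, hdqn]
  have hCd : ‖(C:ℚ_[p]) / dq‖ = (p:ℝ) := by rw [norm_div, hCn, hdqn, one_div, inv_inv]
  have hpinv : (p:ℝ)⁻¹ < 1 := inv_lt_one_of_one_lt₀ hp1
  have hpinv0 : (0:ℝ) ≤ (p:ℝ)⁻¹ := by positivity
  by_cases hxle : ‖x‖ ≤ 1
  · have t4 : ‖x‖^4 ≤ 1 := pow_le_one₀ (norm_nonneg x) hxle
    have t2 : ‖x‖^2 ≤ 1 := pow_le_one₀ (norm_nonneg x) hxle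
    have h1 : ‖dq * x^4‖ < ‖(C:ℚ_[p])/dq‖ := by
      rw [hx4, hCd]
      nlinarith [pow_nonneg (norm_nonneg x) 4]
    have h2 : ‖-((S:ℚ_[p]) * x^2)‖ < ‖(C:ℚ_[p])/dq‖ := by
      rw [hCd, norm_neg, norm_mul, norm_pow]
      nlinarith [norm_nonneg (S:ℚ_[p]), pow_nonneg (norm_nonneg x) 2]
    have heq' : y^2 = (C:ℚ_[p])/dq + dq * x^4 + (-((S:ℚ_[p]) * x^2)) := by rw [heq]; ring
    apply padic_sq_ne y 0
    rw [heq', padic_dom h1 h2, hCd]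
    norm_num
  · push_neg at hxle
    have hx0 : x ≠ 0 := by intro h; rw [h, norm_zero] at hxle; linarith
    set v := x.valuation with hv
    have hxv : ‖x‖ = (p:ℝ) ^ (-v) := Padic.norm_eq_zpow_neg_valuation hx0
    have hvle : 1 ≤ -v := by
      have h0 : (p:ℝ)^(0:ℤ) < (p:ℝ)^(-v) := by rw [zpow_zero, ← hxv]; exact hxle
      have := (zpow_lt_zpow_iff_right₀ hp1).1 h0
      omega
    have hna : ‖dq * x^4‖ = (p:ℝ) ^ (-1 + -v*4) := by
      rw [hx4, hxv, ← zpow_natCast ((p:ℝ)^(-v)), ← zpow_mul, ← zpow_neg_one,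
        ← zpow_add₀ (ne_of_gt hp0)]
      norm_num
    have h1 : ‖-((S:ℚ_[p]) * x^2)‖ < ‖dq * x^4‖ := by
      have hle : ‖-((S:ℚ_[p]) * x^2)‖ ≤ (p:ℝ) ^ (-v*2) := by
        rw [norm_neg, norm_mul, norm_pow, hxv, ← zpow_natCast ((p:ℝ)^(-v)), ← zpow_mul]
        have : (-v) * ((2:ℕ):ℤ) = -v*2 := by norm_num
        rw [this]
        exact mul_le_of_le_one_left (by positivity) hSn
      rw [hna]
      exact lt_of_le_of_lt hle ((zpow_lt_zpow_iff_right₀ hp1).2 (by omega))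
    have h2 : ‖(C:ℚ_[p]) / dq‖ < ‖dq * x^4‖ := by
      calc ‖(C:ℚ_[p]) / dq‖ = (p:ℝ)^(1:ℤ) := by rw [hCd, zpow_one]
        _ < (p:ℝ) ^ (-1 + -v*4) := (zpow_lt_zpow_iff_right₀ hp1).2 (by omega)
        _ = ‖dq * x^4‖ := hna.symm
    have heq' : y^2 = dq * x^4 + (-((S:ℚ_[p]) * x^2)) + (C:ℚ_[p])/dq := by rw [heq]; ring
    apply padic_sq_ne y (-v*2 - 1)
    rw [heq', padic_dom h1 h2, hna]
    congr 1
    ring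


private lemma two_case (A B : ℕ) (hA8 : A % 8 = 3) (hB8 : B % 8 = 3) (e : ℤ)
    (he : ¬ (2:ℤ) ∣ e) (x y : ℚ_[2])
    (heq : y ^ 2 = (((2:ℤ)*e : ℤ) : ℚ_[2]) * x ^ 4 - ((5*A:ℤ) : ℚ_[2]) * x ^ 2
      + ((4*A*B:ℤ) : ℚ_[2]) / (((2:ℤ)*e : ℤ) : ℚ_[2])) : False := by
  have hA2 : ¬ (2:ℤ) ∣ (A:ℤ) := by omega
  have hB2 : ¬ (2:ℤ) ∣ (B:ℤ) := by omega
  have hn2 : ‖(2:ℚ_[2])‖ = (2:ℝ)⁻¹ := by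
    have h1 : ((2:ℕ):ℚ_[2]) = (2:ℚ_[2]) := by norm_num
    have h2 := Padic.norm_p (p := 2)
    rw [h1] at h2; rw [h2]; norm_num
  have hdqn : ‖(((2:ℤ)*e : ℤ) : ℚ_[2])‖ = (2:ℝ)⁻¹ := by
    push_cast
    rw [norm_mul, int_unit_norm he, mul_one, hn2]
  set dq : ℚ_[2] := (((2:ℤ)*e : ℤ) : ℚ_[2]) with hdq
  have hCn : ‖((4*A*B:ℤ):ℚ_[2])‖ = (2:ℝ)⁻¹ * (2:ℝ)⁻¹ := by
    have : ((4*A*B:ℤ):ℚ_[2]) = 2 * 2 * ((A:ℤ):ℚ_[2]) * ((B:ℤ):ℚ_[2]) := by push_cast; ring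
    rw [this, norm_mul, norm_mul, norm_mul, int_unit_norm hA2, int_unit_norm hB2, hn2]
    ring
  have hSn : ‖((5*A:ℤ):ℚ_[2])‖ = 1 := int_unit_norm (by omega)
  have hx4 : ‖dq * x^4‖ = (2:ℝ)⁻¹ * ‖x‖^4 := by rw [norm_mul, norm_pow, hdqn]
  have hCd : ‖((4*A*B:ℤ):ℚ_[2]) / dq‖ = (2:ℝ)⁻¹ := by
    rw [norm_div, hCn, hdqn]
    norm_num
  rcases lt_trichotomy ‖x‖ 1 with hxlt | hxeq | hxgt
  · -- ‖x‖ ≤ 1/2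
    have hxle : ‖x‖ ≤ (2:ℝ)⁻¹ := by
      have h := (Padic.norm_le_pow_iff_norm_lt_pow_add_one x (-1)).2
      have : ‖x‖ < ((2:ℕ):ℝ) ^ ((-1:ℤ)+1) := by norm_num; exact hxlt
      have hh := h this
      calc ‖x‖ ≤ ((2:ℕ):ℝ)^(-1:ℤ) := hh
        _ = (2:ℝ)⁻¹ := by norm_num
    have h1 : ‖dq * x^4‖ < ‖((4*A*B:ℤ):ℚ_[2]) / dq‖ := by
      rw [hx4, hCd]
      have h4 : ‖x‖^4 ≤ ((2:ℝ)⁻¹)^4 := pow_le_pow_left₀ (norm_nonneg x) hxle 4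
      nlinarith [pow_nonneg (norm_nonneg x) 4]
    have h2 : ‖-(((5*A:ℤ):ℚ_[2]) * x^2)‖ < ‖((4*A*B:ℤ):ℚ_[2]) / dq‖ := by
      rw [hCd, norm_neg, norm_mul, norm_pow, hSn, one_mul]
      have h4 : ‖x‖^2 ≤ ((2:ℝ)⁻¹)^2 := pow_le_pow_left₀ (norm_nonneg x) hxle 2
      nlinarith [pow_nonneg (norm_nonneg x) 2]
    have heq' : y^2 = ((4*A*B:ℤ):ℚ_[2])/dq + dq * x^4 + (-(((5*A:ℤ):ℚ_[2]) * x^2)) := by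
      rw [heq]; ring
    apply padic_sq_ne y (-1)
    rw [heq', padic_dom h1 h2, hCd]
    norm_num
  · have hx1 : ‖x‖ = 1 := hxeq
    have h1 : ‖dq * x^4‖ < ‖-(((5*A:ℤ):ℚ_[2]) * x^2)‖ := by
      rw [hx4, hx1, norm_neg, norm_mul, norm_pow, hSn, hx1]; norm_num
    have h2 : ‖((4*A*B:ℤ):ℚ_[2])/dq‖ < ‖-(((5*A:ℤ):ℚ_[2]) * x^2)‖ := by
      rw [hCd, norm_neg, norm_mul, norm_pow, hSn, hx1]; norm_num
    have heq' : y^2 = -(((5*A:ℤ):ℚ_[2]) * x^2) + dq * x^4 + ((4*A*B:ℤ):ℚ_[2])/dq := by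
      rw [heq]; ring
    have hy2 : ‖y^2‖ = 1 := by
      rw [heq', padic_dom h1 h2, norm_neg, norm_mul, norm_pow, hSn, hx1]; norm_num
    have hy1 : ‖y‖ = 1 := by
      rw [norm_pow] at hy2
      have h0 := norm_nonneg y
      have hz : (‖y‖ - 1) * (‖y‖ + 1) = 0 := by nlinarith
      rcases mul_eq_zero.1 hz with h | h
      · linarith
      · linarith
    have heZ : e ≠ 0 := fun h => he (h ▸ dvd_zero 2)
    have he0 : (e:ℚ_[2]) ≠ 0 := Int.cast_ne_zero.2 heZ
    have he2 : (e:ℚ_[2])*y^2 = 2*(e:ℚ_[2])^2*x^4 - 5*(A:ℚ_[2])*((e:ℚ_[2])*x^2)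
        + 2*(A:ℚ_[2])*(B:ℚ_[2]) := by
      rw [heq, hdq]
      push_cast
      field_simp
      ring
    clear heq heq' hy2 hx4 hCd hCn hSn hdqn hxeq h1 h2
    set X : ℤ_[2] := ⟨x, hx1.le⟩ with hX
    set Y : ℤ_[2] := ⟨y, hy1.le⟩ with hY
    have key : (e : ℤ_[2]) * Y^2 = 2*(e:ℤ_[2])^2*X^4 - 5*(A:ℤ_[2])*((e:ℤ_[2])*X^2)
        + 2*(A:ℤ_[2])*(B:ℤ_[2]) := by
      apply Subtype.coe_injective
      push_cast
      exact he2
    have hXu : IsUnit X := PadicInt.isUnit_iff.2 (by rwa [PadicInt.norm_def])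
    have hYu : IsUnit Y := PadicInt.isUnit_iff.2 (by rwa [PadicInt.norm_def])
    have hEu : IsUnit (e : ℤ_[2]) := PadicInt.isUnit_iff.2 (by
      rw [PadicInt.norm_intCast_eq_padic_norm]
      exact int_unit_norm (by exact_mod_cast he))
    set φ := PadicInt.toZModPow (p := 2) 3 with hφ
    have h8 := congrArg φ key
    simp only [map_mul, map_add, map_sub, map_pow, map_ofNat, map_intCast, map_natCast] at h8
    have hA3 : ((A : ℕ) : ZMod (2^3)) = 3 := by
      have h : ((A % 8 : ℕ) : ZMod (2^3)) = ((A :ℕ) : ZMod (2^3)) := by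
        exact_mod_cast ZMod.natCast_mod A 8
      rw [← h, hA8]; norm_num
    have hB3 : ((B : ℕ) : ZMod (2^3)) = 3 := by
      have h : ((B % 8 : ℕ) : ZMod (2^3)) = ((B :ℕ) : ZMod (2^3)) := by
        exact_mod_cast ZMod.natCast_mod B 8
      rw [← h, hB8]; norm_num
    rw [hA3, hB3] at h8
    have sq1 : (φ X)^2 = 1 := zmod8_sq _ ⟨φ ((hXu.unit⁻¹ : Units ℤ_[2]) : ℤ_[2]), by
      rw [← map_mul]; simp⟩
    have sq2 : (φ Y)^2 = 1 := zmod8_sq _ ⟨φ ((hYu.unit⁻¹ : Units ℤ_[2]) : ℤ_[2]), by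
      rw [← map_mul]; simp⟩
    have sq3 : (φ (e:ℤ_[2]))^2 = 1 := zmod8_sq _ ⟨φ ((hEu.unit⁻¹ : Units ℤ_[2]) : ℤ_[2]), by
      rw [← map_mul]; simp⟩
    rw [map_intCast] at sq3
    exact zmod8_key _ _ _ sq3 sq1 sq2 h8
  · -- ‖x‖ > 1
    have hx0 : x ≠ 0 := by intro h; rw [h, norm_zero] at hxgt; linarith
    set v := x.valuation with hv
    have hxv : ‖x‖ = (2:ℝ) ^ (-v) := by
      rw [Padic.norm_eq_zpow_neg_valuation hx0]; norm_num; exact hv.symm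
    have h21 : (1:ℝ) < (2:ℝ) := by norm_num
    have hvle : 1 ≤ -v := by
      have h0 : (2:ℝ)^(0:ℤ) < (2:ℝ)^(-v) := by rw [zpow_zero, ← hxv]; exact hxgt
      have := (zpow_lt_zpow_iff_right₀ h21).1 h0
      omega
    have hna : ‖dq * x^4‖ = (2:ℝ) ^ (-1 + -v*4) := by
      rw [hx4, hxv, ← zpow_natCast ((2:ℝ)^(-v)), ← zpow_mul, ← zpow_neg_one,
        ← zpow_add₀ (by norm_num : (2:ℝ) ≠ 0)]
      norm_num
    have h1 : ‖-(((5*A:ℤ):ℚ_[2]) * x^2)‖ < ‖dq * x^4‖ := by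
      have hle : ‖-(((5*A:ℤ):ℚ_[2]) * x^2)‖ ≤ (2:ℝ) ^ (-v*2) := by
        rw [norm_neg, norm_mul, norm_pow, hxv, ← zpow_natCast ((2:ℝ)^(-v)), ← zpow_mul, hSn,
          one_mul]
        exact le_of_eq (by norm_num)
      rw [hna]
      exact lt_of_le_of_lt hle ((zpow_lt_zpow_iff_right₀ h21).2 (by omega))
    have h2 : ‖((4*A*B:ℤ):ℚ_[2]) / dq‖ < ‖dq * x^4‖ := by
      calc ‖((4*A*B:ℤ):ℚ_[2]) / dq‖ = (2:ℝ)^(-1:ℤ) := by rw [hCd]; norm_num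
        _ < (2:ℝ) ^ (-1 + -v*4) := (zpow_lt_zpow_iff_right₀ h21).2 (by omega)
        _ = ‖dq * x^4‖ := hna.symm
    have heq' : y^2 = dq * x^4 + (-(((5*A:ℤ):ℚ_[2]) * x^2)) + ((4*A*B:ℤ):ℚ_[2])/dq := by
      rw [heq]; ring
    apply padic_sq_ne y (-v*2 - 1)
    rw [heq', padic_dom h1 h2, hna]
    push_cast
    congr 1
    ring


private lemma not_square {p : ℕ} [hp : Fact p.Prime] (e : ℤ) (he : ¬(p:ℤ) ∣ e)
    (h : IsSquare ((((p:ℤ)*e : ℤ)) : ℚ_[p])) : False := by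
  obtain ⟨c, hc⟩ := h
  apply padic_sq_ne c (-1)
  rw [sq, ← hc]
  have : ‖(((p:ℤ)*e : ℤ) : ℚ_[p])‖ = (p:ℝ)⁻¹ := by
    push_cast
    rw [norm_mul, Padic.norm_p, int_unit_norm he, mul_one]
  rw [this, show (2*(-1)+1 : ℤ) = -1 by norm_num, zpow_neg_one]

private lemma squarefree_factor (D A B : ℕ) (hD : Squarefree D) (hA : A.Prime) (hB : B.Prime)
    (hAB : A ≠ B) (hfac : ∀ q : ℕ, q.Prime → q ∣ D → q = A ∨ q = B) :
    D = 1 ∨ D = A ∨ D = B ∨ D = A*B := by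
  have hsq : ∀ q : ℕ, q.Prime → ¬ q*q ∣ D := fun q hq hdvd =>
    hq.one_lt.ne' (Nat.isUnit_iff.1 (hD q hdvd))
  by_cases hAd : A ∣ D <;> by_cases hBd : B ∣ D
  · right; right; right
    obtain ⟨k, hk⟩ := ((Nat.coprime_primes hA hB).2 hAB).mul_dvd_of_dvd_of_dvd hAd hBd
    rcases eq_or_ne k 1 with rfl | hk1
    · omega
    obtain ⟨q, hq, hqk⟩ := Nat.exists_prime_and_dvd hk1
    have hqD : q ∣ D := hk ▸ Dvd.dvd.mul_left hqk (A*B)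
    rcases hfac q hq hqD with h | h
    · subst h; exact absurd (hk ▸ mul_dvd_mul (dvd_mul_right q B) hqk) (hsq q hq)
    · subst h; exact absurd (hk ▸ mul_dvd_mul (dvd_mul_left q A) hqk) (hsq q hq)
  · right; left
    obtain ⟨k, hk⟩ := hAd
    rcases eq_or_ne k 1 with rfl | hk1
    · omega
    obtain ⟨q, hq, hqk⟩ := Nat.exists_prime_and_dvd hk1
    have hqD : q ∣ D := hk ▸ Dvd.dvd.mul_left hqk A
    rcases hfac q hq hqD with h | h
    · subst h; exact absurd (hk ▸ mul_dvd_mul_left q hqk) (hsq q hq)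
    · subst h; exact (hBd (hk ▸ hqk.mul_left A)).elim
  · right; right; left
    obtain ⟨k, hk⟩ := hBd
    rcases eq_or_ne k 1 with rfl | hk1
    · omega
    obtain ⟨q, hq, hqk⟩ := Nat.exists_prime_and_dvd hk1
    have hqD : q ∣ D := hk ▸ Dvd.dvd.mul_left hqk B
    rcases hfac q hq hqD with h | h
    · subst h; exact (hAd (hk ▸ hqk.mul_left B)).elim
    · subst h; exact absurd (hk ▸ mul_dvd_mul_left q hqk) (hsq q hq)
  · left
    rcases eq_or_ne D 1 with rfl | hD1
    · rfl
    obtain ⟨q, hq, hqD⟩ := Nat.exists_prime_and_dvd hD1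
    rcases hfac q hq hqD with h | h
    · subst h; exact absurd hqD hAd
    · subst h; exact absurd hqD hBd

/-- Lemma 3.2: if `d` is a squarefree integer such that the curve
`C'_d : y² = d·x⁴ − 5(m+16n²)·x² + 4(m+16n²)(m+25n²)/d` has points over every completion of `ℚ`
(where a point at infinity over `ℚ_v` exists iff `d` is a square in `ℚ_v`), then
`d ∈ {1, m+16n², m+25n², (m+16n²)(m+25n²)}`. -/
theorem selmer_phihat_bound (m n : ℕ) (hm : 0 < m) (hn : 0 < n)
    (hm1 : Nat.Prime m) (hm2 : Nat.Prime (m + 16 * n ^ 2)) (hm3 : Nat.Prime (m + 25 * n ^ 2))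
    (hc1 : m % 24 = 11) (hc2 : (m + 16 * n ^ 2) % 24 = 11) (hc3 : (m + 25 * n ^ 2) % 24 = 11)
    (d : ℤ) (hd : Squarefree d)
    (hloc : ∀ (p : ℕ) [Fact p.Prime], IsSquare (d : ℚ_[p]) ∨
      ∃ x y : ℚ_[p], y ^ 2 = (d : ℚ_[p]) * x ^ 4 - 5 * ((m : ℚ_[p]) + 16 * n ^ 2) * x ^ 2
        + 4 * ((m : ℚ_[p]) + 16 * n ^ 2) * ((m : ℚ_[p]) + 25 * n ^ 2) / d)
    (hreal : 0 < d ∨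
      ∃ x y : ℝ, y ^ 2 = (d : ℝ) * x ^ 4 - 5 * ((m : ℝ) + 16 * n ^ 2) * x ^ 2
        + 4 * ((m : ℝ) + 16 * n ^ 2) * ((m : ℝ) + 25 * n ^ 2) / d) :
    d ∈ ({1, (m : ℤ) + 16 * n ^ 2, (m : ℤ) + 25 * n ^ 2,
      ((m : ℤ) + 16 * n ^ 2) * ((m : ℤ) + 25 * n ^ 2)} : Set ℤ) := by
  have hn1 : 1 ≤ n^2 := Nat.one_le_iff_ne_zero.2 (pow_ne_zero 2 hn.ne')
  have hA8 : (m + 16*n^2) % 8 = 3 := by omega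
  have hB8 : (m + 25*n^2) % 8 = 3 := by omega
  have hdne : d ≠ 0 := hd.ne_zero
  have hdpos : 0 < d := by
    rcases hreal with h | ⟨x, y, hxy⟩
    · exact h
    by_contra hle
    push_neg at hle
    have hdlt : (d:ℝ) < 0 := by
      have : d < 0 := lt_of_le_of_ne hle hdne
      exact_mod_cast this
    have hm1R : (1:ℝ) ≤ m := by exact_mod_cast hm
    have hn1R : (1:ℝ) ≤ (n:ℝ)^2 := by exact_mod_cast hn1
    have hApos : (0:ℝ) < (m:ℝ) + 16*n^2 := by nlinarith
    have hBpos : (0:ℝ) < (m:ℝ) + 25*n^2 := by nlinarith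
    have hdiv : 4*((m:ℝ)+16*n^2)*((m:ℝ)+25*n^2)/d < 0 :=
      div_neg_of_pos_of_neg (by positivity) hdlt
    have h1 : (d:ℝ)*x^4 ≤ 0 :=
      mul_nonpos_iff.2 (Or.inr ⟨hdlt.le, by positivity⟩)
    have h2 : (0:ℝ) ≤ 5*((m:ℝ)+16*n^2)*x^2 := by positivity
    nlinarith [sq_nonneg y]
  have hmain : ∀ q : ℕ, q.Prime → (q:ℤ) ∣ d → q = m+16*n^2 ∨ q = m+25*n^2 := by
    intro q hq hqd
    haveI : Fact q.Prime := ⟨hq⟩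
    by_contra hne
    push_neg at hne
    obtain ⟨hne1, hne2⟩ := hne
    obtain ⟨e, hde⟩ := hqd
    have he : ¬ (q:ℤ) ∣ e := by
      rintro ⟨k, hk⟩
      have hdd : (q:ℤ)*(q:ℤ) ∣ d := ⟨k, by rw [hde, hk]; ring⟩
      have := Int.isUnit_iff.1 (hd _ hdd)
      have hq2 := hq.two_le
      omega
    rcases hloc q with hsq | ⟨x, y, hxy⟩
    · rw [hde] at hsq
      exact not_square e he hsq
    · rw [hde] at hxy
      by_cases hq2 : q = 2
      · subst hq2
        apply two_case (m+16*n^2) (m+25*n^2) hA8 hB8 e he x y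
        push_cast at hxy ⊢
        linear_combination hxy
      · have hN : ¬ q ∣ 4*(m+16*n^2)*(m+25*n^2) := by
          intro hdvd
          rcases (Nat.Prime.dvd_mul hq).1 hdvd with h | h
          · rcases (Nat.Prime.dvd_mul hq).1 h with h4 | hA
            · have h22 : q ∣ 2*2 := by
                have : (4:ℕ) = 2*2 := by norm_num
                exact this ▸ h4
              rcases (Nat.Prime.dvd_mul hq).1 h22 with h2' | h2' <;>
                exact hq2 ((Nat.prime_dvd_prime_iff_eq hq Nat.prime_two).1 h2')
            · exact hne1 ((Nat.prime_dvd_prime_iff_eq hq hm2).1 hA)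
          · exact hne2 ((Nat.prime_dvd_prime_iff_eq hq hm3).1 h)
        have hCd : ¬ (q:ℤ) ∣ ((4*(m+16*n^2)*(m+25*n^2) : ℕ) : ℤ) := by
          intro hdvd
          exact hN (by exact_mod_cast hdvd)
        apply odd_case ((5*(m+16*n^2) : ℕ) : ℤ) ((4*(m+16*n^2)*(m+25*n^2) : ℕ) : ℤ) e hCd he x y
        push_cast at hxy ⊢
        linear_combination hxy
  lift d to ℕ using hdpos.le with D hD
  have hDsf : Squarefree D := Int.squarefree_natCast.1 hd
  have hABne : m+16*n^2 ≠ m+25*n^2 := by omega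
  have hfac : ∀ q : ℕ, q.Prime → q ∣ D → q = m+16*n^2 ∨ q = m+25*n^2 := fun q hq hqD =>
    hmain q hq (Int.natCast_dvd_natCast.2 hqD)
  rcases squarefree_factor D (m+16*n^2) (m+25*n^2) hDsf hm2 hm3 hABne hfac with h | h | h | h <;>
    subst h <;>
    simp only [Set.mem_insert_iff, Set.mem_singleton_iff] <;>
    push_cast <;> simp
end

section
/- The point Q₁ = (−(m+16n²), 12n(m+16n²)) lies on E', and for every rational point (x, y) on E' with x ≠ 0, there exist d ∈ {1, −m, −(m+16n²), m(m+16n²)} and a rational number r such that x = d·r². -/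
private lemma zmod3_aux : ∀ u v : ZMod 3, u ≠ 0 → v ≠ 0 → u ^ 2 ≠ 2 * v ^ 2 := by decide

private lemma modA₁ {A m : ℕ} (hA : A.Prime) {a T q S U D : ℤ}
    (hT : T = a ^ 2 + 10 * (A : ℤ) * a * q + 9 * (m : ℤ) * (A : ℤ) * q ^ 2)
    (ha : a = D * S ^ 2) (hTT : T = D * U ^ 2)
    (hcop : IsCoprime a q)
    (hAm : ¬ (A : ℤ) ∣ 9 * (m : ℤ))
    (hD : ¬ IsSquare ((D : ZMod A))) : False := by
  haveI := Fact.mk hA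
  have hAZ : Prime (A : ℤ) := Int.prime_iff_natAbs_prime.mpr (by simpa using hA)
  by_cases hU : (A : ℤ) ∣ U
  · have h1 : (A : ℤ) ∣ T := hTT ▸ (dvd_pow hU two_ne_zero).mul_left D
    have h2 : (A : ℤ) ∣ a := by
      apply hAZ.dvd_of_dvd_pow (n := 2)
      have heq : a ^ 2 = T - (A : ℤ) * (10 * a * q + 9 * m * q ^ 2) := by
        linear_combination -hT
      rw [heq]
      exact dvd_sub h1 (dvd_mul_right _ _)
    have h3 : (A : ℤ) ^ 2 ∣ T := hTT ▸ (pow_dvd_pow_of_dvd hU 2).mul_left D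
    have ⟨a', ha'⟩ := h2
    have h5 : (A : ℤ) * (9 * m * q ^ 2) = T - a ^ 2 - 10 * A * a * q := by
      linear_combination -hT
    have h6 : (A : ℤ) ^ 2 ∣ (A : ℤ) * (9 * m * q ^ 2) := by
      rw [h5]
      refine dvd_sub (dvd_sub h3 ?_) ?_
      · exact pow_dvd_pow_of_dvd h2 2
      · exact ⟨10 * a' * q, by rw [ha']; ring⟩
    have h7 : (A : ℤ) ∣ 9 * m * q ^ 2 := by
      rw [pow_two] at h6
      exact (mul_dvd_mul_iff_left (by exact_mod_cast hA.ne_zero : (A:ℤ) ≠ 0)).mp h6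
    rcases hAZ.dvd_mul.mp h7 with h8 | h8
    · exact hAm h8
    · have h9 : (A : ℤ) ∣ q := hAZ.dvd_of_dvd_pow h8
      exact hAZ.not_unit (hcop.isUnit_of_dvd' h2 h9)
  · have hU' : ((U : ZMod A)) ≠ 0 := fun h => hU ((ZMod.intCast_zmod_eq_zero_iff_dvd U A).mp h)
    have h1 : (D * U ^ 2 : ℤ) = (D * S ^ 2) ^ 2 + (A : ℤ) * (10 * (D * S ^ 2) * q + 9 * m * q ^ 2) := by
      rw [← ha, ← hTT]; linear_combination hT
    have key : (D : ZMod A) * (U : ZMod A) ^ 2 = ((D : ZMod A) * (S : ZMod A) ^ 2) ^ 2 := by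
      calc (D : ZMod A) * (U : ZMod A) ^ 2 = ((D * U ^ 2 : ℤ) : ZMod A) := by push_cast; ring
        _ = (((D * S ^ 2) ^ 2 + (A : ℤ) * (10 * (D * S ^ 2) * q + 9 * m * q ^ 2) : ℤ) : ZMod A) := by
            rw [h1]
        _ = ((D : ZMod A) * (S : ZMod A) ^ 2) ^ 2 := by
            push_cast
            rw [ZMod.natCast_self]
            ring
    exact hD ⟨(D : ZMod A) * (S : ZMod A) ^ 2 * (U : ZMod A)⁻¹, by
      field_simp
      linear_combination key⟩

private lemma modA₂ {A m : ℕ} (hA : A.Prime) {a T q S U D : ℤ}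
    (hT : T = a ^ 2 + 10 * (A : ℤ) * a * q + 9 * (m : ℤ) * (A : ℤ) * q ^ 2)
    (ha : a = (A : ℤ) * D * S ^ 2) (hTT : T = (A : ℤ) * D * U ^ 2)
    (hcop : IsCoprime a q)
    (hAm : ¬ (A : ℤ) ∣ 9 * (m : ℤ))
    (hD : ¬ IsSquare (((D * m : ℤ) : ZMod A))) : False := by
  haveI := Fact.mk hA
  have hAZ : Prime (A : ℤ) := Int.prime_iff_natAbs_prime.mpr (by simpa using hA)
  have hA0 : (A : ℤ) ≠ 0 := by exact_mod_cast hA.ne_zero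
  have h1 : D * U ^ 2 = (A : ℤ) * D ^ 2 * S ^ 4 + 10 * (A : ℤ) * D * S ^ 2 * q + 9 * m * q ^ 2 := by
    apply mul_left_cancel₀ hA0
    calc (A : ℤ) * (D * U ^ 2) = T := by rw [hTT]; ring
      _ = (A : ℤ) * ((A : ℤ) * D ^ 2 * S ^ 4 + 10 * (A : ℤ) * D * S ^ 2 * q + 9 * m * q ^ 2) := by
          rw [hT, ha]; ring
  have key : (D : ZMod A) * (U : ZMod A) ^ 2 = 9 * (m : ZMod A) * (q : ZMod A) ^ 2 := by
    calc (D : ZMod A) * (U : ZMod A) ^ 2 = ((D * U ^ 2 : ℤ) : ZMod A) := by push_cast; ring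
      _ = (((A : ℤ) * D ^ 2 * S ^ 4 + 10 * (A : ℤ) * D * S ^ 2 * q + 9 * m * q ^ 2 : ℤ) : ZMod A) := by
          rw [h1]
      _ = 9 * (m : ZMod A) * (q : ZMod A) ^ 2 := by push_cast; rw [ZMod.natCast_self]; ring
  by_cases hU : (U : ZMod A) = 0
  · rw [hU] at key
    have h2 : ((9 * (m : ℤ) * q ^ 2 : ℤ) : ZMod A) = 0 := by push_cast; rw [← key]; ring
    have h3 : (A : ℤ) ∣ 9 * (m : ℤ) * q ^ 2 := (ZMod.intCast_zmod_eq_zero_iff_dvd _ A).mp h2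
    rcases hAZ.dvd_mul.mp h3 with h4 | h4
    · exact hAm h4
    · have h5 : (A : ℤ) ∣ q := hAZ.dvd_of_dvd_pow h4
      have h6 : (A : ℤ) ∣ a := ⟨D * S ^ 2, by rw [ha]; ring⟩
      exact hAZ.not_unit (hcop.isUnit_of_dvd' h6 h5)
  · refine hD ⟨3 * (m : ZMod A) * (q : ZMod A) * (U : ZMod A)⁻¹, ?_⟩
    push_cast
    field_simp
    linear_combination (m : ZMod A) * key

private lemma mod3 {A m : ℕ} (hA3 : A % 3 = 2) (hm3 : m % 3 = 2) {a T q c S U D : ℤ}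
    (hT : T = a ^ 2 + 10 * (A : ℤ) * a * q + 9 * (m : ℤ) * (A : ℤ) * q ^ 2)
    (ha : a = 3 * D * S ^ 2) (hTT : T = 3 * D * U ^ 2)
    (hq : q = c ^ 2)
    (hcop : IsCoprime a q)
    (hD : ¬ (3 : ℤ) ∣ D) : False := by
  have p3 : Prime (3 : ℤ) := Int.prime_iff_natAbs_prime.mpr (by norm_num)
  have h3a : (3 : ℤ) ∣ a := ⟨D * S ^ 2, by rw [ha]; ring⟩
  have h3q : ¬ (3 : ℤ) ∣ q := fun h => p3.not_unit (hcop.isUnit_of_dvd' h3a h)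
  have h3c : ¬ (3 : ℤ) ∣ c := fun h => h3q (hq ▸ dvd_pow h two_ne_zero)
  have h3A : ¬ (3 : ℤ) ∣ (A : ℤ) := by
    have : ¬ (3 ∣ A) := by omega
    exact_mod_cast fun h => this (by exact_mod_cast h)
  have h3m : ¬ (3 : ℤ) ∣ (m : ℤ) := by
    have : ¬ (3 ∣ m) := by omega
    exact_mod_cast fun h => this (by exact_mod_cast h)
  have hS : ¬ (3 : ℤ) ∣ S := by
    intro h
    obtain ⟨S', rfl⟩ := h
    have h27 : (27 : ℤ) ∣ T - 9 * m * A * q ^ 2 := by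
      refine ⟨D * S' ^ 2 * (27 * D * S' ^ 2 + 10 * A * q), ?_⟩
      rw [hT, ha]; ring
    have h9T : (9 : ℤ) ∣ T := by
      have h1 : (9 : ℤ) ∣ T - 9 * m * A * q ^ 2 := dvd_trans (by norm_num) h27
      have h2 : (9 : ℤ) ∣ 9 * m * A * q ^ 2 := ⟨m * A * q ^ 2, by ring⟩
      simpa using dvd_add h1 h2
    have h3DU : (3 : ℤ) ∣ D * U ^ 2 := by
      have : (3 : ℤ) * 3 ∣ 3 * (D * U ^ 2) := by
        rw [show (3 : ℤ) * (D * U ^ 2) = T by rw [hTT]; ring]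
        exact (by norm_num : (3:ℤ)*3 = 9) ▸ h9T
      exact (mul_dvd_mul_iff_left (by norm_num : (3:ℤ) ≠ 0)).mp this
    rcases p3.dvd_mul.mp h3DU with h4 | h4
    · exact hD h4
    · obtain ⟨U', rfl⟩ := p3.dvd_of_dvd_pow h4
      have h27T : (27 : ℤ) ∣ T := ⟨D * U' ^ 2, by rw [hTT]; ring⟩
      have h27' : (27 : ℤ) ∣ 9 * m * A * q ^ 2 := by
        have := dvd_sub h27T h27
        simpa using this
      have h3mAq : (3 : ℤ) ∣ m * ((A : ℤ) * q ^ 2) := by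
        have : (9 : ℤ) * 3 ∣ 9 * (m * (A * q ^ 2)) := by
          rw [show (9 : ℤ) * (m * (A * q ^ 2)) = 9 * m * A * q ^ 2 by ring]
          exact (by norm_num : (9:ℤ)*3 = 27) ▸ h27'
        exact (mul_dvd_mul_iff_left (by norm_num : (9:ℤ) ≠ 0)).mp this
      rcases p3.dvd_mul.mp h3mAq with h5 | h5
      · exact h3m h5
      · rcases p3.dvd_mul.mp h5 with h6 | h6
        · exact h3A h6
        · exact h3q (p3.dvd_of_dvd_pow h6)
  have hU : ¬ (3 : ℤ) ∣ U := by
    intro h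
    obtain ⟨U', rfl⟩ := h
    have h1 : (9 : ℤ) * D * U' ^ 2 = 3 * D ^ 2 * S ^ 4 + 10 * A * D * S ^ 2 * q + 3 * m * A * q ^ 2 := by
      apply mul_left_cancel₀ (by norm_num : (3:ℤ) ≠ 0)
      calc (3 : ℤ) * (9 * D * U' ^ 2) = T := by rw [hTT]; ring
        _ = 3 * (3 * D ^ 2 * S ^ 4 + 10 * A * D * S ^ 2 * q + 3 * m * A * q ^ 2) := by
            rw [hT, ha]; ring
    have h2 : (3 : ℤ) ∣ 10 * ((A : ℤ) * (D * (S ^ 2 * q))) :=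
      ⟨3 * D * U' ^ 2 - D ^ 2 * S ^ 4 - m * A * q ^ 2, by linear_combination -h1⟩
    rcases p3.dvd_mul.mp h2 with h4 | h4
    · norm_num at h4
    rcases p3.dvd_mul.mp h4 with h5 | h5
    · exact h3A h5
    rcases p3.dvd_mul.mp h5 with h6 | h6
    · exact hD h6
    rcases p3.dvd_mul.mp h6 with h7 | h7
    · exact hS (p3.dvd_of_dvd_pow h7)
    · exact h3q h7
  have h2 : D * U ^ 2 = 3 * D ^ 2 * S ^ 4 + 10 * A * D * S ^ 2 * q + 3 * m * A * q ^ 2 := by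
    apply mul_left_cancel₀ (by norm_num : (3:ℤ) ≠ 0)
    calc (3 : ℤ) * (D * U ^ 2) = T := by rw [hTT]; ring
      _ = 3 * (3 * D ^ 2 * S ^ 4 + 10 * A * D * S ^ 2 * q + 3 * m * A * q ^ 2) := by
          rw [hT, ha]; ring
  have hA2 : ((A : ℕ) : ZMod 3) = 2 := by
    rw [← ZMod.natCast_mod, hA3]; norm_num
  have key : (D : ZMod 3) * (U : ZMod 3) ^ 2 = (D : ZMod 3) * (2 * ((S : ZMod 3) * (c : ZMod 3)) ^ 2) := by
    calc (D : ZMod 3) * (U : ZMod 3) ^ 2 = ((D * U ^ 2 : ℤ) : ZMod 3) := by push_cast; ring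
      _ = ((3 * D ^ 2 * S ^ 4 + 10 * (A : ℤ) * D * S ^ 2 * q + 3 * m * (A : ℤ) * q ^ 2 : ℤ) : ZMod 3) := by
          rw [h2]
      _ = (D : ZMod 3) * (2 * ((S : ZMod 3) * (c : ZMod 3)) ^ 2) := by
          rw [hq]
          push_cast
          rw [hA2]
          rw [show (3 : ZMod 3) = 0 by decide, show (10 : ZMod 3) = 1 by decide]
          ring
  have hD3 : (D : ZMod 3) ≠ 0 := fun h => hD ((ZMod.intCast_zmod_eq_zero_iff_dvd D 3).mp h)
  have key2 : (U : ZMod 3) ^ 2 = 2 * ((S : ZMod 3) * (c : ZMod 3)) ^ 2 :=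
    mul_left_cancel₀ hD3 key
  have hU3 : (U : ZMod 3) ≠ 0 := fun h => hU ((ZMod.intCast_zmod_eq_zero_iff_dvd U 3).mp h)
  have hSc : (S : ZMod 3) * (c : ZMod 3) ≠ 0 := by
    have hS3 : (S : ZMod 3) ≠ 0 := fun h => hS ((ZMod.intCast_zmod_eq_zero_iff_dvd S 3).mp h)
    have hc3 : (c : ZMod 3) ≠ 0 := fun h => h3c ((ZMod.intCast_zmod_eq_zero_iff_dvd c 3).mp h)
    exact mul_ne_zero hS3 hc3
  exact zmod3_aux _ _ hU3 hSc key2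

/-- The elliptic curve `E' : y² = x³ + 10(m+16n²)x² + 9m(m+16n²)x` over `ℚ`. -/
def zywinaCurve' (m n : ℕ) : WeierstrassCurve ℚ where
  a₁ := 0
  a₂ := 10 * ((m : ℚ) + 16 * n ^ 2)
  a₃ := 0
  a₄ := 9 * (m : ℚ) * ((m : ℚ) + 16 * n ^ 2)
  a₆ := 0

set_option maxHeartbeats 1600000 in
/-- The point `Q₁ = (−(m+16n²), 12n(m+16n²))` lies on `E'`, and for every rational point
`(x, y)` on `E'` with `x ≠ 0`, the `x`-coordinate is `d·r²` for some
`d ∈ {1, −m, −(m+16n²), m(m+16n²)}` and some rational `r`. -/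
theorem x_coord_square_class_on_E' (m n : ℕ) (hm : 0 < m) (hn : 0 < n)
    (hm1 : Nat.Prime m) (hm2 : Nat.Prime (m + 16 * n ^ 2)) (hm3 : Nat.Prime (m + 25 * n ^ 2))
    (hc1 : m % 24 = 11) (hc2 : (m + 16 * n ^ 2) % 24 = 11) (hc3 : (m + 25 * n ^ 2) % 24 = 11) :
    (zywinaCurve' m n).toAffine.Nonsingular
        (-((m : ℚ) + 16 * n ^ 2)) (12 * n * ((m : ℚ) + 16 * n ^ 2)) ∧
    ∀ x y : ℚ, (zywinaCurve' m n).toAffine.Nonsingular x y → x ≠ 0 →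
      ∃ d ∈ ({1, -(m : ℚ), -((m : ℚ) + 16 * n ^ 2),
          (m : ℚ) * ((m : ℚ) + 16 * n ^ 2)} : Set ℚ),
        ∃ r : ℚ, x = d * r ^ 2 := by
  constructor
  · rw [WeierstrassCurve.Affine.nonsingular_iff', WeierstrassCurve.Affine.equation_iff]
    have hm' : (0:ℚ) < m := by exact_mod_cast hm
    have hn' : (0:ℚ) < n := by exact_mod_cast hn
    refine ⟨by simp only [zywinaCurve']; ring, Or.inr ?_⟩
    simp only [zywinaCurve']
    ring_nf
    positivity
  intro x y hns hx0
  set A : ℕ := m + 16 * n ^ 2 with hA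
  set B : ℕ := m + 25 * n ^ 2 with hB
  have hn2 : 0 < n ^ 2 := pow_pos hn 2
  have hA4 : A % 4 = 3 := by omega
  have hm4 : m % 4 = 3 := by omega
  have hA3 : A % 3 = 2 := by omega
  have hm3' : m % 3 = 2 := by omega
  have hAm_ne : A ≠ m := by omega
  haveI : Fact A.Prime := ⟨hm2⟩
  haveI : Fact m.Prime := ⟨hm1⟩
  have hAQ : ((A : ℕ) : ℚ) = (m : ℚ) + 16 * (n:ℚ) ^ 2 := by rw [hA]; push_cast; ring
  have hAZeq : ((A : ℕ) : ℤ) = (m : ℤ) + 16 * (n:ℤ) ^ 2 := by rw [hA]; push_cast; ring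
  have hBZeq : ((B : ℕ) : ℤ) = (m : ℤ) + 25 * (n:ℤ) ^ 2 := by rw [hB]; push_cast; ring
  -- the equation
  have hE : y ^ 2 = x ^ 3 + 10 * ((A:ℕ):ℚ) * x ^ 2 + 9 * (m:ℚ) * ((A:ℕ):ℚ) * x := by
    have h := ((zywinaCurve' m n).toAffine.equation_iff x y).mp hns.1
    simp only [zywinaCurve'] at h
    rw [hAQ]
    linear_combination h
  -- integer data
  set a : ℤ := x.num with ha_def
  set q : ℤ := ((x.den : ℕ) : ℤ) with hq_def
  have ha0 : a ≠ 0 := Rat.num_ne_zero.mpr hx0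
  have hq0 : 0 < q := by rw [hq_def]; exact_mod_cast x.pos
  have hcop : IsCoprime a q := by
    rw [Int.isCoprime_iff_gcd_eq_one, ha_def, hq_def]
    simpa [Int.gcd, Int.natAbs_natCast] using x.reduced
  set T : ℤ := a ^ 2 + 10 * (A:ℤ) * a * q + 9 * (m:ℤ) * (A:ℤ) * q ^ 2 with hT_def
  have hq0' : (q:ℚ) ≠ 0 := Int.cast_ne_zero.mpr hq0.ne'
  have hxdq : ((a : ℤ) : ℚ) / ((q : ℤ) : ℚ) = x := by
    rw [ha_def, hq_def]; push_cast; exact Rat.num_div_den x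
  have hxq : x * ((q:ℤ):ℚ) = ((a:ℤ):ℚ) := by rw [← hxdq]; field_simp
  have hyq : (y * (q:ℚ) ^ 2) ^ 2 = ((a * T * q : ℤ) : ℚ) := by
    rw [hT_def]
    push_cast
    linear_combination ((q:ℚ))^4 * hE +
      ((q:ℚ)*((x*(q:ℚ))^2 + x*(q:ℚ)*(a:ℚ) + (a:ℚ)^2) +
        10*((A:ℕ):ℚ)*(q:ℚ)^2*(x*(q:ℚ)+(a:ℚ)) + 9*(m:ℚ)*((A:ℕ):ℚ)*(q:ℚ)^3) * hxq
  have hymul : (y * (q:ℚ)^2) * (y * (q:ℚ)^2) = ((a * T * q : ℤ) : ℚ) := by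
    rw [← hyq]; ring
  have hden1 : (y * (q:ℚ)^2).den = 1 := by
    have h1 := Rat.mul_self_den (y * (q:ℚ)^2)
    rw [hymul] at h1
    simp only [Rat.den_intCast] at h1
    exact Nat.dvd_one.mp ⟨_, h1⟩
  have hzq : (((y * (q:ℚ)^2).num : ℤ) : ℚ) = y * (q:ℚ)^2 := (Rat.den_eq_one_iff _).mp hden1
  set z : ℤ := (y * (q:ℚ)^2).num with hz_def
  have hz2 : z ^ 2 = a * T * q := by
    have h1 : ((z:ℤ):ℚ) ^ 2 = ((a * T * q : ℤ) : ℚ) := by rw [hzq]; exact hyq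
    exact_mod_cast h1
  -- q is a square
  have hcopqa : IsCoprime q (a * T) := by
    have h1 : IsCoprime q a := hcop.symm
    have h2 : IsCoprime q T := by
      have h3 : IsCoprime q (a ^ 2) := h1.pow_right
      have h4 := h3.add_mul_left_right (10*(A:ℤ)*a + 9*(m:ℤ)*(A:ℤ)*q)
      rwa [show a^2 + q*(10*(A:ℤ)*a + 9*(m:ℤ)*(A:ℤ)*q) = T by rw [hT_def]; ring] at h4
    exact h1.mul_right h2
  obtain ⟨c, hc | hc⟩ := Int.sq_of_isCoprime hcopqa (show q*(a*T) = z^2 by linear_combination -hz2)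
  swap
  · exfalso; nlinarith [sq_nonneg c, hq0]
  have hc0 : c ≠ 0 := by
    intro h; rw [h] at hc; simp at hc; omega
  obtain ⟨z₁, hzc⟩ := (Int.pow_dvd_pow_iff two_ne_zero).mp
    (⟨a*T, by rw [hz2, hc]; ring⟩ : c ^ 2 ∣ z ^ 2)
  have hz₁ : z₁ ^ 2 = a * T := by
    apply mul_left_cancel₀ (pow_ne_zero 2 hc0)
    rw [← mul_pow, ← hzc]
    linear_combination hz2 + a*T*hc
  -- T is nonzero
  have hT0 : T ≠ 0 := by
    intro ht
    have h0 : a^2 + 10*((A:ℕ):ℤ)*a*q + 9*(m:ℤ)*((A:ℕ):ℤ)*q^2 = 0 := by rw [← hT_def]; exact ht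
    have hw : (a + 5*((A:ℕ):ℤ)*q)^2 = (4*q)^2 * (((A:ℕ):ℤ)*((B:ℕ):ℤ)) := by
      rw [hAZeq, hBZeq]; rw [hAZeq] at h0; linear_combination h0
    obtain ⟨k, hk⟩ := (Int.pow_dvd_pow_iff two_ne_zero).mp
      (⟨((A:ℕ):ℤ)*((B:ℕ):ℤ), hw⟩ : (4*q)^2 ∣ (a + 5*((A:ℕ):ℤ)*q)^2)
    have hk2 : ((A:ℕ):ℤ)*((B:ℕ):ℤ) = k^2 := by
      apply mul_left_cancel₀ (pow_ne_zero 2 (by positivity : (4:ℤ)*q ≠ 0))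
      rw [← hw, hk]; ring
    have hNat : k.natAbs ^ 2 = A * B := by
      have h2 := congrArg Int.natAbs hk2
      simpa [Int.natAbs_mul, Int.natAbs_pow] using h2.symm
    have hdvd : A ∣ k.natAbs := hm2.dvd_of_dvd_pow ⟨B, hNat⟩
    obtain ⟨k', hk'⟩ := hdvd
    have hBeq : B = A * k'^2 := by
      have h3 : A * B = A * (A * k'^2) := by
        rw [← hNat, hk']; ring
      exact Nat.eq_of_mul_eq_mul_left hm2.pos h3
    have hAB : A = B := by
      rcases (hm3.eq_one_or_self_of_dvd A ⟨k'^2, hBeq⟩) with h|h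
      · exact absurd h hm2.ne_one
      · exact h
    omega
  -- gcd splitting
  have hgpos : 0 < Int.gcd a T := Int.gcd_pos_iff.mpr (Or.inl ha0)
  set g : ℕ := Int.gcd a T with hg_def
  have hga : (g:ℤ) ∣ a := Int.gcd_dvd_left a T
  have hgT : (g:ℤ) ∣ T := Int.gcd_dvd_right a T
  have hgZ0 : (g:ℤ) ≠ 0 := by exact_mod_cast hgpos.ne'
  have hg9 : (g:ℤ) ∣ 9*(m:ℤ)*((A:ℕ):ℤ) := by
    have h1 : (g:ℤ) ∣ 9*(m:ℤ)*((A:ℕ):ℤ)*q^2 := by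
      rw [show 9*(m:ℤ)*((A:ℕ):ℤ)*q^2 = T - a*(a + 10*((A:ℕ):ℤ)*q) by rw [hT_def]; ring]
      exact dvd_sub hgT (hga.mul_right _)
    have h2 : IsCoprime ((g:ℤ)) q := hcop.of_isCoprime_of_dvd_left hga
    exact (h2.pow_right).dvd_of_dvd_mul_right h1
  have hcop₁' : Int.gcd (a / (g:ℤ)) (T / (g:ℤ)) = 1 := Int.gcd_div_gcd_div_gcd hgpos
  set a₁ : ℤ := a / (g:ℤ) with ha₁_def
  set T₁ : ℤ := T / (g:ℤ) with hT₁_def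
  have ha₁ : a = (g:ℤ) * a₁ := (Int.mul_ediv_cancel' hga).symm
  have hT₁ : T = (g:ℤ) * T₁ := (Int.mul_ediv_cancel' hgT).symm
  have hcop₁ : IsCoprime a₁ T₁ := Int.isCoprime_iff_gcd_eq_one.mpr hcop₁'
  obtain ⟨z₂, hz₂c⟩ := (Int.pow_dvd_pow_iff two_ne_zero).mp
    (⟨a₁*T₁, by rw [hz₁, ha₁, hT₁]; ring⟩ : (g:ℤ)^2 ∣ z₁^2)
  have hz₂ : z₂ ^ 2 = a₁ * T₁ := by
    apply mul_left_cancel₀ (pow_ne_zero 2 hgZ0)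
    rw [← mul_pow, ← hz₂c, hz₁, ha₁, hT₁]; ring
  have ha₁0 : a₁ ≠ 0 := by intro h; apply ha0; rw [ha₁, h, mul_zero]
  have hT₁0 : T₁ ≠ 0 := by intro h; apply hT0; rw [hT₁, h, mul_zero]
  have hpos : 0 < a₁ * T₁ := lt_of_le_of_ne (hz₂ ▸ sq_nonneg z₂) (Ne.symm (mul_ne_zero ha₁0 hT₁0))
  obtain ⟨ε, s, u, hε, hεa, hεT⟩ :
      ∃ ε s u : ℤ, (ε = 1 ∨ ε = -1) ∧ a₁ = ε * s ^ 2 ∧ T₁ = ε * u ^ 2 := by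
    obtain ⟨s, hs⟩ := Int.sq_of_isCoprime hcop₁ hz₂.symm
    obtain ⟨u, hu⟩ := Int.sq_of_isCoprime hcop₁.symm (show T₁ * a₁ = z₂^2 by linear_combination -hz₂)
    rcases hs with hs|hs <;> rcases hu with hu|hu
    · exact ⟨1, s, u, Or.inl rfl, by rw [hs]; ring, by rw [hu]; ring⟩
    · exfalso; rw [hs, hu] at hpos
      rw [show s^2 * -u^2 = -((s*u)^2) by ring] at hpos
      linarith [sq_nonneg (s*u)]
    · exfalso; rw [hs, hu] at hpos
      rw [show -s^2 * u^2 = -((s*u)^2) by ring] at hpos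
      linarith [sq_nonneg (s*u)]
    · exact ⟨-1, s, u, Or.inr rfl, by rw [hs]; ring, by rw [hu]; ring⟩
  -- decompose g
  have hgN : g ∣ 9 * (m * A) := by
    have h1 : (g:ℤ) ∣ ((9 * (m * A) : ℕ) : ℤ) := by
      rw [show ((9 * (m * A) : ℕ) : ℤ) = 9 * (m:ℤ) * ((A:ℕ):ℤ) by push_cast; ring]
      exact hg9
    exact_mod_cast h1
  obtain ⟨e, w, he, hw, hew⟩ := Nat.dvd_mul.mp hgN
  obtain ⟨j, k, hj, hk, hjk⟩ := Nat.dvd_mul.mp hw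
  have he3 : e = 1 ∨ e = 3 ∨ e = 9 := by
    have h1 : 0 < e := Nat.pos_of_dvd_of_pos he (by norm_num)
    have h2 : e ≤ 9 := Nat.le_of_dvd (by norm_num) he
    interval_cases e <;> omega
  have hj' : j = 1 ∨ j = m := Nat.Prime.eq_one_or_self_of_dvd hm1 j hj
  have hk' : k = 1 ∨ k = A := Nat.Prime.eq_one_or_self_of_dvd hm2 k hk
  have hafull : a = (e:ℤ) * ((j:ℤ) * (k:ℤ) * ε) * s^2 := by
    rw [ha₁, hεa, ← hew, ← hjk]; push_cast; ring
  have hTfull : T = (e:ℤ) * ((j:ℤ) * (k:ℤ) * ε) * u^2 := by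
    rw [hT₁, hεT, ← hew, ← hjk]; push_cast; ring
  -- quadratic residue facts mod A
  have FA1 : ¬ IsSquare (-1 : ZMod A) := by
    rw [ZMod.exists_sq_eq_neg_one_iff]
    simp [hA4]
  have hsqAm : IsSquare ((A : ℕ) : ZMod m) := by
    refine ⟨((4*n : ℕ) : ZMod m), ?_⟩
    rw [hA]
    push_cast
    rw [ZMod.natCast_self]
    ring
  have FA2 : ¬ IsSquare ((m : ZMod A)) := fun h =>
    ((ZMod.exists_sq_eq_prime_iff_of_mod_four_eq_three hA4 hm4 hAm_ne).mp h) hsqAm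
  have hAm9 : ¬ ((A:ℕ):ℤ) ∣ 9*(m:ℤ) := by
    intro h
    have h1 : A ∣ 9*m := by
      have h2 : ((A:ℕ):ℤ) ∣ ((9*m : ℕ):ℤ) := by push_cast; exact h
      exact_mod_cast h2
    rcases (Nat.Prime.dvd_mul hm2).mp h1 with h2|h2
    · have := Nat.le_of_dvd (by norm_num) h2; omega
    · have := Nat.le_of_dvd hm h2; omega
  -- representation of x from a representation of its numerator
  have hxkey : ∀ D S : ℤ, a = D * S^2 → x = (D:ℚ) * ((S:ℚ)/(c:ℚ))^2 := by
    intro D S h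
    have hc0' : (c:ℚ) ≠ 0 := Int.cast_ne_zero.mpr hc0
    have h0 : ((a:ℤ):ℚ) = (D:ℚ) * (S:ℚ)^2 := by exact_mod_cast congrArg (Int.cast : ℤ → ℚ) h
    rw [← hxdq, h0, show ((q:ℤ):ℚ) = (c:ℚ)^2 by exact_mod_cast congrArg (Int.cast : ℤ → ℚ) hc]
    field_simp
  have h3jk : ¬ (3:ℤ) ∣ ((j:ℤ) * (k:ℤ)) := by
    intro hd
    have h1 : (3:ℕ) ∣ j * k := by
      have h2 : ((3:ℕ):ℤ) ∣ ((j*k:ℕ):ℤ) := by push_cast; exact_mod_cast hd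
      exact_mod_cast h2
    rcases (Nat.Prime.dvd_mul (by norm_num)).mp h1 with h|h
    · rcases hj' with rfl|rfl
      · omega
      · omega
    · rcases hk' with rfl|rfl
      · omega
      · omega
  -- the main case analysis (for e = 1 and e = 9)
  have main : ∀ S U : ℤ, a = ((j:ℤ)*(k:ℤ)*ε) * S^2 → T = ((j:ℤ)*(k:ℤ)*ε) * U^2 →
      ∃ d ∈ ({1, -(m:ℚ), -((m:ℚ) + 16*(n:ℚ)^2), (m:ℚ)*((m:ℚ)+16*(n:ℚ)^2)} : Set ℚ),
        ∃ r : ℚ, x = d * r^2 := by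
    intro S U hDS hDU
    rcases hj' with rfl | hjm
    · rcases hk' with rfl | rfl
      · rcases hε with rfl | rfl
        · refine ⟨1, by simp, (S:ℚ)/(c:ℚ), ?_⟩
          have h := hxkey 1 S (by rw [hDS]; push_cast; ring)
          simpa using h
        · exfalso
          refine modA₁ hm2 hT_def (show a = (-1)*S^2 by rw [hDS]; push_cast; ring)
            (show T = (-1)*U^2 by rw [hDU]; push_cast; ring) hcop hAm9 ?_
          simpa using FA1
      · rcases hε with rfl | rfl
        · exfalso
          refine modA₂ hm2 hT_def (show a = ((A:ℕ):ℤ)*1*S^2 by rw [hDS]; push_cast; ring)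
            (show T = ((A:ℕ):ℤ)*1*U^2 by rw [hDU]; push_cast; ring) hcop hAm9 ?_
          simpa using FA2
        · refine ⟨-((m:ℚ) + 16*(n:ℚ)^2), by simp, (S:ℚ)/(c:ℚ), ?_⟩
          have h := hxkey (-((A:ℕ):ℤ)) S (by rw [hDS]; push_cast; ring)
          rw [h, ← hAQ]
          push_cast
          ring
    · rw [hjm] at hDS hDU
      rcases hk' with rfl | rfl
      · rcases hε with rfl | rfl
        · exfalso
          refine modA₁ hm2 hT_def (show a = ((m:ℤ))*S^2 by rw [hDS]; push_cast; ring)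
            (show T = ((m:ℤ))*U^2 by rw [hDU]; push_cast; ring) hcop hAm9 ?_
          simpa using FA2
        · refine ⟨-(m:ℚ), by simp, (S:ℚ)/(c:ℚ), ?_⟩
          have h := hxkey (-(m:ℤ)) S (by rw [hDS]; push_cast; ring)
          push_cast at h
          exact h
      · rcases hε with rfl | rfl
        · refine ⟨(m:ℚ)*((m:ℚ)+16*(n:ℚ)^2), by simp, (S:ℚ)/(c:ℚ), ?_⟩
          have h := hxkey ((m:ℤ)*((A:ℕ):ℤ)) S (by rw [hDS]; push_cast; ring)
          rw [h, ← hAQ]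
          push_cast
          ring
        · exfalso
          refine modA₂ hm2 hT_def (show a = ((A:ℕ):ℤ)*(-(m:ℤ))*S^2 by rw [hDS]; push_cast; ring)
            (show T = ((A:ℕ):ℤ)*(-(m:ℤ))*U^2 by rw [hDU]; push_cast; ring) hcop hAm9 ?_
          intro hsq
          apply FA1
          have hm0 : ((m:ℕ) : ZMod A) ≠ 0 := by
            rw [Ne, ZMod.natCast_eq_zero_iff]
            intro hd
            have := Nat.le_of_dvd hm hd
            omega
          obtain ⟨r, hr⟩ := hsq
          refine ⟨r * ((m:ℕ) : ZMod A)⁻¹, ?_⟩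
          have hr' : (r*r) = -(((m:ℕ):ZMod A) * ((m:ℕ):ZMod A)) := by
            push_cast at hr
            linear_combination -hr
          field_simp
          linear_combination -hr'
  rcases he3 with rfl | rfl | rfl
  · exact main s u (by rw [hafull]; push_cast; ring) (by rw [hTfull]; push_cast; ring)
  · exfalso
    refine mod3 hA3 hm3' hT_def
      (show a = 3*((j:ℤ)*(k:ℤ)*ε)*s^2 by rw [hafull]; push_cast; ring)
      (show T = 3*((j:ℤ)*(k:ℤ)*ε)*u^2 by rw [hTfull]; push_cast; ring) hc hcop ?_
    intro hd
    apply h3jk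
    rcases hε with rfl|rfl
    · simpa using hd
    · simpa [dvd_neg] using hd
  · exact main (3*s) (3*u) (by rw [hafull]; push_cast; ring) (by rw [hTfull]; push_cast; ring)
end

section
/- The 2-torsion subgroup of E(ℚ) has exactly two elements: the identity and the point P₀ = (0, 0). Equivalently, the only rational point P ≠ 0 on E with 2P = 0 is (0, 0). -/
open WeierstrassCurve.Affine

theorem Nat.Prime.not_isSquare_mul {p q : ℕ} (hp : p.Prime) (hq : q.Prime) (hpq : p ≠ q) :
    ¬IsSquare (p * q) := by
  rintro ⟨k, hk⟩
  have hsq : Squarefree (p * q) :=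
    (Nat.squarefree_mul ((Nat.coprime_primes hp hq).mpr hpq)).mpr ⟨hp.squarefree, hq.squarefree⟩
  have hk1 : k = 1 := Nat.isUnit_iff.mp (hsq k (hk ▸ dvd_rfl))
  rw [hk1] at hk
  exact hp.ne_one (Nat.eq_one_of_mul_eq_one_right hk)

namespace WeierstrassCurve.Affine

variable {F : Type*} [Field F] {W : Affine F}

lemma nonsingular_zero_of_not_isSquare_discrim (ha₆ : W.a₆ = 0)
    (hd : ¬IsSquare (discrim 1 W.a₂ W.a₄)) : W.Nonsingular 0 0 := by
  refine nonsingular_zero.mpr ⟨ha₆, Or.inr fun ha₄ => hd ⟨W.a₂, ?_⟩⟩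
  rw [discrim, ha₄]
  ring

lemma negY_eq_self_iff [NeZero (2 : F)] (ha₁ : W.a₁ = 0) (ha₃ : W.a₃ = 0) {x y : F} :
    y = W.negY x y ↔ y = 0 := by
  rw [negY, ha₁, ha₃, zero_mul, sub_zero, sub_zero, eq_neg_iff_add_eq_zero, ← two_mul,
    mul_eq_zero, or_iff_right (NeZero.ne 2)]

lemma X_eq_zero_of_equation_Y_zero (ha₁ : W.a₁ = 0) (ha₃ : W.a₃ = 0) (ha₆ : W.a₆ = 0)
    (hd : ¬IsSquare (discrim 1 W.a₂ W.a₄)) {x : F} (h : W.Equation x 0) : x = 0 := by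
  rw [equation_iff, ha₁, ha₃, ha₆] at h
  have hcubic : x * (1 * (x * x) + W.a₂ * x + W.a₄) = 0 := by linear_combination -h
  refine (mul_eq_zero.mp hcubic).resolve_right fun hquad => hd ⟨2 * 1 * x + W.a₂, ?_⟩
  rw [discrim_eq_sq_of_quadratic_eq_zero hquad, sq]

theorem Point.two_nsmul_eq_zero_iff_of_not_isSquare_discrim [DecidableEq F] [NeZero (2 : F)]
    (ha₁ : W.a₁ = 0) (ha₃ : W.a₃ = 0) (ha₆ : W.a₆ = 0)
    (hd : ¬IsSquare (discrim 1 W.a₂ W.a₄)) (h0 : W.Nonsingular 0 0) (P : W.Point) :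
    2 • P = 0 ↔ P = 0 ∨ P = some 0 0 h0 := by
  rw [two_nsmul, add_eq_zero_iff_eq_neg]
  rcases P with _ | ⟨x, y, h⟩
  · exact iff_of_true rfl (.inl rfl)
  · simp only [neg_some, some.injEq, true_and, some_ne_zero, false_or,
      negY_eq_self_iff ha₁ ha₃]
    constructor
    · rintro rfl
      exact ⟨X_eq_zero_of_equation_Y_zero ha₁ ha₃ ha₆ hd h.1, rfl⟩
    · exact And.right

end WeierstrassCurve.Affine

lemma discrim_zywinaCurve (m n : ℕ) :
    discrim 1 (zywinaCurve m n).a₂ (zywinaCurve m n).a₄ =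
      9 * ((m * (m + 16 * n ^ 2) : ℕ) : ℚ) := by
  simp only [zywinaCurve, discrim]
  push_cast
  ring

lemma not_isSquare_discrim_zywinaCurve {m n : ℕ} (hn : 0 < n) (hm : m.Prime)
    (hm' : (m + 16 * n ^ 2).Prime) :
    ¬IsSquare (discrim 1 (zywinaCurve m n).a₂ (zywinaCurve m n).a₄) := by
  rintro ⟨r, hr⟩
  have hne : m ≠ m + 16 * n ^ 2 := (Nat.lt_add_of_pos_right (by positivity)).ne
  refine hm.not_isSquare_mul hm' hne (Rat.isSquare_natCast_iff.mp ⟨r / 3, ?_⟩)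
  rw [discrim_zywinaCurve] at hr
  linear_combination hr / 9

theorem two_torsion_of_zywinaCurve_general (m n : ℕ) (hn : 0 < n)
    (hm1 : Nat.Prime m) (hm2 : Nat.Prime (m + 16 * n ^ 2)) :
    ∃ h0 : (zywinaCurve m n).toAffine.Nonsingular 0 0,
      WeierstrassCurve.Affine.Point.some 0 0 h0 ≠ 0 ∧
      ∀ P : (zywinaCurve m n).toAffine.Point,
        2 • P = 0 ↔ (P = 0 ∨ P = WeierstrassCurve.Affine.Point.some 0 0 h0) := by
  have hd := not_isSquare_discrim_zywinaCurve hn hm1 hm2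
  have h0 := nonsingular_zero_of_not_isSquare_discrim rfl hd
  exact ⟨h0, Point.some_ne_zero h0,
    Point.two_nsmul_eq_zero_iff_of_not_isSquare_discrim rfl rfl rfl hd h0⟩

/-- The `2`-torsion subgroup of `E(ℚ)` consists exactly of the identity and `P₀ = (0, 0)`. -/
theorem two_torsion_of_zywinaCurve (m n : ℕ) (hm : 0 < m) (hn : 0 < n)
    (hm1 : Nat.Prime m) (hm2 : Nat.Prime (m + 16 * n ^ 2)) (hm3 : Nat.Prime (m + 25 * n ^ 2))
    (hc1 : m % 24 = 11) (hc2 : (m + 16 * n ^ 2) % 24 = 11) (hc3 : (m + 25 * n ^ 2) % 24 = 11) :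
    ∃ h0 : (zywinaCurve m n).toAffine.Nonsingular 0 0,
      WeierstrassCurve.Affine.Point.some 0 0 h0 ≠ 0 ∧
      ∀ P : (zywinaCurve m n).toAffine.Point,
        2 • P = 0 ↔ (P = 0 ∨ P = WeierstrassCurve.Affine.Point.some 0 0 h0) :=
  two_torsion_of_zywinaCurve_general m n hn hm1 hm2
end

section
/- Let d be a squarefree integer with d ≡ 3 (mod 4). Then there do not exist x, y ∈ ℚ₂ satisfying y² = d·x⁴ + 10(m+16n²)·x² + 9m(m+16n²)/d; moreover d is not a square in ℚ₂. (Hence the projective curve C_d given by this affine equation has no ℚ₂-points.) -/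
private lemma key2 (k : ℕ) (N : ℤ) (Y E : ℚ_[2]) (hE : ‖E‖ ≤ 1)
    (h : Y ^ 2 = (N : ℚ_[2]) + 2 ^ k * E)
    (hN : ¬ IsSquare (N : ZMod (2 ^ k))) : False := by
  have h2 : ‖(2 : ℚ_[2])‖ ≤ 1 := by
    simpa using Padic.norm_int_le_one (p := 2) 2
  have hZ : ‖(N : ℚ_[2]) + 2 ^ k * E‖ ≤ 1 := by
    refine (Padic.nonarchimedean _ _).trans (max_le (Padic.norm_int_le_one _) ?_)
    rw [norm_mul, norm_pow]
    exact mul_le_one₀ (pow_le_one₀ (norm_nonneg _) h2) (norm_nonneg _) hE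
  have hY : ‖Y‖ ≤ 1 := by
    rw [← h] at hZ
    rw [norm_pow] at hZ
    exact (pow_le_one_iff_of_nonneg (norm_nonneg _) two_ne_zero).mp hZ
  set Yt : ℤ_[2] := ⟨Y, hY⟩ with hYt
  set Et : ℤ_[2] := ⟨E, hE⟩ with hEt
  have heq : Yt ^ 2 = (N : ℤ_[2]) + 2 ^ k * Et := by
    apply Subtype.ext
    push_cast
    exact h
  apply hN
  have := congrArg (PadicInt.toZModPow k) heq
  rw [map_add, map_mul, map_pow, map_pow, map_intCast, map_ofNat] at this
  have h0 : ((2 : ZMod (2 ^ k)) : ZMod (2 ^ k)) ^ k = 0 := by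
    have : ((2 ^ k : ℕ) : ZMod (2 ^ k)) = 0 := ZMod.natCast_self _
    push_cast at this
    exact this
  rw [h0, zero_mul, add_zero] at this
  exact ⟨_, by rw [← this, sq]⟩

private lemma castmod (a r : ℤ) (n : ℕ) (h : a % (n : ℤ) = r % (n : ℤ)) :
    (a : ZMod n) = (r : ZMod n) := by
  rw [ZMod.intCast_eq_intCast_iff']
  exact_mod_cast h

private lemma nsq8 (a : ℤ) (h : a % 8 = 3 ∨ a % 8 = 7) : ¬ IsSquare ((a : ℤ) : ZMod (2 ^ 3)) := by
  have h8 : ((2 ^ 3 : ℕ) : ℤ) = 8 := by norm_num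
  rcases h with h | h
  · rw [castmod a 3 _ (by rw [h8]; omega)]; decide
  · rw [castmod a 7 _ (by rw [h8]; omega)]; decide

private lemma nsq32 (a : ℤ) (h : a % 32 = 28 ∨ a % 32 = 12) :
    ¬ IsSquare ((a : ℤ) : ZMod (2 ^ 5)) := by
  have h32 : ((2 ^ 5 : ℕ) : ℤ) = 32 := by norm_num
  rcases h with h | h
  · rw [castmod a 28 _ (by rw [h32]; omega)]; decide
  · rw [castmod a 12 _ (by rw [h32]; omega)]; decide

private lemma nle (a b : ℚ_[2]) (ha : ‖a‖ ≤ 1) (hb : ‖b‖ ≤ 1) : ‖a * b‖ ≤ 1 := by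
  rw [norm_mul]; exact mul_le_one₀ ha (norm_nonneg _) hb

private lemma nadd (a b : ℚ_[2]) (ha : ‖a‖ ≤ 1) (hb : ‖b‖ ≤ 1) : ‖a + b‖ ≤ 1 :=
  (Padic.nonarchimedean _ _).trans (max_le ha hb)

private lemma npow (a : ℚ_[2]) (k : ℕ) (ha : ‖a‖ ≤ 1) : ‖a ^ k‖ ≤ 1 := by
  rw [norm_pow]; exact pow_le_one₀ (norm_nonneg _) ha

private lemma trich (x : ℚ_[2]) : ‖x‖ ≤ 1/2 ∨ ‖x‖ = 1 ∨ 2 ≤ ‖x‖ := by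
  by_cases hx : x = 0
  · left; rw [hx, norm_zero]; norm_num
  · have h := Padic.norm_eq_zpow_neg_valuation hx
    rcases lt_trichotomy x.valuation 0 with hv | hv | hv
    · right; right
      rw [h]
      calc (2:ℝ) = (2:ℝ) ^ (1:ℤ) := by norm_num
        _ ≤ (2:ℝ) ^ (-x.valuation) := by
            apply zpow_le_zpow_right₀ one_le_two; omega
        _ = (2:ℕ) ^ (-x.valuation) := by norm_num
    · right; left; rw [h, hv]; norm_num
    · left
      rw [h]
      calc ((2:ℕ):ℝ) ^ (-x.valuation) ≤ (2:ℝ) ^ (-1 : ℤ) := by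
            push_cast
            apply zpow_le_zpow_right₀ one_le_two; omega
        _ = 1/2 := by norm_num

private lemma unit_sq (x : ℚ_[2]) (hx : ‖x‖ = 1) :
    ∃ e : ℚ_[2], ‖e‖ ≤ 1 ∧ x ^ 2 = 1 + 8 * e := by
  set xt : ℤ_[2] := ⟨x, le_of_eq hx⟩ with hxt
  have hu : IsUnit xt := PadicInt.isUnit_iff.mpr hx
  rcases hu with ⟨u, hu⟩
  have hmul : (PadicInt.toZModPow (p := 2) 3) xt * (PadicInt.toZModPow (p := 2) 3) (↑u⁻¹) = 1 := by
    rw [← map_mul, ← hu, ← Units.val_mul, mul_inv_cancel, Units.val_one, map_one]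
  have hsq : (PadicInt.toZModPow (p := 2) 3) xt ^ 2 = 1 := by
    revert hmul
    generalize (PadicInt.toZModPow (p := 2) 3) xt = a
    generalize (PadicInt.toZModPow (p := 2) 3) (↑u⁻¹ : ℤ_[2]) = b
    revert a b
    decide
  have hker : xt ^ 2 - 1 ∈ RingHom.ker (PadicInt.toZModPow (p := 2) 3) := by
    rw [RingHom.mem_ker, map_sub, map_pow, map_one]
    exact sub_eq_zero_of_eq hsq
  rw [PadicInt.ker_toZModPow, Ideal.mem_span_singleton] at hker
  obtain ⟨et, het⟩ := hker
  have het' : xt ^ 2 = ((8 : ℕ) : ℤ_[2]) * et + 1 := by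
    rw [show ((8 : ℕ) : ℤ_[2]) = 2 ^ 3 by norm_num]
    linear_combination het
  refine ⟨(et : ℚ_[2]), by rw [PadicInt.padic_norm_e_of_padicInt]; exact et.norm_le_one, ?_⟩
  have := congrArg (fun z : ℤ_[2] => (z : ℚ_[2])) het'
  push_cast at this
  rw [show ((8 : ℤ_[2]) : ℚ_[2]) = 8 from rfl] at this
  linear_combination this

private lemma l1 (M P d : ℤ) (hM : M % 8 = 3) (hP : P % 8 = 3) :
    (9 * M * P * d) % 8 = d % 8 := by
  obtain ⟨a, ha⟩ : ∃ a, M = 8 * a + 3 := ⟨M / 8, by omega⟩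
  obtain ⟨b, hb⟩ : ∃ b, P = 8 * b + 3 := ⟨P / 8, by omega⟩
  subst ha hb
  have h : 9 * (8 * a + 3) * (8 * b + 3) * d = 8 * ((72 * a * b + 27 * a + 27 * b + 10) * d) + d := by
    ring
  omega

private lemma l2 (d : ℤ) (hd : d % 8 = 3 ∨ d % 8 = 7) : d ^ 3 % 8 = d % 8 := by
  rcases hd with hd | hd
  · obtain ⟨u, hu⟩ : ∃ u, d = 8 * u + 3 := ⟨d / 8, by omega⟩
    subst hu
    have h : (8 * u + 3) ^ 3 = 8 * (64 * u ^ 3 + 72 * u ^ 2 + 27 * u + 3) + 3 := by ring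
    omega
  · obtain ⟨u, hu⟩ : ∃ u, d = 8 * u + 7 := ⟨d / 8, by omega⟩
    subst hu
    have h : (8 * u + 7) ^ 3 = 8 * (64 * u ^ 3 + 168 * u ^ 2 + 147 * u + 42) + 7 := by ring
    omega

private lemma l3 (M P Q d c : ℤ) (hM : M % 8 = 3) (hP : P % 8 = 3) (hQ : Q % 8 = 3)
    (h25 : 25 * P = 9 * M + 16 * Q) (hc : d + 5 * P = 2 * c)
    (hd : d % 8 = 3 ∨ d % 8 = 7) :
    (d ^ 3 + 10 * P * d ^ 2 + 9 * M * P * d) % 32 = 28 ∨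
    (d ^ 3 + 10 * P * d ^ 2 + 9 * M * P * d) % 32 = 12 := by
  have hN4 : d ^ 3 + 10 * P * d ^ 2 + 9 * M * P * d = 4 * (d * (c ^ 2 - 4 * P * Q)) := by
    linear_combination (d * (d + 5 * P + 2 * c)) * hc - P * d * h25
  have hcodd : c % 2 = 1 := by omega
  obtain ⟨t, ht⟩ : ∃ t, c = 2 * t + 1 := ⟨(c - 1) / 2, by omega⟩
  obtain ⟨s, hs⟩ := Int.even_mul_succ_self t
  have hc2 : c ^ 2 = 8 * s + 1 := by rw [ht]; linear_combination 4 * hs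
  obtain ⟨a, ha⟩ : ∃ a, P = 8 * a + 3 := ⟨P / 8, by omega⟩
  obtain ⟨b, hb⟩ : ∃ b, Q = 8 * b + 3 := ⟨Q / 8, by omega⟩
  rcases hd with hd | hd
  · left
    obtain ⟨u, hu⟩ : ∃ u, d = 8 * u + 3 := ⟨d / 8, by omega⟩
    have hW : d * (c ^ 2 - 4 * P * Q) =
        8 * (8*s*u + 3*s - 256*a*b*u - 96*a*u - 96*b*u - 35*u - 96*a*b - 36*a - 36*b - 14) + 7 := by
      rw [hc2, ha, hb, hu]; ring
    omega
  · right
    obtain ⟨u, hu⟩ : ∃ u, d = 8 * u + 7 := ⟨d / 8, by omega⟩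
    have hW : d * (c ^ 2 - 4 * P * Q) =
        8 * (8*s*u - 256*a*b*u - 96*a*u - 96*b*u - 35*u + 7*s - 224*a*b - 84*a - 84*b - 31) + 3 := by
      rw [hc2, ha, hb, hu]; ring
    omega

/-- If `d` is a squarefree integer with `d ≡ 3 (mod 4)`, then `d` is not a square in `ℚ₂` and
the equation `y² = d·x⁴ + 10(m+16n²)·x² + 9m(m+16n²)/d` has no solution over `ℚ₂`; hence the
projective curve `C_d` has no `ℚ₂`-points. -/
theorem no_Q2_points_on_Cd (m n : ℕ) (hm : 0 < m) (hn : 0 < n)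
    (hm1 : Nat.Prime m) (hm2 : Nat.Prime (m + 16 * n ^ 2)) (hm3 : Nat.Prime (m + 25 * n ^ 2))
    (hc1 : m % 24 = 11) (hc2 : (m + 16 * n ^ 2) % 24 = 11) (hc3 : (m + 25 * n ^ 2) % 24 = 11)
    (d : ℤ) (hd : Squarefree d) (hd4 : d % 4 = 3) :
    ¬ IsSquare (d : ℚ_[2]) ∧
    ¬ ∃ x y : ℚ_[2], y ^ 2 = (d : ℚ_[2]) * x ^ 4 + 10 * ((m : ℚ_[2]) + 16 * n ^ 2) * x ^ 2
      + 9 * m * ((m : ℚ_[2]) + 16 * n ^ 2) / d := by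
  have hd0 : d ≠ 0 := by omega
  have hD0 : (d : ℚ_[2]) ≠ 0 := Int.cast_ne_zero.mpr hd0
  have hd8 : d % 8 = 3 ∨ d % 8 = 7 := by omega
  have hk : ((n ^ 2 : ℕ) : ℤ) = (n : ℤ) ^ 2 := by push_cast; ring
  set M : ℤ := (m : ℤ) with hMdef
  set P : ℤ := (m : ℤ) + 16 * (n : ℤ) ^ 2 with hPdef
  set Q : ℤ := (m : ℤ) + 25 * (n : ℤ) ^ 2 with hQdef
  have hM8 : M % 8 = 3 := by omega
  have hP8 : P % 8 = 3 := by omega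
  have hQ8 : Q % 8 = 3 := by omega
  have h25 : 25 * P = 9 * M + 16 * Q := by rw [hPdef, hMdef, hQdef]; ring
  have h2 : ‖(2 : ℚ_[2])‖ = 1 / 2 := by
    have := Padic.norm_p (p := 2)
    norm_num at this
    simpa using this
  constructor
  · rintro ⟨r, hr⟩
    exact key2 3 d r 0 (by norm_num) (by push_cast; linear_combination -hr) (nsq8 d hd8)
  · rintro ⟨x, y, hxy⟩
    have hxy2 : (d : ℚ_[2]) ^ 2 * y ^ 2 = (d : ℚ_[2]) ^ 3 * x ^ 4
        + 10 * ((m : ℚ_[2]) + 16 * (n : ℚ_[2]) ^ 2) * (d : ℚ_[2]) ^ 2 * x ^ 2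
        + 9 * (m : ℚ_[2]) * ((m : ℚ_[2]) + 16 * (n : ℚ_[2]) ^ 2) * (d : ℚ_[2]) := by
      field_simp at hxy
      linear_combination (d : ℚ_[2]) * hxy
    have hPq : ((P : ℤ) : ℚ_[2]) = (m : ℚ_[2]) + 16 * (n : ℚ_[2]) ^ 2 := by
      rw [hPdef]; push_cast; ring
    rcases trich x with hxA | hxC | hxB
    · -- ‖x‖ ≤ 1/2
      set x' : ℚ_[2] := x / 2 with hx'def
      have hxeq : x = 2 * x' := by rw [hx'def]; field_simp
      have hx'n : ‖x'‖ ≤ 1 := by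
        rw [hx'def, norm_div, h2]
        rw [div_le_one (by norm_num)]
        linarith
      refine key2 3 (9 * M * P * d) ((d : ℚ_[2]) * y)
        (((2 * d ^ 3 : ℤ) : ℚ_[2]) * x' ^ 4 + ((5 * P * d ^ 2 : ℤ) : ℚ_[2]) * x' ^ 2)
        (nadd _ _ (nle _ _ (Padic.norm_int_le_one _) (npow _ 4 hx'n))
          (nle _ _ (Padic.norm_int_le_one _) (npow _ 2 hx'n))) ?_
        (nsq8 _ (by rw [l1 M P d hM8 hP8]; exact hd8))
      push_cast
      rw [hPq, hMdef]; push_cast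
      linear_combination hxy2 + ((x + 2*x') * ((d:ℚ_[2])^3*(x^2 + 4*x'^2)
        + 10*((m : ℚ_[2]) + 16 * (n : ℚ_[2]) ^ 2)*(d:ℚ_[2])^2)) * hxeq
    · -- ‖x‖ = 1
      obtain ⟨e, he1, hx2⟩ := unit_sq x hxC
      obtain ⟨c, hcc⟩ : ∃ c, d + 5 * P = 2 * c := ⟨(d + 5 * P) / 2, by omega⟩
      have hcq : (d : ℚ_[2]) + 5 * ((m : ℚ_[2]) + 16 * (n : ℚ_[2]) ^ 2) = 2 * (c : ℚ_[2]) := by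
        have := congrArg (fun z : ℤ => (z : ℚ_[2])) hcc
        push_cast at this
        rw [hPq] at this
        linear_combination this
      refine key2 5 (d ^ 3 + 10 * P * d ^ 2 + 9 * M * P * d) ((d : ℚ_[2]) * y)
        (((d ^ 2 * c : ℤ) : ℚ_[2]) * e + ((2 * d ^ 3 : ℤ) : ℚ_[2]) * e ^ 2)
        (nadd _ _ (nle _ _ (Padic.norm_int_le_one _) he1)
          (nle _ _ (Padic.norm_int_le_one _) (npow _ 2 he1))) ?_
        (nsq32 _ (l3 M P Q d c hM8 hP8 hQ8 h25 hcc hd8))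
      push_cast
      rw [hPq, hMdef]; push_cast
      linear_combination hxy2 + ((d:ℚ_[2])^3*(x^2 + 1 + 8*e)
        + 10*((m : ℚ_[2]) + 16 * (n : ℚ_[2]) ^ 2)*(d:ℚ_[2])^2) * hx2
        + 16*(d:ℚ_[2])^2*e*hcq
    · -- 2 ≤ ‖x‖
      have hx0 : x ≠ 0 := by
        intro h; rw [h, norm_zero] at hxB; linarith
      set z : ℚ_[2] := (2 * x)⁻¹ with hzdef
      have hzx : 2 * x * z = 1 := by
        rw [hzdef]; field_simp
      have hzn : ‖z‖ ≤ 1 := by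
        rw [hzdef, norm_inv, norm_mul, h2]
        have hpos : (0:ℝ) < 1 / 2 * ‖x‖ := by
          have := norm_pos_iff.mpr hx0
          linarith
        rw [inv_le_one₀ hpos]
        linarith
      refine key2 3 (d ^ 3) ((d : ℚ_[2]) * y * (4 * z ^ 2))
        (((5 * P * d ^ 2 : ℤ) : ℚ_[2]) * z ^ 2 + ((18 * M * P * d : ℤ) : ℚ_[2]) * z ^ 4)
        (nadd _ _ (nle _ _ (Padic.norm_int_le_one _) (npow _ 2 hzn))
          (nle _ _ (Padic.norm_int_le_one _) (npow _ 4 hzn))) ?_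
        (nsq8 _ (by rw [l2 d hd8]; exact hd8))
      push_cast
      rw [hPq, hMdef]; push_cast
      linear_combination 16*z^4*hxy2 + ((d:ℚ_[2])^3*((2*x*z)^3 + (2*x*z)^2 + 2*x*z + 1)
        + 40*((m : ℚ_[2]) + 16 * (n : ℚ_[2]) ^ 2)*(d:ℚ_[2])^2*z^2*(2*x*z + 1)) * hzx
end

section
/- Let p = m + 25n² and let d be a squarefree integer that is not a quadratic residue modulo p (in particular p ∤ d). Then d is not a square in ℚ_p and there do not exist x, y ∈ ℚ_p satisfying y² = d·x⁴ + 10(m+16n²)·x² + 9m(m+16n²)/d. -/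
/-- Let `p = m + 25n²` and let `d` be a squarefree integer that is not a quadratic residue
modulo `p`. Then `d` is not a square in `ℚ_p` and the equation
`y² = d·x⁴ + 10(m+16n²)·x² + 9m(m+16n²)/d` has no solution over `ℚ_p`. -/
theorem no_Qp_points_on_Cd_at_m_add_25n2 (m n : ℕ) (hm : 0 < m) (hn : 0 < n)
    (hm1 : Nat.Prime m) (hm2 : Nat.Prime (m + 16 * n ^ 2)) (hm3 : Nat.Prime (m + 25 * n ^ 2))
    (hc1 : m % 24 = 11) (hc2 : (m + 16 * n ^ 2) % 24 = 11) (hc3 : (m + 25 * n ^ 2) % 24 = 11)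
    [Fact (Nat.Prime (m + 25 * n ^ 2))]
    (d : ℤ) (hd : Squarefree d) (hqr : ¬ IsSquare (d : ZMod (m + 25 * n ^ 2))) :
    ¬ IsSquare (d : ℚ_[m + 25 * n ^ 2]) ∧
    ¬ ∃ x y : ℚ_[m + 25 * n ^ 2],
      y ^ 2 = (d : ℚ_[m + 25 * n ^ 2]) * x ^ 4
        + 10 * ((m : ℚ_[m + 25 * n ^ 2]) + 16 * (n : ℚ_[m + 25 * n ^ 2]) ^ 2) * x ^ 2
        + 9 * (m : ℚ_[m + 25 * n ^ 2])
          * ((m : ℚ_[m + 25 * n ^ 2]) + 16 * (n : ℚ_[m + 25 * n ^ 2]) ^ 2)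
          / (d : ℚ_[m + 25 * n ^ 2]) := by
  set p := m + 25 * n ^ 2 with hp
  have hdz : d ≠ 0 := hd.ne_zero
  have hdzm : (d : ZMod p) ≠ 0 := fun h => hqr ⟨0, by rw [h, mul_zero]⟩
  have hpd : ¬ (p : ℤ) ∣ d := fun h => hdzm ((ZMod.intCast_zmod_eq_zero_iff_dvd d p).mpr h)
  have hd0 : (d : ℚ_[p]) ≠ 0 := Int.cast_ne_zero.mpr hdz
  have hdnorm : ‖(d : ℚ_[p])‖ = 1 := by
    rcases lt_or_eq_of_le (Padic.norm_int_le_one (p := p) d) with h | h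
    · exact absurd ((Padic.norm_intCast_lt_one_iff (k := d)).mp h) hpd
    · exact h
  -- unit reduction lemma
  have hS : ∀ w : ℚ_[p], ‖w‖ = 1 → ‖w ^ 2 - (d : ℚ_[p])‖ = 1 := by
    intro w hw
    set W : ℤ_[p] := ⟨w, hw.le⟩ with hW
    have hcoe : ((W ^ 2 - (d : ℤ_[p]) : ℤ_[p]) : ℚ_[p]) = w ^ 2 - (d : ℚ_[p]) := by
      push_cast
      rfl
    rw [← hcoe, PadicInt.padic_norm_e_of_padicInt]
    refine le_antisymm (PadicInt.norm_le_one _) ?_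
    by_contra hlt
    push_neg at hlt
    have hmem : W ^ 2 - (d : ℤ_[p]) ∈ IsLocalRing.maximalIdeal ℤ_[p] := by
      rw [IsLocalRing.mem_maximalIdeal, PadicInt.mem_nonunits]
      exact hlt
    have hker : PadicInt.toZMod (W ^ 2 - (d : ℤ_[p])) = 0 := by
      rw [← RingHom.mem_ker, PadicInt.ker_toZMod]
      exact hmem
    rw [map_sub, map_pow, map_intCast, sub_eq_zero] at hker
    exact hqr ⟨PadicInt.toZMod W, by rw [← hker]; ring⟩
  -- part 1
  have part1 : ¬ IsSquare (d : ℚ_[p]) := by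
    rintro ⟨r, hr⟩
    have hrn : ‖r‖ = 1 := by
      have h1 : ‖r‖ * ‖r‖ = 1 := by rw [← norm_mul, ← hr, hdnorm]
      nlinarith [norm_nonneg r]
    have := hS r hrn
    rw [sq, ← hr, sub_self, norm_zero] at this
    exact one_ne_zero this.symm
  refine ⟨part1, ?_⟩
  -- parity lemma
  have hppos : (0 : ℝ) < (p : ℝ) := by exact_mod_cast hm3.pos
  have hp1 : (p : ℝ) ≠ 1 := by exact_mod_cast hm3.one_lt.ne'
  have hT : ∀ z : ℚ_[p], ‖z‖ ^ 2 ≠ ((p : ℝ))⁻¹ := by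
    intro z hz
    rcases eq_or_ne z 0 with rfl | h0
    · rw [norm_zero] at hz
      simp at hz
      exact hppos.ne' hz.symm
    · rw [Padic.norm_eq_zpow_neg_valuation h0] at hz
      have hz' : (p : ℝ) ^ (-z.valuation * 2) = (p : ℝ) ^ (-1 : ℤ) := by
        rw [zpow_neg_one, ← hz, ← zpow_natCast _ 2, ← zpow_mul]
        norm_num
      have := zpow_right_injective₀ hppos hp1 hz'
      omega
  rintro ⟨x, y, heq⟩
  set B : ℚ_[p] := (m : ℚ_[p]) + 16 * (n : ℚ_[p]) ^ 2 with hB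
  have key : ((d : ℚ_[p]) * x ^ 2 + 5 * B) ^ 2 - (d : ℚ_[p]) * y ^ 2
      = 16 * B * ((m : ℚ_[p]) + 25 * (n : ℚ_[p]) ^ 2) := by
    field_simp at heq
    rw [hB]
    linear_combination -heq
  set u : ℚ_[p] := (d : ℚ_[p]) * x ^ 2 + 5 * B with hu
  -- norms of the pieces
  have hpbn : ¬ (p : ℤ) ∣ ((m + 16 * n ^ 2 : ℕ) : ℤ) := by
    rw [Int.natCast_dvd_natCast]
    intro h
    have heqp := (Nat.prime_dvd_prime_iff_eq hm3 hm2).mp h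
    have h9 : 25 * n ^ 2 = 16 * n ^ 2 := by omega
    nlinarith [pow_pos hn 2]
  have hBnorm : ‖B‖ = 1 := by
    have hBc : B = (((m + 16 * n ^ 2 : ℕ) : ℤ) : ℚ_[p]) := by rw [hB]; push_cast; ring
    rw [hBc]
    rcases lt_or_eq_of_le (Padic.norm_int_le_one (p := p) _) with h | h
    · exact absurd ((Padic.norm_intCast_lt_one_iff).mp h) hpbn
    · exact h
  have h16n : ‖(16 : ℚ_[p])‖ = 1 := by
    have h16c : (16 : ℚ_[p]) = ((16 : ℤ) : ℚ_[p]) := by norm_cast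
    rw [h16c]
    rcases lt_or_eq_of_le (Padic.norm_int_le_one (p := p) 16) with h | h
    · exfalso
      have h' : p ∣ 16 := by exact_mod_cast (Padic.norm_intCast_lt_one_iff (k := (16:ℤ))).mp h
      have h2 : p ∣ 2 ^ 4 := by norm_num; exact h'
      have h3 := hm3.dvd_of_dvd_pow h2
      have h4 := (Nat.prime_dvd_prime_iff_eq hm3 Nat.prime_two).mp h3
      omega
    · exact h
  have hPc : ((m : ℚ_[p]) + 25 * (n : ℚ_[p]) ^ 2) = ((m + 25 * n ^ 2 : ℕ) : ℚ_[p]) := by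
    push_cast; ring
  have hnp : ‖((m + 25 * n ^ 2 : ℕ) : ℚ_[p])‖ = (p : ℝ)⁻¹ := Padic.norm_p
  have hRn : ‖u ^ 2 - (d : ℚ_[p]) * y ^ 2‖ = (p : ℝ)⁻¹ := by
    rw [key, hPc, norm_mul, norm_mul, h16n, hBnorm, hnp, one_mul, one_mul]
  rcases eq_or_ne ‖u‖ ‖y‖ with h | h
  · rcases eq_or_ne y 0 with rfl | hy0
    · have hu0 : u = 0 := norm_eq_zero.mp (by rw [h, norm_zero])
      rw [hu0] at hRn
      simp at hRn
      exact absurd hRn.symm (by positivity)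
    · have hyn : ‖y‖ ≠ 0 := norm_ne_zero_iff.mpr hy0
      have hw : ‖u / y‖ = 1 := by rw [norm_div, h, div_self hyn]
      have hfac : u ^ 2 - (d : ℚ_[p]) * y ^ 2 = y ^ 2 * ((u / y) ^ 2 - (d : ℚ_[p])) := by
        field_simp
      rw [hfac, norm_mul, norm_pow, hS _ hw, mul_one] at hRn
      exact hT y hRn
  · have h2 : ‖u ^ 2‖ ≠ ‖-((d : ℚ_[p]) * y ^ 2)‖ := by
      rw [norm_neg, norm_pow, norm_mul, hdnorm, one_mul, norm_pow]
      intro hc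
      exact h (by rw [← Real.sqrt_sq (norm_nonneg u), hc, Real.sqrt_sq (norm_nonneg y)])
    have hmax := Padic.add_eq_max_of_ne h2
    rw [← sub_eq_add_neg] at hmax
    rw [hmax] at hRn
    rcases max_cases ‖u ^ 2‖ ‖-((d : ℚ_[p]) * y ^ 2)‖ with ⟨hc, _⟩ | ⟨hc, _⟩
    · rw [hc, norm_pow] at hRn
      exact hT u hRn
    · rw [hc, norm_neg, norm_mul, hdnorm, one_mul, norm_pow] at hRn
      exact hT y hRn
end
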